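/- arXiv:math/0404009 — 12 statements merged into one kernel-verified Lean document; each statement's English description precedes it below -/
import Mathlib

section
/- Let A be a (not necessarily associative or unital) algebra over a field F possessing a left identity e such that the underlying vector space of A decomposes as a direct sum A = ⟨e⟩ ⊕ A_1 ⊕ ⋯ ⊕ A_r, where each A_i is the eigenspace of the right-multiplication operator R_e : x ↦ xe with a nonzero eigenvalue α_i. Then every automorphism σ of A satisfies σ(e) = e and σ(A_i) = A_i for all i = 1, …, r. -/
/-- **Lemma 1(ii)** (Gordeev–Popov): let `A` be a (not necessarily associative or unital)
algebra over a field `F`, given by a bilinear multiplication `m`, possessing a left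
identity `e` such that the underlying vector space of `A` is the internal direct sum of
the line `⟨e⟩` and submodules `A_1, …, A_r`, where each `A_i` is the (nonzero) eigenspace
of the right-multiplication operator `R_e : x ↦ x·e` with nonzero eigenvalue `α_i`.
Then every automorphism `σ` of `A` satisfies `σ e = e` and `σ (A_i) = A_i` for all `i`. -/
theorem stmt1 {F A : Type*} [Field F] [AddCommGroup A] [Module F A]
    (m : A →ₗ[F] A →ₗ[F] A) (e : A)
    (hleft : ∀ x : A, m e x = x)
    (r : ℕ) (α : Fin r → F) (hα : ∀ i, α i ≠ 0)
    (S : Fin (r + 1) → Submodule F A)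
    (hS0 : S 0 = Submodule.span F {e})
    (hSi : ∀ i : Fin r, S i.succ = Module.End.eigenspace (m.flip e) (α i))
    (hSne : ∀ i : Fin r, S i.succ ≠ ⊥)
    (hinternal : DirectSum.IsInternal S) :
    ∀ σ : A ≃ₗ[F] A, (∀ x y : A, σ (m x y) = m (σ x) (σ y)) →
      σ e = e ∧ ∀ i : Fin r, Submodule.map (σ : A →ₗ[F] A) (S i.succ) = S i.succ := by
  intro σ hσ
  set f : Module.End F A := m.flip e with hf
  have hfx : ∀ x : A, f x = m x e := fun x => rfl
  have hee : f e = e := hleft e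
  -- σ e is a left identity
  have hle : ∀ x : A, m (σ e) x = x := by
    intro x
    have h := hσ e (σ.symm x)
    rw [hleft, σ.apply_symm_apply] at h
    exact h.symm
  have hσef : f (σ e) = e := hle e
  -- the kernel of f is trivial
  have hker : LinearMap.ker f = ⊥ := by
    have hind := Module.End.eigenspaces_iSupIndep f
    have hdisj : Disjoint (Module.End.eigenspace f 0) (⨆ μ ≠ (0 : F), Module.End.eigenspace f μ) :=
      hind 0
    have htop : (⊤ : Submodule F A) ≤ ⨆ μ ≠ (0 : F), Module.End.eigenspace f μ := by
      rw [← hinternal.submodule_iSup_eq_top]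
      apply iSup_le
      intro i
      induction i using Fin.cases with
      | zero =>
        have hEe : S 0 ≤ Module.End.eigenspace f 1 := by
          rw [hS0, Submodule.span_le]
          intro x hx
          rcases hx with rfl
          simp [Module.End.mem_eigenspace_iff, hee]
        exact hEe.trans (le_iSup₂ (f := fun μ _ => Module.End.eigenspace f μ) (1 : F)
          (one_ne_zero : (1 : F) ≠ 0))
      | succ i =>
        rw [hSi i]
        exact le_iSup₂ (f := fun μ _ => Module.End.eigenspace f μ) (α i) (hα i)
    have : Module.End.eigenspace f 0 = ⊥ :=
      disjoint_top.mp (hdisj.mono_right htop)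
    rwa [Module.End.eigenspace_zero] at this
  have hinj : Function.Injective f := LinearMap.ker_eq_bot.mp hker
  have hσe : σ e = e := hinj (by rw [hσef, hee])
  refine ⟨hσe, ?_⟩
  -- σ commutes with f
  have hcomm : ∀ x : A, f (σ x) = σ (f x) := by
    intro x
    rw [hfx, hfx, hσ x e, hσe]
  intro i
  rw [hSi i]
  apply le_antisymm
  · rintro _ ⟨x, hx, rfl⟩
    simp only [SetLike.mem_coe] at hx ⊢
    rw [Module.End.mem_eigenspace_iff] at hx ⊢
    show f (σ x) = α i • σ x
    rw [hcomm, hx, map_smul]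
  · intro x hx
    rw [Module.End.mem_eigenspace_iff] at hx
    refine ⟨σ.symm x, ?_, σ.apply_symm_apply x⟩
    simp only [SetLike.mem_coe]
    rw [Module.End.mem_eigenspace_iff]
    apply σ.injective
    rw [← hcomm, σ.apply_symm_apply, hx, map_smul, σ.apply_symm_apply]
end

section
/- Let F be a field and L a nonzero finite-dimensional F-vector space with |F| ≥ dim L + 1 (for instance, F infinite). Then there exists a bilinear multiplication on L making it an F-algebra such that for every field extension E/F, the only automorphism of the algebra L_E = L ⊗_F E is the identity. -/
open scoped TensorProduct

/-!
Choose a basis `e_i` with a distinguished index `i₀` and distinct nonzero scalars `c_i` with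
`c_{i₀} = 1` (this is where `|F| ≥ dim L + 1` enters), and set `e_i e_{i₀} = e_i`,
`e_{i₀} e_j = c_j e_j`, `e_j e_j = e_{i₀} + e_j` for `j ≠ i₀`, all other products of basis
vectors being `0`. These relations survive base change. An automorphism `σ` satisfies
`e_{i₀} σ(e_{i₀}) = σ(σ⁻¹(e_{i₀}) e_{i₀}) = e_{i₀} = e_{i₀} e_{i₀}`, and left multiplication by
`e_{i₀}` is diagonal with nonzero eigenvalues, hence injective: `σ` fixes `e_{i₀}`. So `σ`
commutes with that diagonal map, whose eigenvalues `c_j` are distinct, giving `σ e_j = t_j e_j`;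
then `σ(e_j e_j) = σ(e_j)²` forces `t_j² = 1` and `t_j = t_j²`.
-/

open Cardinal in
theorem exists_injective_ne_zero_eq_one {ι K : Type*} [Fintype ι] [Field K]
    (hK : (Fintype.card ι : Cardinal) + 1 ≤ #K) (i₀ : ι) :
    ∃ c : ι → K, Function.Injective c ∧ (∀ i, c i ≠ 0) ∧ c i₀ = 1 := by
  obtain ⟨g⟩ : Nonempty (Option ι ↪ K) := by
    rw [← lift_mk_le', mk_option, mk_fintype]
    simpa using hK
  -- an affine change of variable sends `g none` to `0` and `g (some i₀)` to `1`
  have hg : ∀ i, g (some i) - g none ≠ 0 := fun i =>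
    sub_ne_zero.mpr (g.injective.ne (Option.some_ne_none i))
  refine ⟨fun i => (g (some i) - g none) / (g (some i₀) - g none), fun i j hij => ?_,
    fun i => div_ne_zero (hg i) (hg i₀), div_self (hg i₀)⟩
  simpa using (div_left_inj' (hg i₀)).mp hij

namespace Module.Basis

section Diagonal

variable {ι R V : Type*} [CommRing R] [AddCommGroup V] [Module R V]
  {b : Basis ι R V} {c : ι → R} {D : V →ₗ[R] V}

theorem repr_apply_eq_mul_of_apply_eq_smul (hD : ∀ j, D (b j) = c j • b j) (u : V) (i : ι) :
    b.repr (D u) i = c i * b.repr u i := by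
  have h : (b.coord i).comp D = c i • b.coord i := b.ext fun j => by
    rcases eq_or_ne j i with rfl | hji
    · simp [hD]
    · simp [hD, Finsupp.single_eq_of_ne' hji]
  simpa using LinearMap.congr_fun h u

theorem injective_of_apply_eq_smul [NoZeroDivisors R] (hD : ∀ j, D (b j) = c j • b j)
    (hc : ∀ i, c i ≠ 0) : Function.Injective D := fun u v huv =>
  b.ext_elem fun i => by
    have h := congrArg (b.repr · i) huv
    simp only [repr_apply_eq_mul_of_apply_eq_smul hD] at h
    exact mul_left_cancel₀ (hc i) h

theorem apply_eq_smul_of_commute [NoZeroDivisors R] (hD : ∀ j, D (b j) = c j • b j)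
    (hc : Function.Injective c) {σ : V →ₗ[R] V} (hσD : Commute σ D) (j : ι) :
    σ (b j) = b.repr (σ (b j)) j • b j := by
  refine b.ext_elem fun i => ?_
  rcases eq_or_ne i j with rfl | hij
  · simp
  have h := congrArg (b.repr · i) (LinearMap.congr_fun hσD.eq (b j))
  simp only [Module.End.mul_apply, hD, map_smul, Finsupp.smul_apply, smul_eq_mul,
    repr_apply_eq_mul_of_apply_eq_smul hD] at h
  have h' : (c j - c i) * b.repr (σ (b j)) i = 0 := by linear_combination h
  simpa [Finsupp.single_eq_of_ne hij, sub_eq_zero, hc.ne hij.symm] using h'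

end Diagonal

noncomputable section Rigid

variable {ι R V : Type*} [DecidableEq ι] [CommRing R] [AddCommGroup V] [Module R V]

def rigidMulTable (b : Basis ι R V) (c : ι → R) (i₀ i j : ι) : V :=
  if j = i₀ then b i else if i = i₀ then c j • b j else if i = j then b i₀ + b i else 0

def rigidMul (b : Basis ι R V) (c : ι → R) (i₀ : ι) : V →ₗ[R] V →ₗ[R] V :=
  b.constr R fun i => b.constr R fun j => b.rigidMulTable c i₀ i j

theorem rigidMul_apply_basis (b : Basis ι R V) (c : ι → R) (i₀ i j : ι) :
    b.rigidMul c i₀ (b i) (b j) = b.rigidMulTable c i₀ i j := by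
  simp [rigidMul, constr_basis]

theorem baseChange_rigidMulTable (E : Type*) [CommRing E] [Algebra R E] (b : Basis ι R V)
    (c : ι → R) (i₀ i j : ι) :
    (1 : E) ⊗ₜ[R] b.rigidMulTable c i₀ i j
      = (b.baseChange E).rigidMulTable (algebraMap R E ∘ c) i₀ i j := by
  unfold rigidMulTable
  split_ifs <;> simp [TensorProduct.tmul_add]

variable [NoZeroDivisors R] {b : Basis ι R V} {c : ι → R} {i₀ : ι}

theorem eq_refl_of_map_mul_of_rigidMulTable (hc : Function.Injective c) (hc0 : ∀ i, c i ≠ 0) (hc1 : c i₀ = 1)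
    {mul : V →ₗ[R] V →ₗ[R] V} (hmul : ∀ i j, mul (b i) (b j) = b.rigidMulTable c i₀ i j)
    {σ : V ≃ₗ[R] V} (hσ : ∀ u v, σ (mul u v) = mul (σ u) (σ v)) :
    σ = LinearEquiv.refl R V := by
  set D := mul (b i₀)
  have hD : ∀ j, D (b j) = c j • b j := fun j => by
    by_cases hj : j = i₀
    · subst hj; simp [D, hmul, rigidMulTable, hc1]
    · simp [D, hmul, rigidMulTable, hj]
  have right_unit : ∀ u, mul u (b i₀) = u := fun u => by
    have h : mul.flip (b i₀) = LinearMap.id := b.ext fun i => by simp [hmul, rigidMulTable]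
    simpa using LinearMap.congr_fun h u
  have hσ₀ : σ (b i₀) = b i₀ := by
    apply injective_of_apply_eq_smul hD hc0
    have h := hσ (σ.symm (b i₀)) (b i₀)
    rw [right_unit, σ.apply_symm_apply] at h
    rw [← h, hD, hc1, one_smul]
  have hσD : Commute (σ : V →ₗ[R] V) D := LinearMap.ext fun u => by
    simpa [hσ₀] using hσ (b i₀) u
  have hdiag : ∀ j, σ (b j) = b.repr (σ (b j)) j • b j := fun j => by
    simpa using apply_eq_smul_of_commute hD hc hσD j
  refine LinearEquiv.toLinearMap_injective (b.ext fun j => ?_)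
  by_cases hj : j = i₀
  · subst hj; simpa using hσ₀
  obtain ⟨t, hσj⟩ : ∃ t, σ (b j) = t • b j := ⟨_, hdiag j⟩
  have h := hσ (b j) (b j)
  have hsq : mul (b j) (b j) = b i₀ + b j := by simp [hmul, rigidMulTable, hj]
  rw [hsq, map_add, hσ₀, hσj, LinearMap.map_smul₂, map_smul, hsq, smul_smul] at h
  have h₀ : 1 = t * t := by
    simpa [Finsupp.single_eq_of_ne' hj] using congrArg (b.repr · i₀) h
  have hⱼ : t = t * t := by
    simpa [Finsupp.single_eq_of_ne hj] using congrArg (b.repr · j) h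
  have ht : t = 1 := by rw [hⱼ, h₀]
  simp [hσj, ht]

end Rigid

end Module.Basis

/-- **Lemma 2** (Gordeev–Popov): if `L` is a nonzero finite-dimensional vector space over a
field `F` with `|F| ≥ dim L + 1` (e.g. `F` infinite), then there is a bilinear
multiplication `m` on `L` such that for every field extension `E/F` the algebra
`L_E = L ⊗_F E` (with the `E`-bilinear extension `mE` of `m`) has only the identity
automorphism. -/
theorem stmt2 {F L : Type*} [Field F] [AddCommGroup L] [Module F L]
    [FiniteDimensional F L] (hL : Nontrivial L)
    (hF : (Module.finrank F L : Cardinal) + 1 ≤ Cardinal.mk F) :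
    ∃ m : L →ₗ[F] L →ₗ[F] L,
      ∀ (E : Type*) [Field E] [Algebra F E]
        (mE : E ⊗[F] L →ₗ[E] E ⊗[F] L →ₗ[E] E ⊗[F] L),
        (∀ (a b : E) (x y : L),
            mE (a ⊗ₜ[F] x) (b ⊗ₜ[F] y) = (a * b) ⊗ₜ[F] m x y) →
        ∀ σ : E ⊗[F] L ≃ₗ[E] E ⊗[F] L,
          (∀ u v : E ⊗[F] L, σ (mE u v) = mE (σ u) (σ v)) →
          σ = LinearEquiv.refl E (E ⊗[F] L) := by
  classical
  let b := Module.Free.chooseBasis F L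
  obtain ⟨i₀⟩ := b.index_nonempty
  rw [Module.finrank_eq_card_chooseBasisIndex] at hF
  obtain ⟨c, hc, hc0, hc1⟩ := exists_injective_ne_zero_eq_one hF i₀
  refine ⟨b.rigidMul c i₀, fun E _ _ mE hmE σ hσ => ?_⟩
  refine (b.baseChange E).eq_refl_of_map_mul_of_rigidMulTable (i₀ := i₀) ((algebraMap F E).injective.comp hc)
    (fun i => (map_ne_zero _).mpr (hc0 i)) (by simp [hc1]) (fun i j => ?_) hσ
  rw [Module.Basis.baseChange_apply, Module.Basis.baseChange_apply, hmE, one_mul,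
    Module.Basis.rigidMul_apply_basis, Module.Basis.baseChange_rigidMulTable]
end

section
/- With A(V,S) the quotient of the nonunital tensor algebra T(V)_+ by the ideal I(S) as in the context, the set of algebra automorphisms of A(V,S) that map the degree-1 subspace V onto itself equals GL(V)_S = {g ∈ GL(V) : g^{⊗r}(S) = S} (acting on A(V,S) via the induced action on T(V)_+). That is, {σ ∈ Aut(A(V,S)) : σ(V) = V} = GL(V)_S. -/
/-!
An automorphism `σ` of `A(V,S)` preserving `V = ι 1 (V^{⊗1})` restricts to some `g ∈ GL(V)`.
Since `V^{⊗(n+1)}` is spanned by products of `V^{⊗n}` and `V`, multiplicativity propagates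
`σ = g^{⊗i}` from degree one to every degree `i ≤ r`; in degree `r`, injectivity of `σ` and
`ker ι_r = S` give `g^{⊗r}(S) = S`. Conversely, `g^{⊗•}` respects the tensor multiplication, so
the map it induces is multiplicative on the spanning pieces `ι i (V^{⊗i})`, hence everywhere.
-/

open scoped TensorProduct

open PiTensorProduct

namespace TensorPower

variable {R M : Type*} [CommSemiring R] [AddCommMonoid M] [Module R M]

theorem map_gMul (g : M →ₗ[R] M) {i j : ℕ} (a : ⨂[R]^i M) (b : ⨂[R]^j M) :
    map (fun _ ↦ g) (GradedMonoid.GMul.mul (A := fun n ↦ ⨂[R]^n M) a b) =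
      GradedMonoid.GMul.mul (A := fun n ↦ ⨂[R]^n M) (map (fun _ ↦ g) a) (map (fun _ ↦ g) b) := by
  simp only [gMul_eq_coe_linearMap]
  induction a using PiTensorProduct.induction_on with
  | add x y hx hy => simp only [map_add, LinearMap.add_apply, hx, hy]
  | smul_tprod c u =>
    induction b using PiTensorProduct.induction_on with
    | add x y hx hy => simp only [map_add, hx, hy]
    | smul_tprod d w =>
      simp only [map_smul, LinearMap.smul_apply, ← gMul_eq_coe_linearMap, tprod_mul_tprod, map_tprod]
      congr 3
      funext k
      refine Fin.addCases (fun p ↦ ?_) (fun p ↦ ?_) k <;> simp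

theorem exists_apply_eq_map_of_one (G : ⨂[R]^1 M ≃ₗ[R] ⨂[R]^1 M) :
    ∃ g : M ≃ₗ[R] M, ∀ x, G x = map (fun _ ↦ (g : M →ₗ[R] M)) x := by
  let e : ⨂[R]^1 M ≃ₗ[R] M := subsingletonEquiv 0
  refine ⟨e.symm ≪≫ₗ G ≪≫ₗ e, LinearMap.congr_fun <| show G.toLinearMap = _ from
    PiTensorProduct.ext <| MultilinearMap.ext fun v ↦ ?_⟩
  have hv : tprod R v = e.symm (v 0) := by
    rw [subsingletonEquiv_symm_apply']; congr; funext i; rw [Subsingleton.elim i 0]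
  apply e.injective
  simp only [LinearMap.compMultilinearMap_apply, LinearEquiv.coe_coe, map_tprod, e,
    subsingletonEquiv_apply_tprod]
  rw [hv]
  rfl

end TensorPower

namespace LinearMap

variable {R M N : Type*} [Semiring R] [AddCommMonoid M] [Module R M] [AddCommMonoid N] [Module R N]

theorem ext_of_iSup_eq_top {ι : Type*} {p : ι → Submodule R M} (hp : ⨆ i, p i = ⊤)
    {f g : M →ₗ[R] N} (h : ∀ i, ∀ x ∈ p i, f x = g x) : f = g :=
  ext fun _ ↦ (iSup_le fun i ↦ h i : ⨆ i, p i ≤ eqLocus f g) (hp ▸ Submodule.mem_top)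

theorem exists_linearEquiv_apply_eq_of_map_range_eq {f : M →ₗ[R] N} (hf : Function.Injective f)
    {σ : N ≃ₗ[R] N} (h : (range f).map σ.toLinearMap = range f) :
    ∃ G : M ≃ₗ[R] M, ∀ x, σ (f x) = f (G x) := by
  let f' := LinearEquiv.ofInjective f hf
  exact ⟨f' ≪≫ₗ σ.submoduleMap _ ≪≫ₗ LinearEquiv.ofEq _ _ h ≪≫ₗ f'.symm, fun x ↦ by simp [f']⟩

variable {f : M →ₗ[R] N} {e : M ≃ₗ[R] M}

theorem map_range_eq_of_apply_eq {σ : N →ₗ[R] N} (h : ∀ x, σ (f x) = f (e x)) :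
    (range f).map σ = range f := by
  rw [← range_comp, show σ ∘ₗ f = f ∘ₗ e.toLinearMap from ext h,
    range_comp_of_range_eq_top _ e.range]

theorem map_ker_eq_of_apply_eq {σ : N ≃ₗ[R] N} (h : ∀ x, σ (f x) = f (e x)) :
    (ker f).map e.toLinearMap = ker f := by
  have hcomap : (ker f).comap e.toLinearMap = ker f := by
    rw [← ker_comp, ← show σ.toLinearMap ∘ₗ f = f ∘ₗ e.toLinearMap from ext h,
      LinearEquiv.ker_comp]
  calc (ker f).map e.toLinearMap = ((ker f).comap e.toLinearMap).map e.toLinearMap := by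
        rw [hcomap]
    _ = ker f := Submodule.map_comap_eq_of_surjective e.surjective _

end LinearMap

section TruncatedTensorAlgebra

open TensorPower Finset

variable {R V A : Type*} [CommSemiring R] [AddCommMonoid V] [Module R V] [AddCommMonoid A]
  [Module R A]

local infixl:70 " ₜ* " => @GradedMonoid.GMul.mul ℕ (fun i ↦ ⨂[R]^i V) _ _ _ _

def IsTruncatedTensorMul (r : ℕ) (mul : A →ₗ[R] A →ₗ[R] A) (ι : ∀ i : ℕ, ⨂[R]^i V →ₗ[R] A) :
    Prop :=
  ∀ i ∈ Icc 1 r, ∀ j ∈ Icc 1 r, ∀ (x : ⨂[R]^i V) (y : ⨂[R]^j V),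
    mul (ι i x) (ι j y) = if i + j ≤ r then ι (i + j) (x ₜ* y) else 0

variable {r : ℕ} {mul : A →ₗ[R] A →ₗ[R] A} {ι : ∀ i : ℕ, ⨂[R]^i V →ₗ[R] A}
  {σ : A →ₗ[R] A} {g : V →ₗ[R] V}

theorem IsTruncatedTensorMul.apply_ι_eq_of_map_mul (hmul : IsTruncatedTensorMul r mul ι)
    (hσ : ∀ x y, σ (mul x y) = mul (σ x) (σ y))
    (h₁ : ∀ x, σ (ι 1 x) = ι 1 (map (fun _ ↦ g) x)) :
    ∀ i ∈ Icc 1 r, ∀ x, σ (ι i x) = ι i (map (fun _ ↦ g) x) := by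
  intro i hi
  obtain ⟨h1i, hir⟩ := mem_Icc.1 hi
  induction i, h1i using Nat.le_induction with
  | base => exact h₁
  | succ n hn ih =>
    have h1r : 1 ∈ Icc 1 r := mem_Icc.2 ⟨le_rfl, by omega⟩
    have hsplit : ∀ a b, ι (n + 1) (a ₜ* b) = mul (ι n a) (ι 1 b) := fun a b ↦ by
      rw [hmul n (mem_Icc.2 ⟨hn, by omega⟩) 1 h1r, if_pos hir]
    have hcomp : σ ∘ₗ ι (n + 1) = ι (n + 1) ∘ₗ map fun _ ↦ g := by
      refine PiTensorProduct.ext <| MultilinearMap.ext fun v ↦ ?_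
      have hv : tprod R v = tprod R (Fin.init v) ₜ* tprod R fun _ : Fin 1 ↦ v (Fin.last n) := by
        rw [tprod_mul_tprod, Fin.append_right_eq_snoc, Fin.snoc_init_self]
      simp only [LinearMap.compMultilinearMap_apply, LinearMap.comp_apply]
      rw [hv, hsplit, hσ, ih (mem_Icc.2 ⟨hn, by omega⟩) (by omega), h₁, ← hsplit, map_gMul]
    exact LinearMap.congr_fun hcomp

theorem IsTruncatedTensorMul.map_mul_of_apply_ι_eq (hmul : IsTruncatedTensorMul r mul ι)
    (hspan : ⨆ i, (if i ∈ Icc 1 r then LinearMap.range (ι i) else ⊥) = ⊤)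
    (hσ : ∀ i ∈ Icc 1 r, ∀ x, σ (ι i x) = ι i (map (fun _ ↦ g) x)) :
    ∀ x y, σ (mul x y) = mul (σ x) (σ y) := by
  have hgen : ∀ i ∈ Icc 1 r, ∀ j ∈ Icc 1 r, ∀ a b,
      σ (mul (ι i a) (ι j b)) = mul (σ (ι i a)) (σ (ι j b)) := by
    intro i hi j hj a b
    rw [hσ i hi, hσ j hj, hmul i hi j hj, hmul i hi j hj]
    split_ifs with hij
    · rw [hσ (i + j) (mem_Icc.2 ⟨by grind, hij⟩), map_gMul]
    · exact map_zero σ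
  suffices mul.compr₂ σ = mul.compl₁₂ σ σ from fun x y ↦ LinearMap.congr_fun₂ this x y
  refine LinearMap.ext_of_iSup_eq_top hspan fun i x hx ↦
    LinearMap.ext_of_iSup_eq_top hspan fun j y hy ↦ ?_
  simp only [LinearMap.compr₂_apply, LinearMap.compl₁₂_apply]
  split_ifs at hx hy with hi hj
  · obtain ⟨a, rfl⟩ := hx
    obtain ⟨b, rfl⟩ := hy
    exact hgen i hi j hj a b
  all_goals simp_all [Submodule.mem_bot]

end TruncatedTensorAlgebra

theorem stmt3_general {F V A : Type*} [Field F]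
    [AddCommGroup V] [Module F V] [AddCommGroup A] [Module F A]
    (r : ℕ) (hr : 1 < r)
    (S : Submodule F (⨂[F]^r V))
    (mul : A →ₗ[F] A →ₗ[F] A)
    (ι : ∀ i : ℕ, (⨂[F]^i V) →ₗ[F] A)
    (hinj : ∀ i : ℕ, 1 ≤ i → i < r → Function.Injective (ι i))
    (hker : LinearMap.ker (ι r) = S)
    (hinternal : DirectSum.IsInternal
      (fun i : ℕ => if i ∈ Finset.Icc 1 r then LinearMap.range (ι i) else ⊥))
    (hmul : ∀ i ∈ Finset.Icc 1 r, ∀ j ∈ Finset.Icc 1 r,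
      ∀ (x : ⨂[F]^i V) (y : ⨂[F]^j V),
        mul (ι i x) (ι j y) =
          if i + j ≤ r then
            ι (i + j) (GradedMonoid.GMul.mul (A := fun n => ⨂[F]^n V) x y)
          else 0) :
    {σ : A ≃ₗ[F] A |
        (∀ x y : A, σ (mul x y) = mul (σ x) (σ y)) ∧
        Submodule.map σ.toLinearMap (LinearMap.range (ι 1)) = LinearMap.range (ι 1)} =
    {σ : A ≃ₗ[F] A |
        ∃ g : V ≃ₗ[F] V,
          Submodule.map (PiTensorProduct.map fun _ : Fin r => (g : V →ₗ[F] V)) S = S ∧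
          ∀ i ∈ Finset.Icc 1 r, ∀ x : ⨂[F]^i V,
            σ (ι i x) = ι i (PiTensorProduct.map (fun _ : Fin i => (g : V →ₗ[F] V)) x)} := by
  have h1r : 1 ∈ Finset.Icc 1 r := Finset.mem_Icc.2 ⟨le_rfl, hr.le⟩
  ext σ
  constructor
  · rintro ⟨hσmul, hV⟩
    obtain ⟨G, hG⟩ := LinearMap.exists_linearEquiv_apply_eq_of_map_range_eq (hinj 1 le_rfl hr) hV
    obtain ⟨g, hg⟩ := TensorPower.exists_apply_eq_map_of_one G
    have hσι := IsTruncatedTensorMul.apply_ι_eq_of_map_mul (σ := σ.toLinearMap) hmul hσmul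
      fun x ↦ (hG x).trans (congrArg _ (hg x))
    refine ⟨g, ?_, hσι⟩
    subst hker
    exact LinearMap.map_ker_eq_of_apply_eq (e := PiTensorProduct.congr fun _ ↦ g) (σ := σ)
      (hσι r (Finset.mem_Icc.2 ⟨hr.le, le_rfl⟩))
  · rintro ⟨g, -, hσ⟩
    exact ⟨IsTruncatedTensorMul.map_mul_of_apply_ι_eq hmul hinternal.submodule_iSup_eq_top hσ,
      LinearMap.map_range_eq_of_apply_eq (e := PiTensorProduct.congr fun _ ↦ g) (hσ 1 h1r)⟩

/-- **Proposition 1** (tensor case, Gordeev–Popov): let `F` be a field, `V` a nonzero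
finite-dimensional `F`-vector space, `r > 1` and `S ⊆ V^{⊗r}` a linear subspace.  Let
`A = A(V,S) = T(V)_+/I(S)` where `I(S) = S ⊕ (⊕_{i>r} V^{⊗i})`; concretely, `A` is the
algebra whose underlying space is the direct sum of the images of the maps
`ι i : V^{⊗i} → A` for `1 ≤ i ≤ r` (injective for `i < r`, with kernel `S` for `i = r`),
multiplication being induced from the tensor product (and vanishing above degree `r`).
Then the automorphisms of `A` mapping the degree-one subspace `V = ι 1 (V^{⊗1})` onto
itself are exactly those induced by elements of
`GL(V)_S = {g ∈ GL(V) : g^{⊗r}(S) = S}` acting by `g^{⊗i}` on each graded piece. -/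
theorem stmt3 {F V A : Type*} [Field F]
    [AddCommGroup V] [Module F V] [FiniteDimensional F V] [Nontrivial V]
    [AddCommGroup A] [Module F A]
    (r : ℕ) (hr : 1 < r)
    (S : Submodule F (⨂[F]^r V))
    (mul : A →ₗ[F] A →ₗ[F] A)
    (ι : ∀ i : ℕ, (⨂[F]^i V) →ₗ[F] A)
    (hinj : ∀ i : ℕ, 1 ≤ i → i < r → Function.Injective (ι i))
    (hker : LinearMap.ker (ι r) = S)
    (hinternal : DirectSum.IsInternal
      (fun i : ℕ => if i ∈ Finset.Icc 1 r then LinearMap.range (ι i) else ⊥))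
    (hmul : ∀ i ∈ Finset.Icc 1 r, ∀ j ∈ Finset.Icc 1 r,
      ∀ (x : ⨂[F]^i V) (y : ⨂[F]^j V),
        mul (ι i x) (ι j y) =
          if i + j ≤ r then
            ι (i + j) (GradedMonoid.GMul.mul (A := fun n => ⨂[F]^n V) x y)
          else 0) :
    {σ : A ≃ₗ[F] A |
        (∀ x y : A, σ (mul x y) = mul (σ x) (σ y)) ∧
        Submodule.map σ.toLinearMap (LinearMap.range (ι 1)) = LinearMap.range (ι 1)} =
    {σ : A ≃ₗ[F] A |
        ∃ g : V ≃ₗ[F] V,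
          Submodule.map (PiTensorProduct.map fun _ : Fin r => (g : V →ₗ[F] V)) S = S ∧
          ∀ i ∈ Finset.Icc 1 r, ∀ x : ⨂[F]^i V,
            σ (ι i x) = ι i (PiTensorProduct.map (fun _ : Fin i => (g : V →ₗ[F] V)) x)} :=
  stmt3_general r hr S mul ι hinj hker hinternal hmul
end

section
/- With A(V,S) the quotient of the nonunital symmetric algebra Sym(V)_+ by the ideal I(S) as in the context, the set of algebra automorphisms of A(V,S) that map the degree-1 subspace V onto itself equals GL(V)_S = {g ∈ GL(V) : Sym^r(g)(S) = S} (acting on A(V,S) via the induced action on Sym(V)_+). That is, {σ ∈ Aut(A(V,S)) : σ(V) = V} = GL(V)_S. -/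
/-!
An automorphism `σ` of `A(V,S)` with `σ(V) = V` restricts to some `g ∈ GL(V)` on `V`. Since
`Sym^{i+1}(V) = Sym^i(V) · V` and `σ` is multiplicative, induction on `i` shows that `σ` acts
on the image of `Sym^i(V)` by `Sym^i(g)` for every `i ≤ r`. In degree `r` this means that
`Sym^r(g)` maps the kernel `S` of `Sym^r(V) → A` into itself; so does `Sym^r(g⁻¹)`, which
comes from `σ⁻¹` in the same way, hence `Sym^r(g)(S) = S`. Conversely, a map acting by
`Sym^i(g)` on each graded piece is multiplicative because `Sym(g)` is, and the product of
`A(V,S)` is the truncated product of `Sym(V)`.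
-/

open MvPolynomial

namespace MvPolynomial

variable {κ R : Type*} [CommSemiring R]

/-- `Sym(g)`: the algebra endomorphism of `Sym(V) = R[X]` extending `g` on `V = Sym¹(V)`. -/
noncomputable def linearSubst (g : homogeneousSubmodule κ R 1 →ₗ[R] homogeneousSubmodule κ R 1) :
    MvPolynomial κ R →ₐ[R] MvPolynomial κ R :=
  aeval fun j => (g ⟨X j, (mem_homogeneousSubmodule _ _).2 (isHomogeneous_X R j)⟩ :
    MvPolynomial κ R)

theorem linearSubst_mem_homogeneousSubmodule
    (g : homogeneousSubmodule κ R 1 →ₗ[R] homogeneousSubmodule κ R 1) {i : ℕ}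
    {p : MvPolynomial κ R} (hp : p ∈ homogeneousSubmodule κ R i) :
    linearSubst g p ∈ homogeneousSubmodule κ R i := by
  simpa [linearSubst] using hp.aeval _ fun j => (g _).2

noncomputable def linearSubstComponent
    (g : homogeneousSubmodule κ R 1 →ₗ[R] homogeneousSubmodule κ R 1) (i : ℕ) :
    homogeneousSubmodule κ R i →ₗ[R] homogeneousSubmodule κ R i :=
  (linearSubst g).toLinearMap.restrict fun _ => linearSubst_mem_homogeneousSubmodule g

theorem span_range_X_eq_top :
    Submodule.span R (Set.range fun j : κ =>
      (⟨X j, (mem_homogeneousSubmodule _ _).2 (isHomogeneous_X R j)⟩ :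
        homogeneousSubmodule κ R 1)) = ⊤ := by
  apply Submodule.map_injective_of_injective (homogeneousSubmodule κ R 1).injective_subtype
  rw [Submodule.map_span, ← Set.range_comp, Submodule.map_subtype_top]
  exact homogeneousSubmodule_one_eq_span_X.symm

theorem linearSubstComponent_one
    (g : homogeneousSubmodule κ R 1 →ₗ[R] homogeneousSubmodule κ R 1) :
    linearSubstComponent g 1 = g :=
  LinearMap.ext_on_range span_range_X_eq_top fun j => Subtype.ext (aeval_X _ j)

theorem linearSubst_comp (g g' : homogeneousSubmodule κ R 1 →ₗ[R] homogeneousSubmodule κ R 1) :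
    linearSubst (g ∘ₗ g') = (linearSubst g).comp (linearSubst g') := by
  refine algHom_ext fun j => ?_
  simp only [linearSubst, AlgHom.comp_apply, aeval_X]
  exact congrArg Subtype.val (LinearMap.congr_fun (linearSubstComponent_one g) _).symm

theorem linearSubst_id : linearSubst (LinearMap.id : homogeneousSubmodule κ R 1 →ₗ[R] _) =
    AlgHom.id R (MvPolynomial κ R) :=
  algHom_ext fun j => aeval_X _ j

theorem map_linearSubst_eq_of_le
    (g : homogeneousSubmodule κ R 1 ≃ₗ[R] homogeneousSubmodule κ R 1)
    {S : Submodule R (MvPolynomial κ R)}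
    (hg : S.map (linearSubst g.toLinearMap).toLinearMap ≤ S)
    (hg' : S.map (linearSubst g.symm.toLinearMap).toLinearMap ≤ S) :
    S.map (linearSubst g.toLinearMap).toLinearMap = S := by
  refine le_antisymm hg fun p hp => ⟨linearSubst g.symm.toLinearMap p, hg' ⟨p, hp, rfl⟩, ?_⟩
  have h := congrArg (· p) (linearSubst_comp g.toLinearMap g.symm.toLinearMap)
  simpa [linearSubst_id] using h.symm

end MvPolynomial

theorem LinearEquiv.exists_intertwining_of_map_range_eq {R M A : Type*} [Semiring R]
    [AddCommMonoid M] [Module R M] [AddCommMonoid A] [Module R A] {f : M →ₗ[R] A}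
    (hf : Function.Injective f) (σ : A ≃ₗ[R] A)
    (h : (LinearMap.range f).map σ.toLinearMap = LinearMap.range f) :
    ∃ g : M ≃ₗ[R] M, ∀ v, σ (f v) = f (g v) := by
  refine ⟨(LinearEquiv.ofInjective f hf).trans
    ((σ.ofSubmodules _ _ h).trans (LinearEquiv.ofInjective f hf).symm), fun v => ?_⟩
  simp

theorem LinearMap.map_range_eq_of_intertwining {R M A : Type*} [Semiring R]
    [AddCommMonoid M] [Module R M] [AddCommMonoid A] [Module R A] {f : M →ₗ[R] A}
    {σ : A →ₗ[R] A} (g : M ≃ₗ[R] M) (h : ∀ v, σ (f v) = f (g v)) :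
    (LinearMap.range f).map σ = LinearMap.range f := by
  rw [← LinearMap.range_comp, show σ ∘ₗ f = f ∘ₗ g.toLinearMap from LinearMap.ext h,
    LinearMap.range_comp_of_range_eq_top _ g.range]

section TruncatedProduct

variable {κ R A : Type*} [CommSemiring R] [AddCommMonoid A] [Module R A]

def IsTruncatedMul (r : ℕ) (mul : A →ₗ[R] A →ₗ[R] A)
    (ι : ∀ i : ℕ, homogeneousSubmodule κ R i →ₗ[R] A) : Prop :=
  ∀ i ∈ Finset.Icc 1 r, ∀ j ∈ Finset.Icc 1 r,
    ∀ (x : homogeneousSubmodule κ R i) (y : homogeneousSubmodule κ R j),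
      mul (ι i x) (ι j y) =
        if i + j ≤ r then
          ι (i + j) ⟨(x : MvPolynomial κ R) * (y : MvPolynomial κ R),
            homogeneousSubmodule_mul i j (Submodule.mul_mem_mul x.2 y.2)⟩
        else 0

variable {r : ℕ} {mul : A →ₗ[R] A →ₗ[R] A} {ι : ∀ i : ℕ, homogeneousSubmodule κ R i →ₗ[R] A}

theorem map_linearSubst_le_of_ker_eq {S : Submodule R (MvPolynomial κ R)}
    (hS : S ≤ homogeneousSubmodule κ R r)
    (hker : LinearMap.ker (ι r) = S.comap (homogeneousSubmodule κ R r).subtype)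
    {σ : A →ₗ[R] A} {g : homogeneousSubmodule κ R 1 →ₗ[R] homogeneousSubmodule κ R 1}
    (hσ : ∀ x, σ (ι r x) = ι r (linearSubstComponent g r x)) :
    S.map (linearSubst g).toLinearMap ≤ S := by
  rintro _ ⟨p, hp, rfl⟩
  have hp' : (⟨p, hS hp⟩ : homogeneousSubmodule κ R r) ∈ LinearMap.ker (ι r) := by
    rwa [hker]
  have hgp : linearSubstComponent g r ⟨p, hS hp⟩ ∈ LinearMap.ker (ι r) := by
    rw [LinearMap.mem_ker, ← hσ, LinearMap.mem_ker.1 hp', map_zero]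
  rwa [hker] at hgp

namespace IsTruncatedMul

theorem ι_mul (hmul : IsTruncatedMul r mul ι) {i j : ℕ} (hi : 1 ≤ i) (hj : 1 ≤ j)
    (hij : i + j ≤ r) {a b : MvPolynomial κ R} (ha : a ∈ homogeneousSubmodule κ R i)
    (hb : b ∈ homogeneousSubmodule κ R j) (hab : a * b ∈ homogeneousSubmodule κ R (i + j)) :
    ι (i + j) ⟨a * b, hab⟩ = mul (ι i ⟨a, ha⟩) (ι j ⟨b, hb⟩) := by
  rw [hmul i (by simp; omega) j (by simp; omega), if_pos hij]

theorem map_ι_eq_of_map_mul (hmul : IsTruncatedMul r mul ι) {σ : A →ₗ[R] A}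
    (hσ : ∀ x y, σ (mul x y) = mul (σ x) (σ y))
    {g : homogeneousSubmodule κ R 1 →ₗ[R] homogeneousSubmodule κ R 1}
    (hg : ∀ v, σ (ι 1 v) = ι 1 (g v)) :
    ∀ i ∈ Finset.Icc 1 r, ∀ x, σ (ι i x) = ι i (linearSubstComponent g i x) := by
  have hg₁ : ∀ v, σ (ι 1 v) = ι 1 (linearSubstComponent g 1 v) := by
    rwa [linearSubstComponent_one]
  intro i hi
  obtain ⟨hi₁, hir⟩ := Finset.mem_Icc.1 hi
  clear hi
  induction i, hi₁ using Nat.le_induction with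
  | base => exact hg₁
  | succ i hi₁ ih =>
    have hmem : ∀ {p}, p ∈ homogeneousSubmodule κ R i * homogeneousSubmodule κ R 1 →
        p ∈ homogeneousSubmodule κ R (i + 1) := fun hp => homogeneousSubmodule_mul i 1 hp
    suffices h : ∀ p (hp : p ∈ homogeneousSubmodule κ R i * homogeneousSubmodule κ R 1),
        σ (ι (i + 1) ⟨p, hmem hp⟩) = ι (i + 1) (linearSubstComponent g (i + 1) ⟨p, hmem hp⟩) by
      rintro ⟨p, hp⟩
      exact h p (by rwa [← homogeneousSubmodule_one_pow, pow_succ,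
        homogeneousSubmodule_one_pow] at hp)
    intro p hp
    induction hp using Submodule.mul_induction_on' with
    | mem_mul_mem a ha b hb =>
      have ih := ih (by omega)
      calc σ (ι (i + 1) ⟨a * b, _⟩)
          = σ (mul (ι i ⟨a, ha⟩) (ι 1 ⟨b, hb⟩)) := by
            rw [hmul.ι_mul hi₁ le_rfl hir ha hb]
        _ = mul (ι i (linearSubstComponent g i ⟨a, ha⟩))
              (ι 1 (linearSubstComponent g 1 ⟨b, hb⟩)) := by rw [hσ, ih, hg₁]
        _ = _ := by
            rw [← hmul.ι_mul hi₁ le_rfl hir]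
            · exact congrArg _ (Subtype.ext (map_mul (linearSubst g) a b).symm)
            · exact hmem (Submodule.mul_mem_mul (Subtype.property _) (Subtype.property _))
    | add x hx y hy ihx ihy =>
      have hsplit : (⟨x + y, hmem (add_mem hx hy)⟩ : homogeneousSubmodule κ R (i + 1)) =
          ⟨x, hmem hx⟩ + ⟨y, hmem hy⟩ := rfl
      rw [hsplit, map_add, map_add, map_add, ihx, ihy, map_add]

theorem map_mul_of_map_ι_eq (hmul : IsTruncatedMul r mul ι)
    (hspan : ⨆ i ∈ Finset.Icc 1 r, LinearMap.range (ι i) = ⊤) {σ : A →ₗ[R] A}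
    {g : homogeneousSubmodule κ R 1 →ₗ[R] homogeneousSubmodule κ R 1}
    (hσ : ∀ i ∈ Finset.Icc 1 r, ∀ x, σ (ι i x) = ι i (linearSubstComponent g i x))
    (x y : A) : σ (mul x y) = mul (σ x) (σ y) := by
  have hs : Submodule.span R (⋃ i ∈ Finset.Icc 1 r, (LinearMap.range (ι i) : Set A)) = ⊤ := by
    rw [Submodule.span_iUnion₂]
    simpa only [Submodule.span_eq] using hspan
  suffices h : mul.compr₂ σ = mul.compl₁₂ σ σ from LinearMap.congr_fun₂ h x y
  refine LinearMap.ext_on hs fun _ hx => LinearMap.ext_on hs fun _ hy => ?_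
  obtain ⟨i, hi, a, rfl⟩ := Set.mem_iUnion₂.1 hx
  obtain ⟨j, hj, b, rfl⟩ := Set.mem_iUnion₂.1 hy
  simp only [LinearMap.compr₂_apply, LinearMap.compl₁₂_apply, hσ i hi, hσ j hj, hmul i hi j hj]
  split_ifs with hij
  · rw [hσ _ (by simp at hi hj ⊢; omega)]
    exact congrArg _ (Subtype.ext (map_mul (linearSubst g) (a : MvPolynomial κ R) b))
  · exact map_zero σ

end IsTruncatedMul

end TruncatedProduct

theorem stmt4_general {F A : Type*} [Field F] [AddCommGroup A] [Module F A]
    (n : ℕ) (r : ℕ) (hr : 1 < r)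
    (S : Submodule F (MvPolynomial (Fin n) F))
    (hS : S ≤ homogeneousSubmodule (Fin n) F r)
    (mul : A →ₗ[F] A →ₗ[F] A)
    (ι : ∀ i : ℕ, ↥(homogeneousSubmodule (Fin n) F i) →ₗ[F] A)
    (hinj : ∀ i : ℕ, 1 ≤ i → i < r → Function.Injective (ι i))
    (hker : LinearMap.ker (ι r) =
      Submodule.comap (homogeneousSubmodule (Fin n) F r).subtype S)
    (hinternal : DirectSum.IsInternal
      (fun i : ℕ => if i ∈ Finset.Icc 1 r then LinearMap.range (ι i) else ⊥))
    (hmul : ∀ i ∈ Finset.Icc 1 r, ∀ j ∈ Finset.Icc 1 r,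
      ∀ (x : homogeneousSubmodule (Fin n) F i) (y : homogeneousSubmodule (Fin n) F j),
        mul (ι i x) (ι j y) =
          if h : i + j ≤ r then
            ι (i + j) ⟨(x : MvPolynomial (Fin n) F) * (y : MvPolynomial (Fin n) F),
              homogeneousSubmodule_mul i j (Submodule.mul_mem_mul x.2 y.2)⟩
          else 0) :
    {σ : A ≃ₗ[F] A |
        (∀ x y : A, σ (mul x y) = mul (σ x) (σ y)) ∧
        Submodule.map σ.toLinearMap (LinearMap.range (ι 1)) = LinearMap.range (ι 1)} =
    {σ : A ≃ₗ[F] A |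
        ∃ g : ↥(homogeneousSubmodule (Fin n) F 1) ≃ₗ[F]
              ↥(homogeneousSubmodule (Fin n) F 1),
          ∃ gh : MvPolynomial (Fin n) F →ₐ[F] MvPolynomial (Fin n) F,
            gh = aeval (fun i : Fin n =>
              (g ⟨X i, (mem_homogeneousSubmodule _ _).2 (isHomogeneous_X F i)⟩ :
                MvPolynomial (Fin n) F)) ∧
            Submodule.map gh.toLinearMap S = S ∧
            ∀ i ∈ Finset.Icc 1 r,
              ∀ x y : homogeneousSubmodule (Fin n) F i,
                gh (x : MvPolynomial (Fin n) F) = (y : MvPolynomial (Fin n) F) →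
                  σ (ι i x) = ι i y} := by
  replace hmul : IsTruncatedMul r mul ι := hmul
  have hspan : ⨆ i ∈ Finset.Icc 1 r, LinearMap.range (ι i) = ⊤ := by
    simpa [iSup_ite] using hinternal.submodule_iSup_eq_top
  ext σ
  constructor
  · rintro ⟨hσmul, hσV⟩
    obtain ⟨g, hg⟩ := LinearEquiv.exists_intertwining_of_map_range_eq (hinj 1 le_rfl hr) σ hσV
    have hσ := hmul.map_ι_eq_of_map_mul hσmul hg
    have hσsymm := hmul.map_ι_eq_of_map_mul
      (σ := σ.symm.toLinearMap) (g := g.symm.toLinearMap)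
      (fun x y => σ.symm_apply_eq.2 (by simp [hσmul]))
      (fun v => σ.symm_apply_eq.2 (by simp [hg]))
    have hr' : r ∈ Finset.Icc 1 r := Finset.mem_Icc.2 ⟨hr.le, le_rfl⟩
    refine ⟨g, _, rfl, map_linearSubst_eq_of_le g ?_ ?_, fun i hi x y hxy => ?_⟩
    · exact map_linearSubst_le_of_ker_eq hS hker (hσ r hr')
    · exact map_linearSubst_le_of_ker_eq hS hker (hσsymm r hr')
    · exact (hσ i hi x).trans (congrArg _ (Subtype.ext hxy))
  · rintro ⟨g, _, rfl, -, hσ⟩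
    have hσ' : ∀ i ∈ Finset.Icc 1 r, ∀ x,
        σ (ι i x) = ι i (linearSubstComponent g.toLinearMap i x) :=
      fun i hi x => hσ i hi x _ rfl
    refine ⟨hmul.map_mul_of_map_ι_eq hspan hσ', LinearMap.map_range_eq_of_intertwining g ?_⟩
    simpa [linearSubstComponent_one] using hσ' 1 (Finset.mem_Icc.2 ⟨le_rfl, hr.le⟩)

/-- **Proposition 1** (symmetric case, Gordeev–Popov): let `F` be a field and identify the
symmetric algebra of the nonzero finite-dimensional space `V = Sym¹(V)` with the
polynomial ring `F[X_1,…,X_n]` (`n ≥ 1`), `Sym^i(V)` being the homogeneous component of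
degree `i`.  Let `r > 1`, `S ⊆ Sym^r(V)` a linear subspace, and
`A = A(V,S) = Sym(V)_+/I(S)` where `I(S) = S ⊕ (⊕_{i>r} Sym^i(V))`; concretely, `A` is
the algebra whose underlying space is the direct sum of the images of maps
`ι i : Sym^i(V) → A` for `1 ≤ i ≤ r` (injective for `i < r`, with kernel `S` for
`i = r`), multiplication being induced by polynomial multiplication (and vanishing above
degree `r`).  Then the automorphisms of `A` mapping the degree-one subspace `V` onto
itself are exactly those induced by elements of
`GL(V)_S = {g ∈ GL(V) : Sym^r(g)(S) = S}`, acting by `Sym^i(g)` on each graded piece. -/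
theorem stmt4 {F A : Type*} [Field F] [AddCommGroup A] [Module F A]
    (n : ℕ) (hn : 0 < n) (r : ℕ) (hr : 1 < r)
    (S : Submodule F (MvPolynomial (Fin n) F))
    (hS : S ≤ homogeneousSubmodule (Fin n) F r)
    (mul : A →ₗ[F] A →ₗ[F] A)
    (ι : ∀ i : ℕ, ↥(homogeneousSubmodule (Fin n) F i) →ₗ[F] A)
    (hinj : ∀ i : ℕ, 1 ≤ i → i < r → Function.Injective (ι i))
    (hker : LinearMap.ker (ι r) =
      Submodule.comap (homogeneousSubmodule (Fin n) F r).subtype S)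
    (hinternal : DirectSum.IsInternal
      (fun i : ℕ => if i ∈ Finset.Icc 1 r then LinearMap.range (ι i) else ⊥))
    (hmul : ∀ i ∈ Finset.Icc 1 r, ∀ j ∈ Finset.Icc 1 r,
      ∀ (x : homogeneousSubmodule (Fin n) F i) (y : homogeneousSubmodule (Fin n) F j),
        mul (ι i x) (ι j y) =
          if h : i + j ≤ r then
            ι (i + j) ⟨(x : MvPolynomial (Fin n) F) * (y : MvPolynomial (Fin n) F),
              homogeneousSubmodule_mul i j (Submodule.mul_mem_mul x.2 y.2)⟩
          else 0) :
    {σ : A ≃ₗ[F] A |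
        (∀ x y : A, σ (mul x y) = mul (σ x) (σ y)) ∧
        Submodule.map σ.toLinearMap (LinearMap.range (ι 1)) = LinearMap.range (ι 1)} =
    {σ : A ≃ₗ[F] A |
        ∃ g : ↥(homogeneousSubmodule (Fin n) F 1) ≃ₗ[F]
              ↥(homogeneousSubmodule (Fin n) F 1),
          ∃ gh : MvPolynomial (Fin n) F →ₐ[F] MvPolynomial (Fin n) F,
            gh = aeval (fun i : Fin n =>
              (g ⟨X i, (mem_homogeneousSubmodule _ _).2 (isHomogeneous_X F i)⟩ :
                MvPolynomial (Fin n) F)) ∧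
            Submodule.map gh.toLinearMap S = S ∧
            ∀ i ∈ Finset.Icc 1 r,
              ∀ x y : homogeneousSubmodule (Fin n) F i,
                gh (x : MvPolynomial (Fin n) F) = (y : MvPolynomial (Fin n) F) →
                  σ (ι i x) = ι i y} :=
  stmt4_general n r hr S hS mul ι hinj hker hinternal hmul
end

section
/- Let B(U) be the algebra built on the exterior algebra without unit of an n-dimensional vector space U, with product equal to the wedge product except that b₀b₀ = b₀ for the fixed basis vector b₀ of ∧ⁿU, as in the context. Then the set of algebra automorphisms of B(U) mapping U = ∧¹U onto itself equals SL(U) (acting via exterior powers): {σ ∈ Aut(B(U)) : σ(U) = U} = SL(U). -/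
/-! An automorphism `σ` with `σ(U) = U` restricts to some `g ∈ GL(U)`. Each `⋀^i U` is spanned by
products of elements of `U`, so multiplicativity forces `σ` to act on `⋀^i U` as `⋀^i g`; on the
line `⋀^n U` this is multiplication by `det g`, and applying `σ` to `b₀ b₀ = b₀` gives
`det g = (det g)²`, hence `det g = 1`. Conversely `⋀^• g` respects wedge products for every `g`,
and it fixes `b₀`, hence respects `b₀ b₀ = b₀`, exactly when `det g = 1`. -/

theorem AlternatingMap.eq_basis_det_smulRight {R M N ι : Type*} [CommRing R]
    [AddCommGroup M] [Module R M] [AddCommGroup N] [Module R N] [Fintype ι] [DecidableEq ι]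
    (e : Module.Basis ι R M) (f : M [⋀^ι]→ₗ[R] N) : f = e.det.smulRight (f e) := by
  refine Module.Basis.ext_alternating e fun i h => ?_
  let σ : Equiv.Perm ι := Equiv.ofBijective i (Finite.injective_iff_bijective.1 h)
  change f (e ∘ σ) = (e.det.smulRight (f e)) (e ∘ σ)
  simp [AlternatingMap.map_perm, Module.Basis.det_self]

theorem LinearEquiv.exists_comp_eq_of_map_range_eq {R V M : Type*} [Ring R]
    [AddCommGroup V] [Module R V] [AddCommGroup M] [Module R M]
    {f : V →ₗ[R] M} (hf : Function.Injective f) (σ : M ≃ₗ[R] M)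
    (h : (LinearMap.range f).map (σ : M →ₗ[R] M) = LinearMap.range f) :
    ∃ g : V ≃ₗ[R] V, ∀ v, σ (f v) = f (g v) := by
  let e := LinearEquiv.ofInjective f hf
  refine ⟨e.trans ((σ.ofSubmodules _ _ h).trans e.symm), fun v => ?_⟩
  simp only [trans_apply, e, ofInjective_symm_apply, ofSubmodules_apply, ofInjective_apply]

theorem LinearMap.ext_of_biSup_range_eq_top {R M P κ : Type*} {N : κ → Type*} [Semiring R]
    [AddCommMonoid M] [Module R M] [AddCommMonoid P] [Module R P]
    [∀ k, AddCommMonoid (N k)] [∀ k, Module R (N k)] {s : Set κ} {φ : ∀ k, N k →ₗ[R] M}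
    (hs : ⨆ k ∈ s, range (φ k) = ⊤) {f g : M →ₗ[R] P}
    (h : ∀ k ∈ s, ∀ x, f (φ k x) = g (φ k x)) : f = g := by
  have : ⨆ k ∈ s, range (φ k) ≤ eqLocus f g :=
    iSup₂_le fun k hk => by rintro _ ⟨x, rfl⟩; exact h k hk x
  ext x
  exact this (hs ▸ Submodule.mem_top)

namespace exteriorPower

variable {R M N : Type*} [CommRing R] [AddCommGroup M] [Module R M] [AddCommGroup N] [Module R N]

theorem coe_map (n : ℕ) (f : M →ₗ[R] N) (x : ⋀[R]^n M) :
    (map n f x : ExteriorAlgebra R N) = ExteriorAlgebra.map f x := by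
  have : (⋀[R]^n N).subtype ∘ₗ map n f =
      (ExteriorAlgebra.map f).toLinearMap ∘ₗ (⋀[R]^n M).subtype :=
    linearMap_ext (by ext v; simp)
  exact LinearMap.congr_fun this x

theorem map_mk_mul {i j : ℕ} (f : M →ₗ[R] N) (x : ⋀[R]^i M) (y : ⋀[R]^j M) :
    map (i + j) f ⟨x * y, SetLike.mul_mem_graded x.2 y.2⟩ =
      ⟨map i f x * map j f y, SetLike.mul_mem_graded (map i f x).2 (map j f y).2⟩ :=
  Subtype.ext (by simp only [coe_map, map_mul])

theorem ιMulti_append {i j : ℕ} (a : Fin i → M) (b : Fin j → M) :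
    ιMulti R (i + j) (Fin.append a b) =
      ⟨ιMulti R i a * ιMulti R j b, SetLike.mul_mem_graded (ιMulti R i a).2 (ιMulti R j b).2⟩ :=
  Subtype.ext (by simp [ExteriorAlgebra.ιMulti_mul_ιMulti])

theorem map_oneEquiv_symm (f : M →ₗ[R] N) (m : M) :
    map 1 f ((oneEquiv R M).symm m) = (oneEquiv R N).symm (f m) := by
  rw [LinearEquiv.eq_symm_apply]
  simpa using LinearMap.congr_fun (oneEquiv_naturality f) ((oneEquiv R M).symm m)

theorem map_eq_det_smul [StrongRankCondition R] [Module.Free R M] [Module.Finite R M] {n : ℕ}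
    (hn : Module.finrank R M = n) (f : M →ₗ[R] M) (x : ⋀[R]^n M) :
    map n f x = LinearMap.det f • x := by
  let e := Module.finBasisOfFinrankEq R M hn
  have : map n f = LinearMap.det f • LinearMap.id := by
    refine linearMap_ext (AlternatingMap.ext fun v => ?_)
    rw [LinearMap.compAlternatingMap_apply, map_apply_ιMulti,
      AlternatingMap.eq_basis_det_smulRight e (ιMulti R n)]
    simp [smul_smul]
  exact LinearMap.congr_fun this x

end exteriorPower

section

variable {R U B : Type*} [CommRing R] [AddCommGroup U] [Module R U] [AddCommGroup B] [Module R B]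
  (mul : B →ₗ[R] B →ₗ[R] B) (ι : ∀ i : ℕ, ⋀[R]^i U →ₗ[R] B) (n : ℕ)

-- The product of `B(U)` away from bidegree `(n, n)`.
def IsTruncatedWedge : Prop :=
  ∀ i ∈ Finset.Icc 1 n, ∀ j ∈ Finset.Icc 1 n, ¬(i = n ∧ j = n) →
    ∀ (x : ⋀[R]^i U) (y : ⋀[R]^j U), mul (ι i x) (ι j y) =
      if i + j ≤ n then ι (i + j) ⟨x * y, SetLike.mul_mem_graded x.2 y.2⟩ else 0

def ActsAsExteriorPower (σ : B →ₗ[R] B) (g : U →ₗ[R] U) : Prop :=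
  ∀ i ∈ Finset.Icc 1 n, ∀ x : ⋀[R]^i U, σ (ι i x) = ι i (exteriorPower.map i g x)

variable {mul ι n}

theorem actsAsExteriorPower_iff {σ : B →ₗ[R] B} {g : U →ₗ[R] U} :
    ActsAsExteriorPower ι n σ g ↔ ∀ i ∈ Finset.Icc 1 n, ∀ x y : ⋀[R]^i U,
      ExteriorAlgebra.map g (x : ExteriorAlgebra R U) = y → σ (ι i x) = ι i y := by
  refine forall₂_congr fun i _ =>
    ⟨fun h x y hxy => ?_, fun h x => h x _ (exteriorPower.coe_map ..).symm⟩
  rw [h x]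
  exact congrArg (ι i) (Subtype.ext ((exteriorPower.coe_map ..).trans hxy))

theorem exists_actsAsExteriorPower_one (hι : Function.Injective (ι 1)) {σ : B ≃ₗ[R] B}
    (hσ : (LinearMap.range (ι 1)).map (σ : B →ₗ[R] B) = LinearMap.range (ι 1)) :
    ∃ g : U ≃ₗ[R] U, ∀ x, σ (ι 1 x) = ι 1 (exteriorPower.map 1 g x) := by
  let e := (exteriorPower.oneEquiv R U).symm
  have hrange : LinearMap.range (ι 1 ∘ₗ e.toLinearMap) = LinearMap.range (ι 1) :=
    LinearMap.range_comp_of_range_eq_top _ e.range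
  obtain ⟨g, hg⟩ := σ.exists_comp_eq_of_map_range_eq (f := ι 1 ∘ₗ e.toLinearMap)
    (hι.comp e.injective) (hrange ▸ hσ)
  refine ⟨g, fun x => ?_⟩
  obtain ⟨u, rfl⟩ := e.surjective x
  rw [exteriorPower.map_oneEquiv_symm]
  exact hg u

theorem actsAsExteriorPower_of_one (hmul : IsTruncatedWedge mul ι n)
    {σ : B →ₗ[R] B} (hσ : ∀ x y, σ (mul x y) = mul (σ x) (σ y)) {g : U →ₗ[R] U}
    (h₁ : ∀ x, σ (ι 1 x) = ι 1 (exteriorPower.map 1 g x)) :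
    ActsAsExteriorPower ι n σ g := by
  intro i hi
  obtain ⟨hi₁, hin⟩ := Finset.mem_Icc.mp hi
  clear hi
  induction i, hi₁ using Nat.le_induction with
  | base => exact h₁
  | succ i hi₁ ih =>
    have hmul_one (x : ⋀[R]^i U) (y : ⋀[R]^1 U) :
        mul (ι i x) (ι 1 y) = ι (i + 1) ⟨x * y, SetLike.mul_mem_graded x.2 y.2⟩ := by
      rw [hmul i (Finset.mem_Icc.mpr ⟨hi₁, by omega⟩) 1 (Finset.mem_Icc.mpr ⟨le_rfl, by omega⟩)
        (by omega), if_pos hin]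
    suffices (σ ∘ₗ ι (i + 1)).compAlternatingMap (exteriorPower.ιMulti R (i + 1)) =
        (ι (i + 1) ∘ₗ exteriorPower.map (i + 1) g).compAlternatingMap
          (exteriorPower.ιMulti R (i + 1)) from
      fun x => LinearMap.congr_fun (exteriorPower.linearMap_ext this) x
    ext v
    obtain ⟨a, b, rfl⟩ : ∃ a b, v = Fin.append a b := ⟨_, _, Fin.append_castAdd_natAdd.symm⟩
    simp only [LinearMap.compAlternatingMap_apply, LinearMap.comp_apply,
      exteriorPower.ιMulti_append, ← hmul_one, hσ, ih (by omega), h₁, exteriorPower.map_mk_mul]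

theorem map_range_eq_of_actsAsExteriorPower (hn : 0 < n) {σ : B →ₗ[R] B} {g : U →ₗ[R] U}
    (hg : Function.Surjective g) (hact : ActsAsExteriorPower ι n σ g) :
    (LinearMap.range (ι 1)).map σ = LinearMap.range (ι 1) := by
  have : σ ∘ₗ ι 1 = ι 1 ∘ₗ exteriorPower.map 1 g :=
    LinearMap.ext (hact 1 (Finset.mem_Icc.mpr ⟨le_rfl, hn⟩))
  rw [← LinearMap.range_comp, this, LinearMap.range_comp_of_range_eq_top]
  exact LinearMap.range_eq_top.mpr (exteriorPower.map_surjective hg)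

variable [StrongRankCondition R] [Module.Free R U] [Module.Finite R U]

theorem map_mul_of_actsAsExteriorPower (hdim : Module.finrank R U = n)
    (hmul : IsTruncatedWedge mul ι n)
    (hspan : ⨆ i ∈ Finset.Icc 1 n, LinearMap.range (ι i) = ⊤) {b₀ : ⋀[R]^n U}
    (hb₀span : Submodule.span R {b₀} = ⊤) (hmultop : mul (ι n b₀) (ι n b₀) = ι n b₀)
    {σ : B →ₗ[R] B} {g : U →ₗ[R] U} (hdet : LinearMap.det g = 1)
    (hact : ActsAsExteriorPower ι n σ g) (x y : B) :
    σ (mul x y) = mul (σ x) (σ y) := by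
  have hpieces : ∀ i ∈ Finset.Icc 1 n, ∀ j ∈ Finset.Icc 1 n, ∀ a b,
      σ (mul (ι i a) (ι j b)) = mul (σ (ι i a)) (σ (ι j b)) := by
    intro i hi j hj a b
    by_cases hij : i = n ∧ j = n
    · obtain ⟨rfl, rfl⟩ := hij
      have hσb₀ : σ (ι _ b₀) = ι _ b₀ := by
        rw [hact _ hi, exteriorPower.map_eq_det_smul hdim, hdet, one_smul]
      obtain ⟨s, rfl⟩ := Submodule.mem_span_singleton.mp (hb₀span ▸ Submodule.mem_top (x := a))
      obtain ⟨t, rfl⟩ := Submodule.mem_span_singleton.mp (hb₀span ▸ Submodule.mem_top (x := b))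
      simp only [map_smul, LinearMap.smul_apply, hmultop, hσb₀]
    · rw [hact i hi, hact j hj, hmul i hi j hj hij, hmul i hi j hj hij]
      split_ifs with hle
      · have hij : i + j ∈ Finset.Icc 1 n := by simp only [Finset.mem_Icc] at hi hj ⊢; omega
        rw [hact (i + j) hij, exteriorPower.map_mk_mul]
      · exact map_zero σ
  have : mul.compr₂ σ = mul.compl₁₂ σ σ :=
    LinearMap.ext_of_biSup_range_eq_top hspan fun i hi a =>
      LinearMap.ext_of_biSup_range_eq_top hspan fun j hj b => hpieces i hi j hj a b
  exact LinearMap.congr_fun₂ this x y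

end

theorem det_eq_one_of_actsAsExteriorPower {F U B : Type*} [Field F] [AddCommGroup U]
    [Module F U] [FiniteDimensional F U] [AddCommGroup B] [Module F B]
    {mul : B →ₗ[F] B →ₗ[F] B} {ι : ∀ i : ℕ, ⋀[F]^i U →ₗ[F] B} {n : ℕ} (hn : 0 < n)
    (hdim : Module.finrank F U = n) {b₀ : ⋀[F]^n U} (hb₀ : ι n b₀ ≠ 0)
    (hmultop : mul (ι n b₀) (ι n b₀) = ι n b₀)
    {σ : B →ₗ[F] B} (hσ : ∀ x y, σ (mul x y) = mul (σ x) (σ y)) {g : U →ₗ[F] U}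
    (hg : IsUnit (LinearMap.det g)) (hact : ActsAsExteriorPower ι n σ g) :
    LinearMap.det g = 1 := by
  have hσb₀ : σ (ι n b₀) = LinearMap.det g • ι n b₀ := by
    rw [hact n (Finset.mem_Icc.mpr ⟨hn, le_rfl⟩), exteriorPower.map_eq_det_smul hdim, map_smul]
  have hsq : LinearMap.det g • ι n b₀ = (LinearMap.det g * LinearMap.det g) • ι n b₀ :=
    calc LinearMap.det g • ι n b₀ = σ (mul (ι n b₀) (ι n b₀)) := by rw [hmultop, hσb₀]
      _ = (LinearMap.det g * LinearMap.det g) • ι n b₀ := by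
        rw [hσ, hσb₀]
        simp only [map_smul, LinearMap.smul_apply, hmultop, smul_smul]
  have hidem := smul_left_injective F hb₀ hsq
  exact hg.mul_left_cancel (hidem.symm.trans (mul_one _).symm)

/-- **Proposition 2** (Gordeev–Popov): let `U` be a nonzero `n`-dimensional vector space
over a field `F` and let `B = B(U)` be the algebra whose underlying space is
`⊕_{i=1}^{n} ⋀^i U` (embedded via maps `ι i`), with multiplication the wedge product,
except that `b₀ · b₀ = b₀` for the fixed basis vector `b₀` of the line `⋀^n U`.
Then the automorphisms of `B` mapping `U = ⋀¹U` onto itself are exactly those induced by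
elements of `SL(U)` acting by the exterior powers `⋀^i g`. -/
theorem stmt5 {F U B : Type*} [Field F]
    [AddCommGroup U] [Module F U] [FiniteDimensional F U]
    [AddCommGroup B] [Module F B]
    (n : ℕ) (hn : 0 < n) (hdim : Module.finrank F U = n)
    (mul : B →ₗ[F] B →ₗ[F] B)
    (ι : ∀ i : ℕ, ↥(⋀[F]^i U) →ₗ[F] B)
    (hinj : ∀ i ∈ Finset.Icc 1 n, Function.Injective (ι i))
    (hinternal : DirectSum.IsInternal
      (fun i : ℕ => if i ∈ Finset.Icc 1 n then LinearMap.range (ι i) else ⊥))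
    (b₀ : ⋀[F]^n U) (hb₀ : b₀ ≠ 0)
    (hb₀span : Submodule.span F {b₀} = (⊤ : Submodule F (⋀[F]^n U)))
    (hmul : ∀ i ∈ Finset.Icc 1 n, ∀ j ∈ Finset.Icc 1 n, ¬(i = n ∧ j = n) →
      ∀ (x : ⋀[F]^i U) (y : ⋀[F]^j U),
        mul (ι i x) (ι j y) =
          if i + j ≤ n then
            ι (i + j) ⟨(x : ExteriorAlgebra F U) * (y : ExteriorAlgebra F U),
              by rw [ExteriorAlgebra.exteriorPower, pow_add]; exact Submodule.mul_mem_mul x.2 y.2⟩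
          else 0)
    (hmultop : mul (ι n b₀) (ι n b₀) = ι n b₀) :
    {σ : B ≃ₗ[F] B |
        (∀ x y : B, σ (mul x y) = mul (σ x) (σ y)) ∧
        Submodule.map σ.toLinearMap (LinearMap.range (ι 1)) = LinearMap.range (ι 1)} =
    {σ : B ≃ₗ[F] B |
        ∃ g : U ≃ₗ[F] U, LinearMap.det (g : U →ₗ[F] U) = 1 ∧
          ∀ i ∈ Finset.Icc 1 n, ∀ (x y : ⋀[F]^i U),
            ExteriorAlgebra.map (g : U →ₗ[F] U) (x : ExteriorAlgebra F U)
                = (y : ExteriorAlgebra F U) →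
              σ (ι i x) = ι i y} := by
  have hmem : ∀ {i}, 1 ≤ i → i ≤ n → i ∈ Finset.Icc 1 n := fun h₁ h₂ => Finset.mem_Icc.mpr ⟨h₁, h₂⟩
  have hwedge : IsTruncatedWedge mul ι n := hmul
  have hspan : ⨆ i ∈ Finset.Icc 1 n, LinearMap.range (ι i) = ⊤ := by
    simpa only [iSup_ite, iSup_bot, sup_bot_eq] using hinternal.submodule_iSup_eq_top
  have hb₀' : ι n b₀ ≠ 0 := (map_ne_zero_iff _ (hinj n (hmem hn le_rfl))).mpr hb₀
  ext σ
  simp only [Set.mem_ofPred_eq]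
  constructor
  · rintro ⟨hσ, hrange⟩
    obtain ⟨g, hg⟩ := exists_actsAsExteriorPower_one (hinj 1 (hmem le_rfl hn)) hrange
    have hact := actsAsExteriorPower_of_one hwedge hσ hg
    exact ⟨g, det_eq_one_of_actsAsExteriorPower hn hdim hb₀' hmultop hσ g.isUnit_det' hact,
      actsAsExteriorPower_iff.mp hact⟩
  · rintro ⟨g, hdet, hact⟩
    replace hact := actsAsExteriorPower_iff (σ := (σ : B →ₗ[F] B)).mpr hact
    exact ⟨map_mul_of_actsAsExteriorPower hdim hwedge hspan hb₀span hmultop hdet hact,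
      map_range_eq_of_actsAsExteriorPower hn g.surjective hact⟩
end

section
/- Let R(α,ζ,Δ) be the algebra defined in the context. Then R(α,ζ,Δ) is simple: its multiplication is nonzero and its only two-sided ideals are 0 and R(α,ζ,Δ) itself. -/
/-- **Proposition 6** (Gordeev–Popov): let `F` be a field with `|F| ≥ 4`, `R` a nonzero
finite-dimensional (nonassociative) algebra over `F`, `α, ζ ∈ F` nonzero with
`α ≠ 1`, `ζ ≠ 1`, `α ≠ ζ`, `Z` a vector space with `dim Z = dim R` carrying the zero
multiplication, and `Δ : Z × R → F` a nondegenerate bilinear pairing.  Let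
`P = R(α,ζ,Δ) = ⟨e⟩ ⊕ Z ⊕ R` be the algebra in which `e` is a left identity, `Z` and `R`
are the eigenspaces of right multiplication by `e` with eigenvalues `ζ` and `α`, `R` and
`Z` are subalgebras, and `a·z = 0`, `z·a = Δ(z,a)·e` for `a ∈ R`, `z ∈ Z`.
Then `P` is simple: its multiplication is nonzero and its only two-sided ideals are `0`
and `P`. -/
theorem stmt8 {F R Z P : Type*} [Field F]
    [AddCommGroup R] [Module F R] [FiniteDimensional F R] [Nontrivial R]
    [AddCommGroup Z] [Module F Z] [FiniteDimensional F Z]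
    [AddCommGroup P] [Module F P]
    (hF : (4 : Cardinal) ≤ Cardinal.mk F)
    (hdim : Module.finrank F Z = Module.finrank F R)
    (mR : R →ₗ[F] R →ₗ[F] R)
    (α ζ : F) (hα0 : α ≠ 0) (hζ0 : ζ ≠ 0) (hα1 : α ≠ 1) (hζ1 : ζ ≠ 1) (hαζ : α ≠ ζ)
    (Δ : Z →ₗ[F] R →ₗ[F] F) (hΔ : Δ.Nondegenerate)
    (mul : P →ₗ[F] P →ₗ[F] P) (e : P)
    (jZ : Z →ₗ[F] P) (hjZ : Function.Injective jZ)
    (jR : R →ₗ[F] P) (hjR : Function.Injective jR)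
    (hinternal : DirectSum.IsInternal
      ![Submodule.span F {e}, LinearMap.range jZ, LinearMap.range jR])
    (hleft : ∀ x : P, mul e x = x)
    (hZe : ∀ z : Z, mul (jZ z) e = ζ • jZ z)
    (hRe : ∀ a : R, mul (jR a) e = α • jR a)
    (hRR : ∀ a b : R, mul (jR a) (jR b) = jR (mR a b))
    (hZZ : ∀ z w : Z, mul (jZ z) (jZ w) = 0)
    (hRZ : ∀ (a : R) (z : Z), mul (jR a) (jZ z) = 0)
    (hZR : ∀ (z : Z) (a : R), mul (jZ z) (jR a) = Δ z a • e) :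
    mul ≠ 0 ∧
      ∀ I : Submodule F P, (∀ x ∈ I, ∀ y : P, mul x y ∈ I ∧ mul y x ∈ I) →
        I = ⊥ ∨ I = ⊤ := by
  obtain ⟨a0, ha0⟩ := exists_ne (0 : R)
  have hjR0 : jR a0 ≠ 0 := fun h => ha0 (hjR (by simpa using h))
  have hee : mul e e = e := hleft e
  constructor
  · intro h
    apply hjR0
    rw [← hleft (jR a0), h]
    simp
  · intro I hI
    by_cases hbot : I = ⊥
    · exact Or.inl hbot
    right
    -- decomposition of P
    have hsup : (⊤ : Submodule F P) =
        Submodule.span F {e} ⊔ (LinearMap.range jZ ⊔ LinearMap.range jR) := by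
      rw [← hinternal.submodule_iSup_eq_top]
      apply le_antisymm
      · apply iSup_le
        intro i
        fin_cases i
        · exact le_sup_left
        · exact le_sup_of_le_right le_sup_left
        · exact le_sup_of_le_right le_sup_right
      · refine sup_le ?_ (sup_le ?_ ?_)
        · exact le_iSup (fun i => ![Submodule.span F {e}, LinearMap.range jZ,
            LinearMap.range jR] i) 0
        · exact le_iSup (fun i => ![Submodule.span F {e}, LinearMap.range jZ,
            LinearMap.range jR] i) 1
        · exact le_iSup (fun i => ![Submodule.span F {e}, LinearMap.range jZ,
            LinearMap.range jR] i) 2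
    have hdec : ∀ x : P, ∃ c : F, ∃ z : Z, ∃ a : R, x = c • e + jZ z + jR a := by
      intro x
      have hx : x ∈ Submodule.span F {e} ⊔ (LinearMap.range jZ ⊔ LinearMap.range jR) :=
        hsup ▸ Submodule.mem_top
      obtain ⟨u, hu, v, hv, huv⟩ := Submodule.mem_sup.mp hx
      obtain ⟨w, hw, t, ht, hwt⟩ := Submodule.mem_sup.mp hv
      obtain ⟨c, hc⟩ := Submodule.mem_span_singleton.mp hu
      obtain ⟨z, hz⟩ := hw
      obtain ⟨a, ha⟩ := ht
      exact ⟨c, z, a, by rw [← huv, ← hwt, ← hc, hz, ha]; abel⟩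
    -- key: components of elements of I lie in I
    have key : ∀ x ∈ I, ∀ c : F, ∀ z : Z, ∀ a : R, x = c • e + jZ z + jR a →
        c • e ∈ I ∧ jZ z ∈ I ∧ jR a ∈ I := by
      intro x hx c z a hxd
      have hTx : mul x e = c • e + ζ • jZ z + α • jR a := by
        rw [hxd]
        simp [hZe, hRe, hee]
      set y1 : P := ((1 - ζ) * c) • e + (α - ζ) • jR a with hy1def
      have hy1 : y1 ∈ I := by
        have heq : y1 = mul x e - ζ • x := by
          rw [hTx, hxd, hy1def]
          module
        rw [heq]
        exact Submodule.sub_mem I (hI x hx e).1 (Submodule.smul_mem I ζ hx)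
      have hTy1 : mul y1 e = ((1 - ζ) * c) • e + ((α - ζ) * α) • jR a := by
        rw [hy1def]
        simp [hRe, hee, smul_smul]
      have haI : jR a ∈ I := by
        have hmem : ((α - 1) * (α - ζ)) • jR a ∈ I := by
          have heq : ((α - 1) * (α - ζ)) • jR a = mul y1 e - y1 := by
            rw [hTy1, hy1def]
            module
          rw [heq]
          exact Submodule.sub_mem I (hI y1 hy1 e).1 hy1
        have hs : ((α - 1) * (α - ζ)) ≠ 0 :=
          mul_ne_zero (sub_ne_zero.mpr hα1) (sub_ne_zero.mpr hαζ)
        have := Submodule.smul_mem I ((α - 1) * (α - ζ))⁻¹ hmem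
        rwa [smul_smul, inv_mul_cancel₀ hs, one_smul] at this
      have hceI : c • e ∈ I := by
        have hmem : ((1 - α) * ((1 - ζ) * c)) • e ∈ I := by
          have heq : ((1 - α) * ((1 - ζ) * c)) • e = mul y1 e - α • y1 := by
            rw [hTy1, hy1def]
            module
          rw [heq]
          exact Submodule.sub_mem I (hI y1 hy1 e).1 (Submodule.smul_mem I α hy1)
        have hs : ((1 - α) * (1 - ζ)) ≠ 0 :=
          mul_ne_zero (sub_ne_zero.mpr (Ne.symm hα1)) (sub_ne_zero.mpr (Ne.symm hζ1))
        have := Submodule.smul_mem I ((1 - α) * (1 - ζ))⁻¹ hmem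
        rwa [smul_smul, show ((1 - α) * (1 - ζ))⁻¹ * ((1 - α) * ((1 - ζ) * c)) =
          (((1 - α) * (1 - ζ))⁻¹ * ((1 - α) * (1 - ζ))) * c by ring,
          inv_mul_cancel₀ hs, one_mul] at this
      have hzI : jZ z ∈ I := by
        have heq : jZ z = x - c • e - jR a := by rw [hxd]; abel
        rw [heq]
        exact Submodule.sub_mem I (Submodule.sub_mem I hx hceI) haI
      exact ⟨hceI, hzI, haI⟩
    -- get nonzero element of I
    obtain ⟨x, hxI, hx0⟩ := Submodule.exists_mem_ne_zero_of_ne_bot hbot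
    obtain ⟨c, z, a, hxd⟩ := hdec x
    obtain ⟨hce, hz, ha⟩ := key x hxI c z a hxd
    -- in all cases, e ∈ I
    have heI : e ∈ I := by
      by_cases hc : c ≠ 0
      · have := Submodule.smul_mem I c⁻¹ hce
        rwa [smul_smul, inv_mul_cancel₀ hc, one_smul] at this
      push_neg at hc
      by_cases hzz : z ≠ 0
      · obtain ⟨a', ha'⟩ : ∃ a' : R, Δ z a' ≠ 0 := by
          by_contra h
          push_neg at h
          exact hzz (hΔ.1 z fun a' => h a')
        have hmem : Δ z a' • e ∈ I := by
          rw [← hZR]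
          exact (hI (jZ z) hz (jR a')).1
        have := Submodule.smul_mem I (Δ z a')⁻¹ hmem
        rwa [smul_smul, inv_mul_cancel₀ ha', one_smul] at this
      push_neg at hzz
      have haa : a ≠ 0 := by
        intro h
        apply hx0
        rw [hxd, hc, hzz, h]
        simp
      obtain ⟨z', hz'⟩ : ∃ z' : Z, Δ z' a ≠ 0 := by
        by_contra h
        push_neg at h
        exact haa (hΔ.2 a fun z' => h z')
      have hmem : Δ z' a • e ∈ I := by
        rw [← hZR]
        exact (hI (jR a) ha (jZ z')).2
      have := Submodule.smul_mem I (Δ z' a)⁻¹ hmem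
      rwa [smul_smul, inv_mul_cancel₀ hz', one_smul] at this
    -- conclude I = ⊤
    rw [Submodule.eq_top_iff']
    intro y
    have := (hI e heI y).1
    rwa [hleft y] at this
end

section
/- Let R(α,ζ,Δ) be the algebra defined in the context. Then, with respect to the decomposition R(α,ζ,Δ) = ⟨e⟩ ⊕ Z ⊕ R and the pairing Δ, the full automorphism group of R(α,ζ,Δ) is Aut(R(α,ζ,Δ)) = { id_{⟨e⟩} ⊕ (g*)^{-1} ⊕ g : g ∈ Aut(R) }, where for g ∈ GL(R) the conjugate g* ∈ GL(Z) is defined by Δ(g*(z), a) = Δ(z, g(a)) for all z ∈ Z, a ∈ R. -/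
/-!
Right multiplication `T = (· * e)` by the left identity acts on `⟨e⟩`, `Z`, `R` by the distinct
nonzero scalars `1`, `ζ`, `α`, so `T` is injective and `Z`, `R` are exactly its `ζ`- and
`α`-eigenspaces. An automorphism `σ` satisfies `T (σ e) = σ (e · σ⁻¹ e) = e = T e`, hence fixes `e`,
hence commutes with `T` and restricts to automorphisms `h` of `Z` and `g` of `R`.
Multiplicativity of `σ` on `R × R` and `Z × R` says that `g ∈ Aut R` and `Δ (h z) (g a) = Δ z a`.
Conversely, such a `σ` preserves all products of the generators `e`, `Z`, `R`, hence all
products by bilinearity.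
-/

namespace Module.End

variable {K V : Type*} [Field K] [AddCommGroup V] [Module K V]

theorem eigenspace_eq_biSup_of_iSup_eq_top {ι : Type*} {W : ι → Submodule K V}
    (hW : ⨆ i, W i = ⊤) {T : End K V} {μ : ι → K} (hT : ∀ i, W i ≤ T.eigenspace (μ i))
    (c : K) : T.eigenspace c = ⨆ (i) (_ : μ i = c), W i := by
  have hle : ⨆ (i) (_ : μ i = c), W i ≤ T.eigenspace c :=
    iSup₂_le fun i hi => hi ▸ hT i
  have hdisj : T.eigenspace c ⊓ ⨆ (i) (_ : μ i ≠ c), W i = ⊥ :=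
    ((T.eigenspaces_iSupIndep c).mono_right <|
      iSup₂_le fun i hi => (hT i).trans (le_iSup₂_of_le (μ i) hi le_rfl)).eq_bot
  calc T.eigenspace c = (⨆ i, W i) ⊓ T.eigenspace c := by rw [hW, top_inf_eq]
    _ = ⨆ (i) (_ : μ i = c), W i := by
        rw [iSup_split _ (μ · = c), sup_inf_assoc_of_le _ hle, inf_comm, hdisj, sup_bot_eq]

theorem eigenspace_eq_of_iSup_eq_top {ι : Type*} {W : ι → Submodule K V}
    (hW : ⨆ i, W i = ⊤) {T : End K V} {μ : ι → K} (hT : ∀ i, W i ≤ T.eigenspace (μ i))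
    (hμ : Function.Injective μ) (i : ι) : T.eigenspace (μ i) = W i := by
  simp only [eigenspace_eq_biSup_of_iSup_eq_top hW hT, hμ.eq_iff, iSup_iSup_eq_left]

theorem eigenspace_eq_bot_of_iSup_eq_top {ι : Type*} {W : ι → Submodule K V}
    (hW : ⨆ i, W i = ⊤) {T : End K V} {μ : ι → K} (hT : ∀ i, W i ≤ T.eigenspace (μ i))
    {c : K} (hc : ∀ i, μ i ≠ c) : T.eigenspace c = ⊥ := by
  simp [eigenspace_eq_biSup_of_iSup_eq_top hW hT, hc]

theorem map_eigenspace_of_commute {T : End K V} (σ : V ≃ₗ[K] V) (hσ : ∀ x, T (σ x) = σ (T x))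
    (c : K) : (T.eigenspace c).map (σ : V →ₗ[K] V) = T.eigenspace c := by
  ext y
  rw [Submodule.mem_map_equiv, mem_eigenspace_iff, mem_eigenspace_iff]
  constructor
  · intro h
    simpa [h] using hσ (σ.symm y)
  · intro h
    apply σ.injective
    rw [← hσ, map_smul, σ.apply_symm_apply, h]

end Module.End

theorem LinearMap.ext_on₂ {R M N P : Type*} [CommSemiring R] [AddCommMonoid M] [Module R M]
    [AddCommMonoid N] [Module R N] [AddCommMonoid P] [Module R P] {s : Set M} {t : Set N}
    {B B' : M →ₗ[R] N →ₗ[R] P} (hs : Submodule.span R s = ⊤) (ht : Submodule.span R t = ⊤)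
    (h : ∀ x ∈ s, ∀ y ∈ t, B x y = B' x y) : B = B' :=
  LinearMap.ext_on hs fun x hx => LinearMap.ext_on ht fun y hy => h x hx y hy

theorem LinearEquiv.exists_restrict_of_map_range_eq {R M N : Type*} [Ring R] [AddCommGroup M]
    [Module R M] [AddCommGroup N] [Module R N] {j : M →ₗ[R] N} (hj : Function.Injective j)
    (σ : N ≃ₗ[R] N) (hσ : (LinearMap.range j).map (σ : N →ₗ[R] N) = LinearMap.range j) :
    ∃ h : M ≃ₗ[R] M, ∀ x, σ (j x) = j (h x) :=
  ⟨(LinearEquiv.ofInjective j hj).trans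
      ((σ.ofSubmodules _ _ hσ).trans (LinearEquiv.ofInjective j hj).symm), fun x => by simp⟩

section

variable {F R Z P : Type*} [Field F] [AddCommGroup R] [Module F R] [AddCommGroup Z] [Module F Z]
  [AddCommGroup P] [Module F P] {mR : R →ₗ[F] R →ₗ[F] R} {Δ : Z →ₗ[F] R →ₗ[F] F}
  {mul : P →ₗ[F] P →ₗ[F] P} {e : P} {jZ : Z →ₗ[F] P} {jR : R →ₗ[F] P} {α ζ : F}

theorem le_eigenspace_mul_flip (hleft : ∀ x, mul e x = x)
    (hZe : ∀ z, mul (jZ z) e = ζ • jZ z) (hRe : ∀ a, mul (jR a) e = α • jR a) (i : Fin 3) :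
    ![Submodule.span F {e}, LinearMap.range jZ, LinearMap.range jR] i ≤
      Module.End.eigenspace (mul.flip e) (![1, ζ, α] i) := by
  fin_cases i
  · simpa [Module.End.mem_eigenspace_iff] using hleft e
  · rintro _ ⟨z, rfl⟩
    simpa [Module.End.mem_eigenspace_iff] using hZe z
  · rintro _ ⟨a, rfl⟩
    simpa [Module.End.mem_eigenspace_iff] using hRe a

theorem injective_mul_flip
    (hspan : ⨆ i, ![Submodule.span F {e}, LinearMap.range jZ, LinearMap.range jR] i = ⊤)
    (hleft : ∀ x, mul e x = x) (hZe : ∀ z, mul (jZ z) e = ζ • jZ z)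
    (hRe : ∀ a, mul (jR a) e = α • jR a) (hα0 : α ≠ 0) (hζ0 : ζ ≠ 0) :
    Function.Injective (mul.flip e) := by
  rw [← LinearMap.ker_eq_bot, ← Module.End.eigenspace_zero]
  refine Module.End.eigenspace_eq_bot_of_iSup_eq_top hspan
    (le_eigenspace_mul_flip hleft hZe hRe) fun i => ?_
  fin_cases i <;> simp [hα0, hζ0]

theorem eigenspace_mul_flip_eq_range
    (hspan : ⨆ i, ![Submodule.span F {e}, LinearMap.range jZ, LinearMap.range jR] i = ⊤)
    (hleft : ∀ x, mul e x = x) (hZe : ∀ z, mul (jZ z) e = ζ • jZ z)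
    (hRe : ∀ a, mul (jR a) e = α • jR a) (hα1 : α ≠ 1) (hζ1 : ζ ≠ 1) (hαζ : α ≠ ζ) :
    Module.End.eigenspace (mul.flip e) ζ = LinearMap.range jZ ∧
      Module.End.eigenspace (mul.flip e) α = LinearMap.range jR := by
  have hμ : Function.Injective ![1, ζ, α] := by
    intro i j
    fin_cases i <;> fin_cases j <;> simp [hα1, hζ1, hαζ, hα1.symm, hζ1.symm, hαζ.symm]
  have hT := le_eigenspace_mul_flip hleft hZe hRe
  exact ⟨Module.End.eigenspace_eq_of_iSup_eq_top hspan hT hμ 1,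
    Module.End.eigenspace_eq_of_iSup_eq_top hspan hT hμ 2⟩

theorem exists_restrict_of_map_mul (hjZ : Function.Injective jZ) (hjR : Function.Injective jR)
    (he : e ≠ 0) (hleft : ∀ x, mul e x = x) (hRR : ∀ a b, mul (jR a) (jR b) = jR (mR a b))
    (hZR : ∀ z a, mul (jZ z) (jR a) = Δ z a • e) (hinj : Function.Injective (mul.flip e))
    (hTZ : Module.End.eigenspace (mul.flip e) ζ = LinearMap.range jZ)
    (hTR : Module.End.eigenspace (mul.flip e) α = LinearMap.range jR)
    (σ : P ≃ₗ[F] P) (hσ : ∀ x y, σ (mul x y) = mul (σ x) (σ y)) :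
    ∃ (g : R ≃ₗ[F] R) (h : Z ≃ₗ[F] Z),
      (∀ a b, g (mR a b) = mR (g a) (g b)) ∧ (∀ z a, Δ (h z) (g a) = Δ z a) ∧
      σ e = e ∧ (∀ z, σ (jZ z) = jZ (h z)) ∧ (∀ a, σ (jR a) = jR (g a)) := by
  have hσe : σ e = e := hinj <| by
    change mul (σ e) e = mul e e
    simpa [hleft] using (hσ e (σ.symm e)).symm
  have hσT : ∀ x, mul.flip e (σ x) = σ (mul.flip e x) := fun x => by
    change mul (σ x) e = σ (mul x e)
    rw [hσ, hσe]
  obtain ⟨h, hh⟩ := LinearEquiv.exists_restrict_of_map_range_eq hjZ σ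
    (hTZ ▸ Module.End.map_eigenspace_of_commute σ hσT ζ)
  obtain ⟨g, hg⟩ := LinearEquiv.exists_restrict_of_map_range_eq hjR σ
    (hTR ▸ Module.End.map_eigenspace_of_commute σ hσT α)
  refine ⟨g, h, fun a b => hjR ?_, fun z a => smul_left_injective F he ?_, hσe, hh, hg⟩
  · rw [← hg, ← hRR, hσ, hg, hg, hRR]
  · calc Δ (h z) (g a) • e = mul (jZ (h z)) (jR (g a)) := (hZR _ _).symm
      _ = σ (mul (jZ z) (jR a)) := by rw [hσ, hh, hg]
      _ = Δ z a • e := by rw [hZR, map_smul, hσe]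

theorem map_mul_of_restrict
    (hspan : ⨆ i, ![Submodule.span F {e}, LinearMap.range jZ, LinearMap.range jR] i = ⊤)
    (hleft : ∀ x, mul e x = x) (hZe : ∀ z, mul (jZ z) e = ζ • jZ z)
    (hRe : ∀ a, mul (jR a) e = α • jR a) (hRR : ∀ a b, mul (jR a) (jR b) = jR (mR a b))
    (hZZ : ∀ z w, mul (jZ z) (jZ w) = 0) (hRZ : ∀ a z, mul (jR a) (jZ z) = 0)
    (hZR : ∀ z a, mul (jZ z) (jR a) = Δ z a • e) {σ : P ≃ₗ[F] P} {g : R ≃ₗ[F] R}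
    {h : Z ≃ₗ[F] Z} (hg : ∀ a b, g (mR a b) = mR (g a) (g b))
    (hpair : ∀ z a, Δ (h z) (g a) = Δ z a) (hσe : σ e = e) (hσZ : ∀ z, σ (jZ z) = jZ (h z))
    (hσR : ∀ a, σ (jR a) = jR (g a)) (x y : P) :
    σ (mul x y) = mul (σ x) (σ y) := by
  suffices mul.compr₂ (σ : P →ₗ[F] P) = mul.compl₁₂ (σ : P →ₗ[F] P) (σ : P →ₗ[F] P) from
    LinearMap.congr_fun₂ this x y
  have hgen : Submodule.span F
      (insert e ((LinearMap.range jZ : Set P) ∪ LinearMap.range jR)) = ⊤ := by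
    rw [← hspan, iSup_fin_three, Submodule.span_insert, Submodule.span_union,
      Submodule.span_eq, Submodule.span_eq, sup_assoc]
    rfl
  refine LinearMap.ext_on₂ hgen hgen ?_
  rintro _ (rfl | ⟨z, rfl⟩ | ⟨a, rfl⟩) _ (rfl | ⟨w, rfl⟩ | ⟨b, rfl⟩) <;>
    simp [hleft, hZe, hRe, hRR, hZZ, hRZ, hZR, hσe, hσZ, hσR, hg, hpair]

end

theorem stmt9_general {F R Z P : Type*} [Field F]
    [AddCommGroup R] [Module F R] [Nontrivial R]
    [AddCommGroup Z] [Module F Z]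
    [AddCommGroup P] [Module F P]
    (mR : R →ₗ[F] R →ₗ[F] R)
    (α ζ : F) (hα0 : α ≠ 0) (hζ0 : ζ ≠ 0) (hα1 : α ≠ 1) (hζ1 : ζ ≠ 1) (hαζ : α ≠ ζ)
    (Δ : Z →ₗ[F] R →ₗ[F] F)
    (mul : P →ₗ[F] P →ₗ[F] P) (e : P)
    (jZ : Z →ₗ[F] P) (hjZ : Function.Injective jZ)
    (jR : R →ₗ[F] P) (hjR : Function.Injective jR)
    (hinternal : DirectSum.IsInternal
      ![Submodule.span F {e}, LinearMap.range jZ, LinearMap.range jR])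
    (hleft : ∀ x : P, mul e x = x)
    (hZe : ∀ z : Z, mul (jZ z) e = ζ • jZ z)
    (hRe : ∀ a : R, mul (jR a) e = α • jR a)
    (hRR : ∀ a b : R, mul (jR a) (jR b) = jR (mR a b))
    (hZZ : ∀ z w : Z, mul (jZ z) (jZ w) = 0)
    (hRZ : ∀ (a : R) (z : Z), mul (jR a) (jZ z) = 0)
    (hZR : ∀ (z : Z) (a : R), mul (jZ z) (jR a) = Δ z a • e) :
    ∀ σ : P ≃ₗ[F] P,
      (∀ x y : P, σ (mul x y) = mul (σ x) (σ y)) ↔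
        ∃ (g : R ≃ₗ[F] R) (h : Z ≃ₗ[F] Z),
          (∀ a b : R, g (mR a b) = mR (g a) (g b)) ∧
          (∀ (z : Z) (a : R), Δ (h z) (g a) = Δ z a) ∧
          σ e = e ∧ (∀ z : Z, σ (jZ z) = jZ (h z)) ∧ (∀ a : R, σ (jR a) = jR (g a)) := by
  have hspan := hinternal.submodule_iSup_eq_top
  have he : e ≠ 0 := by
    obtain ⟨a, ha⟩ := exists_ne (0 : R)
    rintro rfl
    exact ha (hjR (by simpa using (hleft (jR a)).symm))
  obtain ⟨hTZ, hTR⟩ := eigenspace_mul_flip_eq_range hspan hleft hZe hRe hα1 hζ1 hαζ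
  have hinj := injective_mul_flip hspan hleft hZe hRe hα0 hζ0
  refine fun σ => ⟨exists_restrict_of_map_mul hjZ hjR he hleft hRR hZR hinj hTZ hTR σ, ?_⟩
  rintro ⟨g, h, hg, hpair, hσe, hσZ, hσR⟩
  exact map_mul_of_restrict hspan hleft hZe hRe hRR hZZ hRZ hZR hg hpair hσe hσZ hσR

/-- **Proposition 7** (Gordeev–Popov): with `P = R(α,ζ,Δ) = ⟨e⟩ ⊕ Z ⊕ R` the algebra
defined as in the context (|F| ≥ 4, `e` a left identity, `Z`, `R` eigenspaces of right
multiplication by `e` with nonzero eigenvalues `ζ ≠ α`, both ≠ 1, `R` a subalgebra, `Z` a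
subalgebra with zero multiplication, `a·z = 0`, `z·a = Δ(z,a)·e`), the automorphisms of
`P` are exactly the maps `id_{⟨e⟩} ⊕ (g*)⁻¹ ⊕ g` with `g ∈ Aut(R)`, where
`g* ∈ GL(Z)` is the conjugate of `g` with respect to the nondegenerate pairing `Δ`
(`h = (g*)⁻¹` being characterized by `Δ(h z, g a) = Δ(z, a)` for all `z, a`). -/
theorem stmt9 {F R Z P : Type*} [Field F]
    [AddCommGroup R] [Module F R] [FiniteDimensional F R] [Nontrivial R]
    [AddCommGroup Z] [Module F Z] [FiniteDimensional F Z]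
    [AddCommGroup P] [Module F P]
    (hF : (4 : Cardinal) ≤ Cardinal.mk F)
    (hdim : Module.finrank F Z = Module.finrank F R)
    (mR : R →ₗ[F] R →ₗ[F] R)
    (α ζ : F) (hα0 : α ≠ 0) (hζ0 : ζ ≠ 0) (hα1 : α ≠ 1) (hζ1 : ζ ≠ 1) (hαζ : α ≠ ζ)
    (Δ : Z →ₗ[F] R →ₗ[F] F) (hΔ : Δ.Nondegenerate)
    (mul : P →ₗ[F] P →ₗ[F] P) (e : P)
    (jZ : Z →ₗ[F] P) (hjZ : Function.Injective jZ)
    (jR : R →ₗ[F] P) (hjR : Function.Injective jR)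
    (hinternal : DirectSum.IsInternal
      ![Submodule.span F {e}, LinearMap.range jZ, LinearMap.range jR])
    (hleft : ∀ x : P, mul e x = x)
    (hZe : ∀ z : Z, mul (jZ z) e = ζ • jZ z)
    (hRe : ∀ a : R, mul (jR a) e = α • jR a)
    (hRR : ∀ a b : R, mul (jR a) (jR b) = jR (mR a b))
    (hZZ : ∀ z w : Z, mul (jZ z) (jZ w) = 0)
    (hRZ : ∀ (a : R) (z : Z), mul (jR a) (jZ z) = 0)
    (hZR : ∀ (z : Z) (a : R), mul (jZ z) (jR a) = Δ z a • e) :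
    ∀ σ : P ≃ₗ[F] P,
      (∀ x y : P, σ (mul x y) = mul (σ x) (σ y)) ↔
        ∃ (g : R ≃ₗ[F] R) (h : Z ≃ₗ[F] Z),
          (∀ a b : R, g (mR a b) = mR (g a) (g b)) ∧
          (∀ (z : Z) (a : R), Δ (h z) (g a) = Δ z a) ∧
          σ e = e ∧ (∀ z : Z, σ (jZ z) = jZ (h z)) ∧ (∀ a : R, σ (jR a) = jR (g a)) :=
  stmt9_general mR α ζ hα0 hζ0 hα1 hζ1 hαζ Δ mul e jZ hjZ jR hjR hinternal hleft hZe hRe hRR hZZ hRZ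
    hZR
end

section
/- Let R(α,ζ,Δ) be the algebra defined in the context. Then every automorphism of R(α,ζ,Δ) maps the subalgebra R onto itself, and the restriction map Aut(R(α,ζ,Δ)) → Aut(R), σ ↦ σ|_R, is a group isomorphism. -/
/-- An `F`-linear automorphism `σ` of a nonassociative algebra given by a bilinear
multiplication `m` is multiplicative. -/
def IsMulAut {F A : Type*} [Field F] [AddCommGroup A] [Module F A]
    (m : A →ₗ[F] A →ₗ[F] A) (σ : A ≃ₗ[F] A) : Prop :=
  ∀ x y : A, σ (m x y) = m (σ x) (σ y)

/-- The full automorphism group of the nonassociative algebra `(A, m)`, as a subgroup of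
the group of linear automorphisms of `A`. -/
def autGroup {F A : Type*} [Field F] [AddCommGroup A] [Module F A]
    (m : A →ₗ[F] A →ₗ[F] A) : Subgroup (A ≃ₗ[F] A) where
  carrier := {σ | IsMulAut m σ}
  one_mem' := fun _ _ => rfl
  mul_mem' := by
    intro σ τ hσ hτ x y
    have : (σ * τ) = τ.trans σ := rfl
    simp only [this, LinearEquiv.trans_apply, hτ x y, hσ (τ x) (τ y)]
  inv_mem' := by
    intro σ hσ x y
    have h : (σ⁻¹ : A ≃ₗ[F] A) = σ.symm := rfl
    rw [h]
    apply σ.injective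
    rw [σ.apply_symm_apply, hσ (σ.symm x) (σ.symm y), σ.apply_symm_apply,
      σ.apply_symm_apply]

/-- **Properties (4.2)(iv),(v)** (Gordeev–Popov): with `P = R(α,ζ,Δ) = ⟨e⟩ ⊕ Z ⊕ R` the
algebra defined as in the context (|F| ≥ 4, `e` a left identity, `Z`, `R` eigenspaces of
right multiplication by `e` with nonzero eigenvalues `ζ ≠ α`, both ≠ 1, `R` a subalgebra,
`Z` a subalgebra with zero multiplication, `a·z = 0`, `z·a = Δ(z,a)·e`), every
automorphism of `P` maps the subalgebra `R` onto itself, and the restriction map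
`Aut(P) → Aut(R)`, `σ ↦ σ|_R`, is a group isomorphism. -/
theorem stmt10 {F R Z P : Type*} [Field F]
    [AddCommGroup R] [Module F R] [FiniteDimensional F R] [Nontrivial R]
    [AddCommGroup Z] [Module F Z] [FiniteDimensional F Z]
    [AddCommGroup P] [Module F P]
    (hF : (4 : Cardinal) ≤ Cardinal.mk F)
    (hdim : Module.finrank F Z = Module.finrank F R)
    (mR : R →ₗ[F] R →ₗ[F] R)
    (α ζ : F) (hα0 : α ≠ 0) (hζ0 : ζ ≠ 0) (hα1 : α ≠ 1) (hζ1 : ζ ≠ 1) (hαζ : α ≠ ζ)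
    (Δ : Z →ₗ[F] R →ₗ[F] F) (hΔ : Δ.Nondegenerate)
    (mul : P →ₗ[F] P →ₗ[F] P) (e : P)
    (jZ : Z →ₗ[F] P) (hjZ : Function.Injective jZ)
    (jR : R →ₗ[F] P) (hjR : Function.Injective jR)
    (hinternal : DirectSum.IsInternal
      ![Submodule.span F {e}, LinearMap.range jZ, LinearMap.range jR])
    (hleft : ∀ x : P, mul e x = x)
    (hZe : ∀ z : Z, mul (jZ z) e = ζ • jZ z)
    (hRe : ∀ a : R, mul (jR a) e = α • jR a)
    (hRR : ∀ a b : R, mul (jR a) (jR b) = jR (mR a b))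
    (hZZ : ∀ z w : Z, mul (jZ z) (jZ w) = 0)
    (hRZ : ∀ (a : R) (z : Z), mul (jR a) (jZ z) = 0)
    (hZR : ∀ (z : Z) (a : R), mul (jZ z) (jR a) = Δ z a • e) :
    (∀ σ ∈ autGroup mul,
        Submodule.map (σ : P ≃ₗ[F] P).toLinearMap (LinearMap.range jR)
          = LinearMap.range jR) ∧
    ∃ φ : autGroup mul ≃* autGroup mR,
        ∀ (σ : autGroup mul) (a : R),
          (σ : P ≃ₗ[F] P) (jR a) = jR (((φ σ : R ≃ₗ[F] R)) a) := by

  classical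
  obtain ⟨hind, hsup⟩ :=
    (DirectSum.isInternal_submodule_iff_iSupIndep_and_iSup_eq_top _).mp hinternal
  -- `e ≠ 0`
  have he0 : e ≠ 0 := by
    obtain ⟨a, ha⟩ := exists_ne (0 : R)
    intro h
    apply ha
    apply hjR
    rw [map_zero, ← hleft (jR a), h, map_zero, LinearMap.zero_apply]
  -- disjointness facts
  have hd0 : Disjoint (Submodule.span F {e}) (LinearMap.range jZ ⊔ LinearMap.range jR) := by
    have h := hind 0
    refine h.mono_right (sup_le ?_ ?_)
    · exact le_iSup₂ (f := fun (j : Fin 3) (_ : j ≠ 0) =>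
        ![Submodule.span F {e}, LinearMap.range jZ, LinearMap.range jR] j) 1 (by decide)
    · exact le_iSup₂ (f := fun (j : Fin 3) (_ : j ≠ 0) =>
        ![Submodule.span F {e}, LinearMap.range jZ, LinearMap.range jR] j) 2 (by decide)
  have hd1 : Disjoint (LinearMap.range jZ) (Submodule.span F {e} ⊔ LinearMap.range jR) := by
    have h := hind 1
    refine h.mono_right (sup_le ?_ ?_)
    · exact le_iSup₂ (f := fun (j : Fin 3) (_ : j ≠ 1) =>
        ![Submodule.span F {e}, LinearMap.range jZ, LinearMap.range jR] j) 0 (by decide)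
    · exact le_iSup₂ (f := fun (j : Fin 3) (_ : j ≠ 1) =>
        ![Submodule.span F {e}, LinearMap.range jZ, LinearMap.range jR] j) 2 (by decide)
  have htop : Submodule.span F {e} ⊔ LinearMap.range jZ ⊔ LinearMap.range jR = ⊤ := by
    refine le_antisymm le_top ?_
    rw [← hsup]
    refine iSup_le ?_
    intro i
    fin_cases i
    · exact le_sup_of_le_left le_sup_left
    · exact le_sup_of_le_left le_sup_right
    · exact le_sup_right
  -- existence of decompositions
  have hdec : ∀ x : P, ∃ c : F, ∃ z : Z, ∃ a : R, x = c • e + jZ z + jR a := by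
    intro x
    have hx : x ∈ Submodule.span F {e} ⊔ LinearMap.range jZ ⊔ LinearMap.range jR := by
      rw [htop]; trivial
    obtain ⟨y, hy, w, hw, hywx⟩ := Submodule.mem_sup.mp hx
    obtain ⟨u, hu, v, hv, huvy⟩ := Submodule.mem_sup.mp hy
    obtain ⟨c, hc⟩ := Submodule.mem_span_singleton.mp hu
    obtain ⟨z, hz⟩ := hv
    obtain ⟨a, ha⟩ := hw
    exact ⟨c, z, a, by rw [hc, hz, ha, huvy, hywx]⟩
  -- uniqueness of decompositions
  have huniq0 : ∀ (c : F) (z : Z) (a : R), c • e + jZ z + jR a = 0 → c = 0 ∧ z = 0 ∧ a = 0 := by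
    intro c z a h
    have hce : c • e = 0 := by
      have hmem : c • e ∈ LinearMap.range jZ ⊔ LinearMap.range jR := by
        have h' : c • e = -(jZ z + jR a) := by
          rw [add_assoc] at h
          exact eq_neg_of_add_eq_zero_left h
        rw [h']
        exact neg_mem (add_mem (Submodule.mem_sup_left ⟨z, rfl⟩)
          (Submodule.mem_sup_right ⟨a, rfl⟩))
      exact (Submodule.disjoint_def.mp hd0) (c • e)
        (Submodule.smul_mem _ c (Submodule.mem_span_singleton_self e)) hmem
    have hc : c = 0 := by
      rcases smul_eq_zero.mp hce with h' | h'
      · exact h'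
      · exact absurd h' he0
    have hza : jZ z + jR a = 0 := by
      rw [hce, zero_add] at h; exact h
    have hjz : jZ z = 0 := by
      have hmem : jZ z ∈ Submodule.span F {e} ⊔ LinearMap.range jR := by
        have h' : jZ z = -(jR a) := eq_neg_of_add_eq_zero_left hza
        rw [h']
        exact neg_mem (Submodule.mem_sup_right ⟨a, rfl⟩)
      exact (Submodule.disjoint_def.mp hd1) (jZ z) ⟨z, rfl⟩ hmem
    have hz : z = 0 := hjZ (by rw [hjz, map_zero])
    have hja : jR a = 0 := by
      rw [hjz, zero_add] at hza; exact hza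
    exact ⟨hc, hz, hjR (by rw [hja, map_zero])⟩
  have huniq : ∀ (c c' : F) (z z' : Z) (a a' : R),
      c • e + jZ z + jR a = c' • e + jZ z' + jR a' → c = c' ∧ z = z' ∧ a = a' := by
    intro c c' z z' a a' h
    have h0 : (c - c') • e + jZ (z - z') + jR (a - a') = 0 := by
      rw [sub_smul, map_sub, map_sub,
        show c • e - c' • e + (jZ z - jZ z') + (jR a - jR a')
          = c • e + jZ z + jR a - (c' • e + jZ z' + jR a') from by abel, h, sub_self]
    obtain ⟨h1, h2, h3⟩ := huniq0 _ _ _ h0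
    exact ⟨sub_eq_zero.mp h1, sub_eq_zero.mp h2, sub_eq_zero.mp h3⟩
  -- linear projections
  choose cF zF aF hdecs using hdec
  have hcomp : ∀ (x : P) (c : F) (z : Z) (a : R),
      x = c • e + jZ z + jR a → cF x = c ∧ zF x = z ∧ aF x = a :=
    fun x c z a h => huniq _ _ _ _ _ _ ((hdecs x).symm.trans h)
  have hadd : ∀ x y : P, cF (x + y) = cF x + cF y ∧ zF (x + y) = zF x + zF y ∧
      aF (x + y) = aF x + aF y := by
    intro x y
    refine hcomp _ _ _ _ ?_
    conv_lhs => rw [hdecs x, hdecs y]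
    rw [add_smul, map_add, map_add]
    abel
  have hsmul : ∀ (c : F) (x : P), cF (c • x) = c * cF x ∧ zF (c • x) = c • zF x ∧
      aF (c • x) = c • aF x := by
    intro c x
    refine hcomp _ _ _ _ ?_
    conv_lhs => rw [hdecs x]
    rw [smul_add, smul_add, smul_smul, map_smul, map_smul]
  have hproj : ∃ (pe : P →ₗ[F] F) (pz : P →ₗ[F] Z) (pr : P →ₗ[F] R),
      ∀ x, x = pe x • e + jZ (pz x) + jR (pr x) := by
    refine ⟨⟨⟨cF, fun x y => (hadd x y).1⟩, fun c x => by simpa using (hsmul c x).1⟩,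
      ⟨⟨zF, fun x y => (hadd x y).2.1⟩, fun c x => by simpa using (hsmul c x).2.1⟩,
      ⟨⟨aF, fun x y => (hadd x y).2.2⟩, fun c x => by simpa using (hsmul c x).2.2⟩,
      hdecs⟩
  obtain ⟨pe, pz, pr, hp⟩ := hproj
  have hpcomp : ∀ (x : P) (c : F) (z : Z) (a : R),
      x = c • e + jZ z + jR a → pe x = c ∧ pz x = z ∧ pr x = a :=
    fun x c z a h => huniq _ _ _ _ _ _ ((hp x).symm.trans h)
  clear hcomp hadd hsmul hdecs huniq0 hd0 hd1 htop hind hsup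
  have hdec' : ∀ x : P, ∃ c : F, ∃ z : Z, ∃ a : R, x = c • e + jZ z + jR a :=
    fun x => ⟨_, _, _, hp x⟩
  -- multiplication with e on the right, in coordinates
  have hmul_e : ∀ (c : F) (z : Z) (a : R),
      mul (c • e + jZ z + jR a) e = c • e + jZ (ζ • z) + jR (α • a) := by
    intro c z a
    simp only [map_add, map_smul, LinearMap.add_apply, LinearMap.smul_apply,
      hZe, hRe, hleft]
  -- scalar cancellation on e
  have hcancel : ∀ s t : F, s • e = t • e → s = t := by
    intro s t h
    have h0 : (s - t) • e = 0 := by rw [sub_smul, h, sub_self]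
    rcases smul_eq_zero.mp h0 with h' | h'
    · exact sub_eq_zero.mp h'
    · exact absurd h' he0
  -- every automorphism fixes e
  have hfix : ∀ σ : P ≃ₗ[F] P, IsMulAut mul σ → σ e = e := by
    intro σ hσ
    have h1 : mul (σ e) e = e := by
      have h2 := hσ e (σ.symm e)
      rw [hleft, σ.apply_symm_apply] at h2
      exact h2.symm
    obtain ⟨c, z, a, hX⟩ := hdec' (σ e)
    rw [hX, hmul_e] at h1
    obtain ⟨hc, hz, ha⟩ := huniq c 1 (ζ • z) 0 (α • a) 0 (by rw [h1]; simp)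
    have hz0 : z = 0 := by
      rcases smul_eq_zero.mp hz with h' | h'
      · exact absurd h' hζ0
      · exact h'
    have ha0 : a = 0 := by
      rcases smul_eq_zero.mp ha with h' | h'
      · exact absurd h' hα0
      · exact h'
    rw [hX, hc, hz0, ha0]
    simp
  -- automorphisms preserve the R-eigenspace
  have hmapR : ∀ σ : P ≃ₗ[F] P, IsMulAut mul σ → ∀ a : R, ∃ b : R, σ (jR a) = jR b := by
    intro σ hσ a
    have h1 : mul (σ (jR a)) e = α • σ (jR a) := by
      have h2 := hσ (jR a) e
      rw [hRe, map_smul, hfix σ hσ] at h2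
      exact h2.symm
    obtain ⟨c, z, b, hX⟩ := hdec' (σ (jR a))
    rw [hX, hmul_e] at h1
    obtain ⟨hc, hz, -⟩ := huniq c (α * c) (ζ • z) (α • z) (α • b) (α • b)
      (h1.trans (by rw [smul_add, smul_add, smul_smul, map_smul, map_smul]))
    have hc0 : c = 0 := by
      have h3 : (1 - α) * c = 0 := by linear_combination hc
      rcases mul_eq_zero.mp h3 with h' | h'
      · exact absurd (by linear_combination -h') hα1
      · exact h'
    have hz0 : z = 0 := by
      have h3 : (ζ - α) • z = 0 := by rw [sub_smul, hz, sub_self]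
      rcases smul_eq_zero.mp h3 with h' | h'
      · exact absurd (by linear_combination -h') hαζ
      · exact h'
    exact ⟨b, by rw [hX, hc0, hz0]; simp⟩
  -- automorphisms preserve the Z-eigenspace
  have hmapZ : ∀ σ : P ≃ₗ[F] P, IsMulAut mul σ → ∀ z : Z, ∃ w : Z, σ (jZ z) = jZ w := by
    intro σ hσ z
    have h1 : mul (σ (jZ z)) e = ζ • σ (jZ z) := by
      have h2 := hσ (jZ z) e
      rw [hZe, map_smul, hfix σ hσ] at h2
      exact h2.symm
    obtain ⟨c, w, b, hX⟩ := hdec' (σ (jZ z))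
    rw [hX, hmul_e] at h1
    obtain ⟨hc, -, hb⟩ := huniq c (ζ * c) (ζ • w) (ζ • w) (α • b) (ζ • b)
      (h1.trans (by rw [smul_add, smul_add, smul_smul, map_smul, map_smul]))
    have hc0 : c = 0 := by
      have h3 : (1 - ζ) * c = 0 := by linear_combination hc
      rcases mul_eq_zero.mp h3 with h' | h'
      · exact absurd (by linear_combination -h') hζ1
      · exact h'
    have hb0 : b = 0 := by
      have h3 : (α - ζ) • b = 0 := by rw [sub_smul, hb, sub_self]
      rcases smul_eq_zero.mp h3 with h' | h'
      · exact absurd (by linear_combination h') hαζ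
      · exact h'
    exact ⟨w, by rw [hX, hc0, hb0]; simp⟩
  -- determination: automorphisms agreeing on R are equal
  have hdet : ∀ σ τ : P ≃ₗ[F] P, IsMulAut mul σ → IsMulAut mul τ →
      (∀ a : R, σ (jR a) = τ (jR a)) → σ = τ := by
    intro σ τ hσ hτ hag
    have hσs : IsMulAut mul σ.symm := (autGroup mul).inv_mem hσ
    have hZeq : ∀ z : Z, σ (jZ z) = τ (jZ z) := by
      intro z
      obtain ⟨w, hw⟩ := hmapZ σ hσ z
      obtain ⟨w', hw'⟩ := hmapZ τ hτ z
      have hkey : ∀ b : R, Δ w b = Δ w' b := by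
        intro b
        obtain ⟨a, ha⟩ := hmapR σ.symm hσs b
        have hab : σ (jR a) = jR b := by rw [← ha, σ.apply_symm_apply]
        have hab' : τ (jR a) = jR b := by rw [← hag, hab]
        have h1 : Δ w b • e = Δ z a • e := by
          have h := hσ (jZ z) (jR a)
          rw [hZR, map_smul, hfix σ hσ, hw, hab, hZR] at h
          exact h.symm
        have h2 : Δ w' b • e = Δ z a • e := by
          have h := hτ (jZ z) (jR a)
          rw [hZR, map_smul, hfix τ hτ, hw', hab', hZR] at h
          exact h.symm
        rw [hcancel _ _ h1, hcancel _ _ h2]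
      have hww' : w = w' := by
        have h0 : ∀ b : R, Δ (w - w') b = 0 := by
          intro b
          rw [map_sub, LinearMap.sub_apply, hkey, sub_self]
        exact sub_eq_zero.mp (hΔ.1 (w - w') h0)
      rw [hw, hw', hww']
    refine LinearEquiv.ext fun x => ?_
    conv_lhs => rw [hp x]
    conv_rhs => rw [hp x]
    simp only [map_add, map_smul, hfix σ hσ, hfix τ hτ, hZeq, hag]
  -- the restriction map
  have hres : ∀ σ : ↥(autGroup mul), ∃ τ : ↥(autGroup mR),
      ∀ a : R, (σ : P ≃ₗ[F] P) (jR a) = jR ((τ : R ≃ₗ[F] R) a) := by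
    intro σ
    have hσ : IsMulAut mul ↑σ := σ.2
    have hσs : IsMulAut mul (σ : P ≃ₗ[F] P).symm := (autGroup mul).inv_mem hσ
    choose B hB using hmapR ↑σ hσ
    choose B' hB' using hmapR (σ : P ≃ₗ[F] P).symm hσs
    have hBadd : ∀ a b : R, B (a + b) = B a + B b := by
      intro a b
      apply hjR
      rw [map_add, ← hB, ← hB, ← hB, map_add, map_add]
    have hBsmul : ∀ (c : F) (a : R), B (c • a) = c • B a := by
      intro c a
      apply hjR
      rw [map_smul, ← hB, ← hB, map_smul, map_smul]
    have hBB' : ∀ a : R, B' (B a) = a := by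
      intro a
      apply hjR
      rw [← hB', ← hB, (σ : P ≃ₗ[F] P).symm_apply_apply]
    have hB'B : ∀ a : R, B (B' a) = a := by
      intro a
      apply hjR
      rw [← hB, ← hB', (σ : P ≃ₗ[F] P).apply_symm_apply]
    have hB'add : ∀ a b : R, B' (a + b) = B' a + B' b := by
      intro a b
      apply hjR
      rw [map_add, ← hB', ← hB', ← hB', map_add, map_add]
    have hB'smul : ∀ (c : F) (a : R), B' (c • a) = c • B' a := by
      intro c a
      apply hjR
      rw [map_smul, ← hB', ← hB', map_smul, map_smul]
    let τL : R →ₗ[F] R := ⟨⟨B, hBadd⟩, fun c a => by simpa using hBsmul c a⟩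
    let τL' : R →ₗ[F] R := ⟨⟨B', hB'add⟩, fun c a => by simpa using hB'smul c a⟩
    have hmem : IsMulAut mR (LinearEquiv.ofLinear τL τL'
        (LinearMap.ext hB'B) (LinearMap.ext hBB')) := by
      intro a b
      apply hjR
      show jR (B (mR a b)) = jR (mR (B a) (B b))
      rw [← hB, ← hRR, hσ, hB, hB, hRR]
    exact ⟨⟨_, hmem⟩, fun a => hB a⟩
  choose Φ0 hΦ0 using hres
  -- injectivity of the restriction map
  have hinj : Function.Injective Φ0 := by
    intro σ σ' h
    have hσ : IsMulAut mul ↑σ := σ.2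
    have hσ' : IsMulAut mul ↑σ' := σ'.2
    refine Subtype.ext (hdet _ _ hσ hσ' fun a => ?_)
    rw [hΦ0 σ a, hΦ0 σ' a, h]
  -- surjectivity of the restriction map
  have hΔinj : Function.Injective Δ := by
    intro z w h
    have h0 : z - w = 0 := by
      refine hΔ.1 (z - w) fun b => ?_
      rw [map_sub, LinearMap.sub_apply, h, sub_self]
    exact sub_eq_zero.mp h0
  have hΔbij : Function.Bijective Δ := by
    refine ⟨hΔinj, ?_⟩
    have hfr : Module.finrank F Z = Module.finrank F (R →ₗ[F] F) := by
      rw [hdim]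
      exact (Subspace.dual_finrank_eq (K := F) (V := R)).symm
    exact (LinearMap.injective_iff_surjective_of_finrank_eq_finrank hfr).mp hΔinj
  have hpsi : ∀ t : R →ₗ[F] R, ∃ ψ : Z →ₗ[F] Z, ∀ (z : Z) (b : R),
      Δ (ψ z) b = Δ z (t b) := by
    intro t
    set d := LinearEquiv.ofBijective Δ hΔbij with hd
    refine ⟨d.symm.toLinearMap ∘ₗ (LinearMap.lcomp F F t) ∘ₗ Δ, fun z b => ?_⟩
    have h1 : Δ (d.symm (LinearMap.lcomp F F t (Δ z))) = LinearMap.lcomp F F t (Δ z) :=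
      d.apply_symm_apply _
    simp only [LinearMap.comp_apply, LinearEquiv.coe_coe]
    rw [h1]
    simp [LinearMap.lcomp_apply]
  have hsurj : ∀ τ : ↥(autGroup mR), ∃ σ : ↥(autGroup mul),
      ∀ a : R, (σ : P ≃ₗ[F] P) (jR a) = jR ((τ : R ≃ₗ[F] R) a) := by
    intro τ
    have hτ : IsMulAut mR ↑τ := τ.2
    obtain ⟨ψ, hψ⟩ := hpsi (τ : R ≃ₗ[F] R).symm.toLinearMap
    obtain ⟨ψ', hψ'⟩ := hpsi (τ : R ≃ₗ[F] R).toLinearMap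
    have hψψ' : ∀ z : Z, ψ' (ψ z) = z := by
      intro z
      apply hΔinj
      refine LinearMap.ext fun b => ?_
      rw [hψ', hψ]
      simp
    have hψ'ψ : ∀ z : Z, ψ (ψ' z) = z := by
      intro z
      apply hΔinj
      refine LinearMap.ext fun b => ?_
      rw [hψ, hψ']
      simp
    set L : P →ₗ[F] P :=
      pe.smulRight e + jZ ∘ₗ ψ ∘ₗ pz + jR ∘ₗ (τ : R ≃ₗ[F] R).toLinearMap ∘ₗ pr with hL
    set L' : P →ₗ[F] P :=
      pe.smulRight e + jZ ∘ₗ ψ' ∘ₗ pz + jR ∘ₗ (τ : R ≃ₗ[F] R).symm.toLinearMap ∘ₗ pr with hL'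
    have hLapp : ∀ x : P, L x = pe x • e + jZ (ψ (pz x)) + jR ((τ : R ≃ₗ[F] R) (pr x)) := by
      intro x
      simp [hL, LinearMap.add_apply, LinearMap.comp_apply, LinearMap.smulRight_apply]
    have hL'app : ∀ x : P, L' x = pe x • e + jZ (ψ' (pz x)) +
        jR ((τ : R ≃ₗ[F] R).symm (pr x)) := by
      intro x
      simp [hL', LinearMap.add_apply, LinearMap.comp_apply, LinearMap.smulRight_apply]
    have hce : pe e = 1 ∧ pz e = 0 ∧ pr e = 0 := hpcomp e 1 0 0 (by simp)
    have hcz : ∀ z : Z, pe (jZ z) = 0 ∧ pz (jZ z) = z ∧ pr (jZ z) = 0 :=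
      fun z => hpcomp (jZ z) 0 z 0 (by simp)
    have hcr : ∀ a : R, pe (jR a) = 0 ∧ pz (jR a) = 0 ∧ pr (jR a) = a :=
      fun a => hpcomp (jR a) 0 0 a (by simp)
    have hLe : L e = e := by rw [hLapp, hce.1, hce.2.1, hce.2.2]; simp
    have hLz : ∀ z : Z, L (jZ z) = jZ (ψ z) := by
      intro z
      rw [hLapp, (hcz z).1, (hcz z).2.1, (hcz z).2.2]
      simp
    have hLr : ∀ a : R, L (jR a) = jR ((τ : R ≃ₗ[F] R) a) := by
      intro a
      rw [hLapp, (hcr a).1, (hcr a).2.1, (hcr a).2.2]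
      simp
    have hL'e : L' e = e := by rw [hL'app, hce.1, hce.2.1, hce.2.2]; simp
    have hL'z : ∀ z : Z, L' (jZ z) = jZ (ψ' z) := by
      intro z
      rw [hL'app, (hcz z).1, (hcz z).2.1, (hcz z).2.2]
      simp
    have hL'r : ∀ a : R, L' (jR a) = jR ((τ : R ≃ₗ[F] R).symm a) := by
      intro a
      rw [hL'app, (hcr a).1, (hcr a).2.1, (hcr a).2.2]
      simp
    have hLL' : ∀ x : P, L (L' x) = x := by
      intro x
      conv_lhs => rw [hp x]
      simp only [map_add, map_smul, hL'e, hL'z, hL'r, hLe, hLz, hLr, hψ'ψ,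
        LinearEquiv.apply_symm_apply]
      exact (hp x).symm
    have hL'L : ∀ x : P, L' (L x) = x := by
      intro x
      conv_lhs => rw [hp x]
      simp only [map_add, map_smul, hLe, hLz, hLr, hL'e, hL'z, hL'r, hψψ',
        LinearEquiv.symm_apply_apply]
      exact (hp x).symm
    set σb : P ≃ₗ[F] P := LinearEquiv.ofLinear L L'
      (LinearMap.ext hLL') (LinearMap.ext hL'L) with hσb
    have hσbapp : ∀ x : P, σb x = L x := fun x => rfl
    have hmemb : IsMulAut mul σb := by
      intro x y
      obtain ⟨c, z, a, hX⟩ := hdec' x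
      obtain ⟨c', w, b, hY⟩ := hdec' y
      rw [hX, hY]
      have hΔψ : Δ (ψ z) ((τ : R ≃ₗ[F] R) b) = Δ z b := by
        rw [hψ]
        simp
      have hmulexp : ∀ (c c' : F) (z w : Z) (a b : R),
          mul (c • e + jZ z + jR a) (c' • e + jZ w + jR b) =
            (c * c') • e + c • jZ w + c • jR b + (c' * ζ) • jZ z + Δ z b • e +
              (c' * α) • jR a + jR (mR a b) := by
        intro c c' z w a b
        simp only [map_add, map_smul, LinearMap.add_apply, LinearMap.smul_apply,
          hleft, hZe, hRe, hRR, hZZ, hRZ, hZR]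
        module
      have hσbX : σb (c • e + jZ z + jR a) = c • e + jZ (ψ z) + jR ((τ : R ≃ₗ[F] R) a) := by
        simp only [hσbapp, map_add, map_smul, hLe, hLz, hLr]
      have hσbY : σb (c' • e + jZ w + jR b) = c' • e + jZ (ψ w) + jR ((τ : R ≃ₗ[F] R) b) := by
        simp only [hσbapp, map_add, map_smul, hLe, hLz, hLr]
      rw [hσbX, hσbY, hmulexp, hmulexp]
      simp only [hσbapp, map_add, map_smul, hLe, hLz, hLr]
      rw [hΔψ, hτ a b]
    refine ⟨⟨σb, hmemb⟩, fun a => ?_⟩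
    exact hLr a
  have hsurj' : Function.Surjective Φ0 := by
    intro τ
    obtain ⟨σ, hσ⟩ := hsurj τ
    refine ⟨σ, ?_⟩
    refine Subtype.ext (LinearEquiv.ext fun a => ?_)
    apply hjR
    rw [← hΦ0 σ a, hσ a]
  -- multiplicativity of the restriction map
  have hmul : ∀ σ σ' : ↥(autGroup mul), Φ0 (σ * σ') = Φ0 σ * Φ0 σ' := by
    intro σ σ'
    refine Subtype.ext (LinearEquiv.ext fun a => ?_)
    apply hjR
    have h1 : ((σ * σ' : ↥(autGroup mul)) : P ≃ₗ[F] P) (jR a)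
        = (σ : P ≃ₗ[F] P) ((σ' : P ≃ₗ[F] P) (jR a)) := rfl
    have h2 : ((Φ0 σ * Φ0 σ' : ↥(autGroup mR)) : R ≃ₗ[F] R) a
        = (Φ0 σ : R ≃ₗ[F] R) ((Φ0 σ' : R ≃ₗ[F] R) a) := rfl
    rw [← hΦ0, h1, hΦ0 σ', hΦ0 σ, h2]
  constructor
  · -- automorphisms map R onto R
    intro σ hσ
    have hσ' : IsMulAut mul σ := hσ
    have hσs : IsMulAut mul σ.symm := (autGroup mul).inv_mem hσ
    apply le_antisymm
    · rintro x hx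
      obtain ⟨y, ⟨a, rfl⟩, rfl⟩ := Submodule.mem_map.mp hx
      obtain ⟨b, hb⟩ := hmapR σ hσ' a
      exact ⟨b, hb.symm⟩
    · rintro x ⟨a, rfl⟩
      obtain ⟨b, hb⟩ := hmapR σ.symm hσs a
      refine Submodule.mem_map.mpr ⟨jZ (0 : Z) + jR b, ⟨b, by simp⟩, ?_⟩
      show σ (jZ 0 + jR b) = jR a
      rw [map_zero, zero_add, ← hb, σ.apply_symm_apply]
  · -- the group isomorphism
    refine ⟨MulEquiv.ofBijective (MonoidHom.mk' Φ0 hmul) ⟨hinj, hsurj'⟩, fun σ a => ?_⟩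
    exact hΦ0 σ a
end

section
/- Let R(α,ζ,Δ) be the algebra defined in the context. Then R(α,ζ,Δ) is absolutely simple: for every field extension E/F, the algebra R(α,ζ,Δ) ⊗_F E is simple (its multiplication is nonzero and it has no two-sided ideals other than 0 and itself). -/
/-!
Over `E`, the element `ε = 1 ⊗ e` is a left identity of `P_E = Eε ⊕ Z_E ⊕ R_E`, and right
multiplication by `ε` acts on the three summands by the distinct scalars `1`, `ζ`, `α`; so a
two-sided ideal contains every component of each of its elements. Nondegeneracy of `Δ` survives
base change, hence every nonzero element of `Z_E` has a right multiple, and every nonzero element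
of `R_E` a left multiple, equal to `ε`. Thus a nonzero ideal contains the left identity `ε`.
-/

open scoped TensorProduct

theorem Module.Dual.exists_baseChange_apply_ne_zero {R A V : Type*} [CommRing R] [CommRing A]
    [Algebra R A] [AddCommGroup V] [Module R V] [Module.Free R V] {ξ : A ⊗[R] V} (hξ : ξ ≠ 0) :
    ∃ φ : Module.Dual R V, φ.baseChange A ξ ≠ 0 := by
  let b := Module.Free.chooseBasis R V
  obtain ⟨i, hi⟩ : ∃ i, (b.baseChange A).repr ξ i ≠ 0 := by
    by_contra! h
    exact hξ ((b.baseChange A).repr.map_eq_zero_iff.mp (Finsupp.ext h))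
  have hcoord : Module.Dual.baseChange A (b.coord i) = (b.baseChange A).coord i :=
    (b.baseChange A).ext fun j => by simp [Finsupp.single_apply]
  exact ⟨b.coord i, by rwa [hcoord]⟩

theorem LinearMap.baseChange_smulRight_apply {R A M P : Type*} [CommRing R] [CommRing A]
    [Algebra R A] [AddCommGroup M] [Module R M] [AddCommGroup P] [Module R P]
    (φ : Module.Dual R M) (x : P) (ξ : A ⊗[R] M) :
    (φ.smulRight x).baseChange A ξ = φ.baseChange A ξ • (1 ⊗ₜ x) := by
  induction ξ using TensorProduct.induction_on with
  | zero => simp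
  | tmul a m => simp [TensorProduct.tmul_smul, TensorProduct.smul_tmul']
  | add ξ η hξ hη => simp only [map_add, hξ, hη, add_smul]

theorem LinearMap.range_baseChange {R A M N : Type*} [CommRing R] [CommRing A] [Algebra R A]
    [AddCommGroup M] [Module R M] [AddCommGroup N] [Module R N] (f : M →ₗ[R] N) :
    range (f.baseChange A) = (range f).baseChange A := by
  rw [Submodule.baseChange, ← range_comp_of_range_eq_top (f := f.rangeRestrict.baseChange A) _
    (range_eq_top.mpr (lTensor_surjective A f.surjective_rangeRestrict)), ← baseChange_comp]
  rfl

theorem Submodule.baseChange_sup {R A M : Type*} [CommSemiring R] [Semiring A] [Algebra R A]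
    [AddCommMonoid M] [Module R M] (p q : Submodule R M) :
    (p ⊔ q).baseChange A = p.baseChange A ⊔ q.baseChange A := by
  refine le_antisymm ?_ (sup_le (baseChange_mono A le_sup_left) (baseChange_mono A le_sup_right))
  rw [baseChange_eq_span, span_le]
  rintro _ ⟨m, hm, rfl⟩
  obtain ⟨x, hx, y, hy, rfl⟩ := Submodule.mem_sup.mp hm
  simp only [TensorProduct.mk_apply, TensorProduct.tmul_add]
  exact add_mem_sup (tmul_mem_baseChange_of_mem 1 hx) (tmul_mem_baseChange_of_mem 1 hy)

theorem LinearMap.SeparatingRight.surjective {K V W : Type*} [Field K] [AddCommGroup V]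
    [Module K V] [AddCommGroup W] [Module K W] [FiniteDimensional K W]
    {B : V →ₗ[K] W →ₗ[K] K} (hB : B.SeparatingRight) : Function.Surjective B :=
  flip_injective_iff₂.mp (ker_eq_bot.mp (separatingRight_iff_flip_ker_eq_bot.mp hB))

theorem LinearMap.SeparatingRight.exists_baseChange_apply_ne_zero {K E V W : Type*} [Field K]
    [CommRing E] [Algebra K E] [AddCommGroup V] [Module K V] [AddCommGroup W] [Module K W]
    [FiniteDimensional K W] {B : V →ₗ[K] W →ₗ[K] K} (hB : B.SeparatingRight)
    {ξ : E ⊗[K] W} (hξ : ξ ≠ 0) : ∃ v, Module.Dual.baseChange E (B v) ξ ≠ 0 := by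
  obtain ⟨φ, hφ⟩ := Module.Dual.exists_baseChange_apply_ne_zero hξ
  obtain ⟨v, rfl⟩ := hB.surjective φ
  exact ⟨v, hφ⟩

theorem Submodule.mem_of_add_add_mem_of_eigen {K M : Type*} [Field K] [AddCommGroup M]
    [Module K M] {f : Module.End K M} {p : Submodule K M} (hp : ∀ w ∈ p, f w ∈ p)
    {a b c : K} (hab : a ≠ b) (hac : a ≠ c) {x y z : M}
    (hx : f x = a • x) (hy : f y = b • y) (hz : f z = c • z) (h : x + y + z ∈ p) : x ∈ p := by
  have hw : f (f (x + y + z)) - (b + c) • f (x + y + z) + (b * c) • (x + y + z)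
      = ((a - b) * (a - c)) • x := by
    simp only [map_add, map_smul, hx, hy, hz]
    module
  have : ((a - b) * (a - c)) • x ∈ p :=
    hw ▸ p.add_mem (p.sub_mem (hp _ (hp _ h)) (p.smul_mem _ (hp _ h))) (p.smul_mem _ h)
  exact (p.smul_mem_iff (mul_ne_zero (sub_ne_zero.mpr hab) (sub_ne_zero.mpr hac))).mp this

theorem eq_bot_or_eq_top_of_eigen_decomposition {K M : Type*} [Field K] [AddCommGroup M]
    [Module K M] {m : M →ₗ[K] M →ₗ[K] M} {ε : M} (hleft : ∀ y, m ε y = y)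
    {S T : Submodule K M} (hsup : K ∙ ε ⊔ S ⊔ T = ⊤) {ζ α : K}
    (hζ1 : ζ ≠ 1) (hα1 : α ≠ 1) (hαζ : α ≠ ζ)
    (hS : ∀ u ∈ S, m u ε = ζ • u) (hT : ∀ v ∈ T, m v ε = α • v)
    (hSε : ∀ u ∈ S, u ≠ 0 → ∃ y, m u y = ε) (hTε : ∀ v ∈ T, v ≠ 0 → ∃ y, m y v = ε)
    {I : Submodule K M} (hI : ∀ x ∈ I, ∀ y, m x y ∈ I ∧ m y x ∈ I) : I = ⊥ ∨ I = ⊤ := by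
  refine or_iff_not_imp_left.mpr fun hI0 => ?_
  suffices hεI : ε ∈ I from Submodule.eq_top_iff'.mpr fun y => hleft y ▸ (hI ε hεI y).1
  obtain ⟨x, hxI, hx0⟩ := I.ne_bot_iff.mp hI0
  have hx : x ∈ K ∙ ε ⊔ S ⊔ T := hsup ▸ Submodule.mem_top
  obtain ⟨_, hsu, v, hv, rfl⟩ := Submodule.mem_sup.mp hx
  obtain ⟨_, hs, u, hu, rfl⟩ := Submodule.mem_sup.mp hsu
  obtain ⟨c, rfl⟩ := Submodule.mem_span_singleton.mp hs
  have hRI : ∀ w ∈ I, m.flip ε w ∈ I := fun w hw => (hI w hw ε).1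
  have hRs : m.flip ε (c • ε) = (1 : K) • c • ε := by simp [hleft]
  have hRu : m.flip ε u = ζ • u := hS u hu
  have hRv : m.flip ε v = α • v := hT v hv
  have hsI : c • ε ∈ I := I.mem_of_add_add_mem_of_eigen hRI hζ1.symm hα1.symm hRs hRu hRv hxI
  have huI : u ∈ I := I.mem_of_add_add_mem_of_eigen hRI hζ1 hαζ.symm hRu hRs hRv
    (by convert hxI using 1; abel)
  have hvI : v ∈ I := I.mem_of_add_add_mem_of_eigen hRI hα1 hαζ hRv hRs hRu
    (by convert hxI using 1; abel)
  by_cases hu0 : u = 0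
  · by_cases hv0 : v = 0
    · subst hu0 hv0
      have hc : c ≠ 0 := by rintro rfl; simp at hx0
      exact (I.smul_mem_iff hc).mp hsI
    · obtain ⟨y, hy⟩ := hTε v hv hv0
      exact hy ▸ (hI v hvI y).2
  · obtain ⟨y, hy⟩ := hSε u hu hu0
    exact hy ▸ (hI u huI y).1

section BaseChangeMul

variable {R A P M : Type*} [CommRing R] [CommRing A] [Algebra R A] [AddCommGroup P] [Module R P]
  [AddCommGroup M] [Module R M] {mul : P →ₗ[R] P →ₗ[R] P}
  {mE : A ⊗[R] P →ₗ[A] A ⊗[R] P →ₗ[A] A ⊗[R] P}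

theorem baseChange_mul_one_tmul
    (hmul : ∀ (a b : A) (x y : P), mE (a ⊗ₜ x) (b ⊗ₜ y) = (a * b) ⊗ₜ mul x y)
    {f g : M →ₗ[R] P} {y : P} (h : ∀ m, mul (f m) y = g m) (ξ : A ⊗[R] M) :
    mE (f.baseChange A ξ) (1 ⊗ₜ y) = g.baseChange A ξ := by
  induction ξ using TensorProduct.induction_on with
  | zero => simp
  | tmul a m => rw [LinearMap.baseChange_tmul, hmul, mul_one, h, LinearMap.baseChange_tmul]
  | add ξ η hξ hη => simp only [map_add, LinearMap.add_apply, hξ, hη]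

theorem one_tmul_mul_baseChange
    (hmul : ∀ (a b : A) (x y : P), mE (a ⊗ₜ x) (b ⊗ₜ y) = (a * b) ⊗ₜ mul x y)
    {f g : M →ₗ[R] P} {x : P} (h : ∀ m, mul x (f m) = g m) (ξ : A ⊗[R] M) :
    mE (1 ⊗ₜ x) (f.baseChange A ξ) = g.baseChange A ξ := by
  induction ξ using TensorProduct.induction_on with
  | zero => simp
  | tmul a m => rw [LinearMap.baseChange_tmul, hmul, one_mul, h, LinearMap.baseChange_tmul]
  | add ξ η hξ hη => rw [map_add, map_add, map_add, hξ, hη]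

theorem mul_one_tmul_eq_smul_of_mem_range_baseChange
    (hmul : ∀ (a b : A) (x y : P), mE (a ⊗ₜ x) (b ⊗ₜ y) = (a * b) ⊗ₜ mul x y)
    {f : M →ₗ[R] P} {y : P} {c : R} (h : ∀ m, mul (f m) y = c • f m) :
    ∀ u ∈ LinearMap.range (f.baseChange A), mE u (1 ⊗ₜ y) = algebraMap R A c • u := by
  rintro _ ⟨ξ, rfl⟩
  rw [baseChange_mul_one_tmul hmul (g := c • f) h, LinearMap.baseChange_smul,
    LinearMap.smul_apply, algebraMap_smul]

end BaseChangeMul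

section Pairing

variable {K E P M N : Type*} [Field K] [Field E] [Algebra K E] [AddCommGroup P] [Module K P]
  [AddCommGroup M] [Module K M] [AddCommGroup N] [Module K N] {mul : P →ₗ[K] P →ₗ[K] P}
  {mE : E ⊗[K] P →ₗ[E] E ⊗[K] P →ₗ[E] E ⊗[K] P} {f : M →ₗ[K] P} {g : N →ₗ[K] P}
  {B : M →ₗ[K] N →ₗ[K] K} {e : P}

theorem exists_mul_eq_one_tmul_of_separatingLeft [FiniteDimensional K M]
    (hmul : ∀ (a b : E) (x y : P), mE (a ⊗ₜ x) (b ⊗ₜ y) = (a * b) ⊗ₜ mul x y)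
    (hB : B.SeparatingLeft) (hfg : ∀ m n, mul (f m) (g n) = B m n • e) :
    ∀ u ∈ LinearMap.range (f.baseChange E), u ≠ 0 → ∃ y, mE u y = 1 ⊗ₜ e := by
  rintro _ ⟨ξ, rfl⟩ hξ
  obtain ⟨n, hn⟩ := (LinearMap.flip_separatingRight.mpr hB).exists_baseChange_apply_ne_zero
    (ξ := ξ) (by rintro rfl; exact hξ (map_zero _))
  refine ⟨(Module.Dual.baseChange E (B.flip n) ξ)⁻¹ • (1 ⊗ₜ g n), ?_⟩
  rw [map_smul, baseChange_mul_one_tmul hmul (g := (B.flip n).smulRight e) (fun m => hfg m n),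
    LinearMap.baseChange_smulRight_apply, smul_smul, inv_mul_cancel₀ hn, one_smul]

theorem exists_mul_eq_one_tmul_of_separatingRight [FiniteDimensional K N]
    (hmul : ∀ (a b : E) (x y : P), mE (a ⊗ₜ x) (b ⊗ₜ y) = (a * b) ⊗ₜ mul x y)
    (hB : B.SeparatingRight) (hfg : ∀ m n, mul (f m) (g n) = B m n • e) :
    ∀ v ∈ LinearMap.range (g.baseChange E), v ≠ 0 → ∃ y, mE y v = 1 ⊗ₜ e := by
  rintro _ ⟨ξ, rfl⟩ hξ
  obtain ⟨m, hm⟩ :=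
    hB.exists_baseChange_apply_ne_zero (ξ := ξ) (by rintro rfl; exact hξ (map_zero _))
  refine ⟨(Module.Dual.baseChange E (B m) ξ)⁻¹ • (1 ⊗ₜ f m), ?_⟩
  rw [map_smul, LinearMap.smul_apply,
    one_tmul_mul_baseChange hmul (g := (B m).smulRight e) (hfg m),
    LinearMap.baseChange_smulRight_apply, smul_smul, inv_mul_cancel₀ hm, one_smul]

end Pairing

theorem stmt11_general {F R Z P : Type*} [Field F]
    [AddCommGroup R] [Module F R] [FiniteDimensional F R] [Nontrivial R]
    [AddCommGroup Z] [Module F Z] [FiniteDimensional F Z]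
    [AddCommGroup P] [Module F P]
    (α ζ : F) (hα1 : α ≠ 1) (hζ1 : ζ ≠ 1) (hαζ : α ≠ ζ)
    (Δ : Z →ₗ[F] R →ₗ[F] F) (hΔ : Δ.Nondegenerate)
    (mul : P →ₗ[F] P →ₗ[F] P) (e : P)
    (jZ : Z →ₗ[F] P)
    (jR : R →ₗ[F] P) (hjR : Function.Injective jR)
    (hinternal : DirectSum.IsInternal
      ![Submodule.span F {e}, LinearMap.range jZ, LinearMap.range jR])
    (hleft : ∀ x : P, mul e x = x)
    (hZe : ∀ z : Z, mul (jZ z) e = ζ • jZ z)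
    (hRe : ∀ a : R, mul (jR a) e = α • jR a)
    (hZR : ∀ (z : Z) (a : R), mul (jZ z) (jR a) = Δ z a • e) :
    ∀ (E : Type*) [Field E] [Algebra F E]
      (mE : E ⊗[F] P →ₗ[E] E ⊗[F] P →ₗ[E] E ⊗[F] P),
      (∀ (a b : E) (x y : P),
          mE (a ⊗ₜ[F] x) (b ⊗ₜ[F] y) = (a * b) ⊗ₜ[F] mul x y) →
      mE ≠ 0 ∧
        ∀ I : Submodule E (E ⊗[F] P),
          (∀ x ∈ I, ∀ y : E ⊗[F] P, mE x y ∈ I ∧ mE y x ∈ I) → I = ⊥ ∨ I = ⊤ := by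
  intro E _ _ mE hmul
  have he : e ≠ 0 := by
    obtain ⟨a, ha⟩ := exists_ne (0 : R)
    rintro rfl
    exact ha (hjR (by simpa using (hleft (jR a)).symm))
  have hleftE : ∀ y, mE (1 ⊗ₜ e) y = y := fun y => by
    simpa using one_tmul_mul_baseChange hmul (f := LinearMap.id) (g := LinearMap.id) hleft y
  have hsup : E ∙ (1 ⊗ₜ[F] e) ⊔ LinearMap.range (jZ.baseChange E) ⊔
      LinearMap.range (jR.baseChange E) = ⊤ := by
    have := congr_arg (Submodule.baseChange E) hinternal.submodule_iSup_eq_top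
    simpa [Submodule.baseChange_sup, LinearMap.range_baseChange] using this
  refine ⟨fun h0 => he (by simpa [h0] using (hleftE (1 ⊗ₜ e)).symm), fun I hI => ?_⟩
  exact eq_bot_or_eq_top_of_eigen_decomposition hleftE hsup (by simpa using hζ1)
    (by simpa using hα1) ((algebraMap F E).injective.ne hαζ)
    (mul_one_tmul_eq_smul_of_mem_range_baseChange hmul hZe)
    (mul_one_tmul_eq_smul_of_mem_range_baseChange hmul hRe)
    (exists_mul_eq_one_tmul_of_separatingLeft hmul hΔ.1 hZR)
    (exists_mul_eq_one_tmul_of_separatingRight hmul hΔ.2 hZR) hI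

/-- (Remark on (4.2)(i),(ii) in Gordeev–Popov): with `P = R(α,ζ,Δ) = ⟨e⟩ ⊕ Z ⊕ R` the
algebra defined as in the context (|F| ≥ 4, `e` a left identity, `Z`, `R` eigenspaces of
right multiplication by `e` with nonzero eigenvalues `ζ ≠ α`, both ≠ 1, `R` a subalgebra,
`Z` a subalgebra with zero multiplication, `a·z = 0`, `z·a = Δ(z,a)·e`), the algebra `P`
is absolutely simple: for every field extension `E/F` the algebra `P ⊗_F E` (with the
`E`-bilinear extension of the multiplication) is simple, i.e. its multiplication is
nonzero and its only two-sided ideals are `0` and the whole algebra. -/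
theorem stmt11 {F R Z P : Type*} [Field F]
    [AddCommGroup R] [Module F R] [FiniteDimensional F R] [Nontrivial R]
    [AddCommGroup Z] [Module F Z] [FiniteDimensional F Z]
    [AddCommGroup P] [Module F P]
    (hF : (4 : Cardinal) ≤ Cardinal.mk F)
    (hdim : Module.finrank F Z = Module.finrank F R)
    (mR : R →ₗ[F] R →ₗ[F] R)
    (α ζ : F) (hα0 : α ≠ 0) (hζ0 : ζ ≠ 0) (hα1 : α ≠ 1) (hζ1 : ζ ≠ 1) (hαζ : α ≠ ζ)
    (Δ : Z →ₗ[F] R →ₗ[F] F) (hΔ : Δ.Nondegenerate)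
    (mul : P →ₗ[F] P →ₗ[F] P) (e : P)
    (jZ : Z →ₗ[F] P) (hjZ : Function.Injective jZ)
    (jR : R →ₗ[F] P) (hjR : Function.Injective jR)
    (hinternal : DirectSum.IsInternal
      ![Submodule.span F {e}, LinearMap.range jZ, LinearMap.range jR])
    (hleft : ∀ x : P, mul e x = x)
    (hZe : ∀ z : Z, mul (jZ z) e = ζ • jZ z)
    (hRe : ∀ a : R, mul (jR a) e = α • jR a)
    (hRR : ∀ a b : R, mul (jR a) (jR b) = jR (mR a b))
    (hZZ : ∀ z w : Z, mul (jZ z) (jZ w) = 0)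
    (hRZ : ∀ (a : R) (z : Z), mul (jR a) (jZ z) = 0)
    (hZR : ∀ (z : Z) (a : R), mul (jZ z) (jR a) = Δ z a • e) :
    ∀ (E : Type*) [Field E] [Algebra F E]
      (mE : E ⊗[F] P →ₗ[E] E ⊗[F] P →ₗ[E] E ⊗[F] P),
      (∀ (a b : E) (x y : P),
          mE (a ⊗ₜ[F] x) (b ⊗ₜ[F] y) = (a * b) ⊗ₜ[F] mul x y) →
      mE ≠ 0 ∧
        ∀ I : Submodule E (E ⊗[F] P),
          (∀ x ∈ I, ∀ y : E ⊗[F] P, mE x y ∈ I ∧ mE y x ∈ I) → I = ⊥ ∨ I = ⊤ :=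
  stmt11_general α ζ hα1 hζ1 hαζ Δ hΔ mul e jZ jR hjR hinternal hleft hZe hRe hZR
end

section
/- Let R(α,0,Δ) be the ζ = 0 variant of the algebra defined in the context (so ze = 0 for z ∈ Z), over a field F with |F| ≥ 3. Then R(α,0,Δ) is simple, and Aut(R(α,0,Δ)) = { id_{⟨e⟩} ⊕ (g*)^{-1} ⊕ g : g ∈ Aut(R) }, where for g ∈ GL(R) the conjugate g* ∈ GL(Z) is defined by Δ(g*(z), a) = Δ(z, g(a)) for all z ∈ Z, a ∈ R. -/
/-- (Remark at the end of Section 4 in Gordeev–Popov): the `ζ = 0` variant.  Let `F` be a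
field with `|F| ≥ 3`, `R` a nonzero finite-dimensional (nonassociative) algebra over `F`,
`α ∈ F` with `α ≠ 0`, `α ≠ 1`, `Z` a vector space with `dim Z = dim R` carrying the zero
multiplication, and `Δ : Z × R → F` a nondegenerate bilinear pairing.  Let
`P = R(α,0,Δ) = ⟨e⟩ ⊕ Z ⊕ R` be the algebra in which `e` is a left identity,
`z·e = 0` and `a·e = α•a`, `R` and `Z` are subalgebras, and `a·z = 0`, `z·a = Δ(z,a)·e`.
Then `P` is simple, and its automorphisms are exactly the maps
`id_{⟨e⟩} ⊕ (g*)⁻¹ ⊕ g` with `g ∈ Aut(R)`, where `g* ∈ GL(Z)` is the conjugate of `g`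
with respect to `Δ` (`h = (g*)⁻¹` being characterized by `Δ(h z, g a) = Δ(z,a)`). -/
theorem stmt12 {F R Z P : Type*} [Field F]
    [AddCommGroup R] [Module F R] [FiniteDimensional F R] [Nontrivial R]
    [AddCommGroup Z] [Module F Z] [FiniteDimensional F Z]
    [AddCommGroup P] [Module F P]
    (hF : (3 : Cardinal) ≤ Cardinal.mk F)
    (hdim : Module.finrank F Z = Module.finrank F R)
    (mR : R →ₗ[F] R →ₗ[F] R)
    (α : F) (hα0 : α ≠ 0) (hα1 : α ≠ 1)
    (Δ : Z →ₗ[F] R →ₗ[F] F) (hΔ : Δ.Nondegenerate)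
    (mul : P →ₗ[F] P →ₗ[F] P) (e : P)
    (jZ : Z →ₗ[F] P) (hjZ : Function.Injective jZ)
    (jR : R →ₗ[F] P) (hjR : Function.Injective jR)
    (hinternal : DirectSum.IsInternal
      ![Submodule.span F {e}, LinearMap.range jZ, LinearMap.range jR])
    (hleft : ∀ x : P, mul e x = x)
    (hZe : ∀ z : Z, mul (jZ z) e = 0)
    (hRe : ∀ a : R, mul (jR a) e = α • jR a)
    (hRR : ∀ a b : R, mul (jR a) (jR b) = jR (mR a b))
    (hZZ : ∀ z w : Z, mul (jZ z) (jZ w) = 0)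
    (hRZ : ∀ (a : R) (z : Z), mul (jR a) (jZ z) = 0)
    (hZR : ∀ (z : Z) (a : R), mul (jZ z) (jR a) = Δ z a • e) :
    (mul ≠ 0 ∧
      ∀ I : Submodule F P, (∀ x ∈ I, ∀ y : P, mul x y ∈ I ∧ mul y x ∈ I) →
        I = ⊥ ∨ I = ⊤) ∧
    ∀ σ : P ≃ₗ[F] P,
      (∀ x y : P, σ (mul x y) = mul (σ x) (σ y)) ↔
        ∃ (g : R ≃ₗ[F] R) (h : Z ≃ₗ[F] Z),
          (∀ a b : R, g (mR a b) = mR (g a) (g b)) ∧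
          (∀ (z : Z) (a : R), Δ (h z) (g a) = Δ z a) ∧
          σ e = e ∧ (∀ z : Z, σ (jZ z) = jZ (h z)) ∧ (∀ a : R, σ (jR a) = jR (g a)) := by

  classical
  -- Basic nontriviality facts
  have hP : Nontrivial P := by
    obtain ⟨a, ha⟩ := exists_ne (0 : R)
    exact ⟨jR a, 0, fun hh => ha (hjR (by simpa using hh))⟩
  have he0 : e ≠ 0 := by
    intro h
    obtain ⟨x, y, hxy⟩ := hP
    have hx := hleft x
    have hy := hleft y
    rw [h] at hx hy
    simp only [map_zero, LinearMap.zero_apply] at hx hy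
    exact hxy (hx.symm.trans hy)
  -- Decomposition: existence
  have htop : Submodule.span F {e} ⊔ (LinearMap.range jZ ⊔ LinearMap.range jR) = ⊤ := by
    apply le_antisymm le_top
    rw [← hinternal.submodule_iSup_eq_top]
    apply iSup_le
    intro i
    fin_cases i
    · exact le_sup_left
    · exact le_trans le_sup_left le_sup_right
    · exact le_trans le_sup_right le_sup_right
  have hdec : ∀ x : P, ∃ (c : F) (z : Z) (a : R), x = c • e + jZ z + jR a := by
    intro x
    have hx : x ∈ Submodule.span F {e} ⊔ (LinearMap.range jZ ⊔ LinearMap.range jR) := by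
      rw [htop]; trivial
    obtain ⟨u, hu, v, hv, huv⟩ := Submodule.mem_sup.mp hx
    obtain ⟨p, ⟨z, hz⟩, q, ⟨a, ha⟩, hpq⟩ := Submodule.mem_sup.mp hv
    obtain ⟨c, hc⟩ := Submodule.mem_span_singleton.mp hu
    exact ⟨c, z, a, by rw [← huv, ← hpq, hc, hz, ha, add_assoc]⟩
  -- Decomposition: uniqueness
  have hind := hinternal.submodule_iSupIndep
  have d1 : Disjoint (LinearMap.range jZ) (Submodule.span F {e} ⊔ LinearMap.range jR) := by
    refine (hind 1).mono_right (sup_le ?_ ?_)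
    · exact le_iSup₂ (f := fun j (_ : j ≠ (1 : Fin 3)) =>
        ![Submodule.span F {e}, LinearMap.range jZ, LinearMap.range jR] j) 0 (by decide)
    · exact le_iSup₂ (f := fun j (_ : j ≠ (1 : Fin 3)) =>
        ![Submodule.span F {e}, LinearMap.range jZ, LinearMap.range jR] j) 2 (by decide)
  have d2 : Disjoint (LinearMap.range jR) (Submodule.span F {e}) := by
    refine (hind 2).mono_right ?_
    exact le_iSup₂ (f := fun j (_ : j ≠ (2 : Fin 3)) =>
      ![Submodule.span F {e}, LinearMap.range jZ, LinearMap.range jR] j) 0 (by decide)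
  have huniq : ∀ (c : F) (z : Z) (a : R), c • e + jZ z + jR a = 0 → c = 0 ∧ z = 0 ∧ a = 0 := by
    intro c z a h
    have hz : jZ z = 0 := by
      refine Submodule.disjoint_def.mp d1 (jZ z) ⟨z, rfl⟩ ?_
      have : jZ z = (-c) • e + jR (-a) := by
        rw [map_neg, neg_smul, ← neg_add, eq_neg_iff_add_eq_zero, ← h]; abel
      rw [this]
      exact Submodule.add_mem_sup (Submodule.smul_mem _ _ (Submodule.mem_span_singleton_self e))
        ⟨-a, rfl⟩
    have hz0 : z = 0 := hjZ (by simpa using hz)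
    rw [hz, add_zero] at h
    have ha : jR a = 0 := by
      refine Submodule.disjoint_def.mp d2 (jR a) ⟨a, rfl⟩ ?_
      have : jR a = (-c) • e := by
        rw [neg_smul, eq_neg_iff_add_eq_zero, ← h]; abel
      rw [this]
      exact Submodule.smul_mem _ _ (Submodule.mem_span_singleton_self e)
    have ha0 : a = 0 := hjR (by simpa using ha)
    rw [ha, add_zero] at h
    have hc0 : c = 0 := by
      rcases smul_eq_zero.mp h with hc | hE
      · exact hc
      · exact absurd hE he0
    exact ⟨hc0, hz0, ha0⟩
  have huniq' : ∀ (c : F) (z : Z) (a : R) (d : F) (w : Z) (b : R),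
      c • e + jZ z + jR a = d • e + jZ w + jR b → c = d ∧ z = w ∧ a = b := by
    intro c z a d w b h
    have h0 : (c - d) • e + jZ (z - w) + jR (a - b) = 0 := by
      calc (c - d) • e + jZ (z - w) + jR (a - b)
          = (c • e + jZ z + jR a) - (d • e + jZ w + jR b) := by
            rw [map_sub, map_sub, sub_smul]; abel
        _ = 0 := sub_eq_zero_of_eq h
    obtain ⟨h1, h2, h3⟩ := huniq _ _ _ h0
    exact ⟨sub_eq_zero.mp h1, sub_eq_zero.mp h2, sub_eq_zero.mp h3⟩
  -- The multiplication formula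
  have hmul : ∀ (c : F) (z : Z) (a : R) (d : F) (w : Z) (b : R),
      mul (c • e + jZ z + jR a) (d • e + jZ w + jR b)
        = (c * d + Δ z b) • e + jZ (c • w) + jR (c • b + (d * α) • a + mR a b) := by
    intro c z a d w b
    simp only [map_add, map_smul, LinearMap.add_apply, LinearMap.smul_apply,
      hleft, hZe, hRe, hRR, hZZ, hRZ, hZR, smul_zero, add_zero, zero_add]
    module
  have ecan : (e : P) = (1 : F) • e + jZ 0 + jR 0 := by simp
  have me : ∀ (c : F) (z : Z) (a : R),
      mul (c • e + jZ z + jR a) e = c • e + jZ 0 + jR (α • a) := by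
    intro c z a
    have h := hmul c z a 1 0 0
    rw [← ecan] at h
    rw [h]
    simp [mul_comm]
  refine ⟨⟨?_, ?_⟩, ?_⟩
  · -- mul ≠ 0
    intro h0
    apply he0
    have := hleft e
    rw [h0] at this
    simpa using this.symm
  · -- simplicity
    intro I hI
    by_cases hbot : I = ⊥
    · exact Or.inl hbot
    right
    obtain ⟨x, hxI, hx0⟩ := Submodule.exists_mem_ne_zero_of_ne_bot hbot
    obtain ⟨c, z, a, rfl⟩ := hdec x
    have hx1 : c • e + jZ 0 + jR (α • a) ∈ I := by
      rw [← me c z a]; exact (hI _ hxI e).1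
    have hx2 : c • e + jZ 0 + jR (α • (α • a)) ∈ I := by
      rw [← me c 0 (α • a)]; exact (hI _ hx1 e).1
    have hRaI : jR a ∈ I := by
      have hsub : (α * α - α) • jR a ∈ I := by
        have : (α * α - α) • jR a
            = (c • e + jZ 0 + jR (α • (α • a))) - (c • e + jZ 0 + jR (α • a)) := by
          rw [map_smul, map_smul, smul_smul, sub_smul]
          abel
        rw [this]
        exact Submodule.sub_mem I hx2 hx1
      have hne : α * α - α ≠ 0 := by
        intro hcon
        rcases mul_eq_zero.mp (by rw [mul_sub, mul_one]; exact hcon : α * (α - 1) = 0) with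
          h' | h'
        · exact hα0 h'
        · exact hα1 (sub_eq_zero.mp h')
      have := Submodule.smul_mem I (α * α - α)⁻¹ hsub
      rwa [inv_smul_smul₀ hne] at this
    have hceI : c • e ∈ I := by
      have : c • e = (c • e + jZ 0 + jR (α • a)) - α • jR a := by
        rw [map_zero, map_smul]; abel
      rw [this]
      exact Submodule.sub_mem I hx1 (Submodule.smul_mem I α hRaI)
    have hzI : jZ z ∈ I := by
      have : jZ z = (c • e + jZ z + jR a) - c • e - jR a := by abel
      rw [this]
      exact Submodule.sub_mem I (Submodule.sub_mem I hxI hceI) hRaI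
    have heI : e ∈ I := by
      by_cases hc : c = 0
      · by_cases ha : a = 0
        · -- then z ≠ 0
          have hzne : z ≠ 0 := by
            intro hz0
            apply hx0
            rw [hc, hz0, ha]; simp
          obtain ⟨a', ha'⟩ : ∃ a' : R, Δ z a' ≠ 0 := by
            by_contra hcon
            push_neg at hcon
            exact hzne (hΔ.1 z hcon)
          have : mul (jZ z) (jR a') ∈ I := (hI _ hzI (jR a')).1
          rw [hZR] at this
          have := Submodule.smul_mem I (Δ z a')⁻¹ this
          rwa [inv_smul_smul₀ ha'] at this
        · obtain ⟨z', hz'⟩ : ∃ z' : Z, Δ z' a ≠ 0 := by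
            by_contra hcon
            push_neg at hcon
            exact ha (hΔ.2 a hcon)
          have : mul (jZ z') (jR a) ∈ I := (hI _ hRaI (jZ z')).2
          rw [hZR] at this
          have := Submodule.smul_mem I (Δ z' a)⁻¹ this
          rwa [inv_smul_smul₀ hz'] at this
      · have := Submodule.smul_mem I c⁻¹ hceI
        rwa [inv_smul_smul₀ hc] at this
    rw [Submodule.eq_top_iff']
    intro y
    have := (hI e heI y).1
    rwa [hleft] at this
  -- Automorphism classification
  intro σ
  constructor
  · intro hσ
    have hσ' : ∀ x y : P, σ.symm (mul x y) = mul (σ.symm x) (σ.symm y) := by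
      intro x y
      apply σ.injective
      rw [hσ, σ.apply_symm_apply, σ.apply_symm_apply, σ.apply_symm_apply]
    have key : ∀ (τ : P ≃ₗ[F] P), (∀ x y : P, τ (mul x y) = mul (τ x) (τ y)) →
        τ e = e ∧ (∀ z : Z, ∃ w, τ (jZ z) = jZ w) ∧ (∀ a : R, ∃ b, τ (jR a) = jR b) := by
      intro τ hτ
      have hLI : ∀ y : P, mul (τ e) y = y := by
        intro y
        have h1 := hτ e (τ.symm y)
        rw [hleft, τ.apply_symm_apply] at h1
        exact h1.symm
      have hτe : τ e = e := by
        obtain ⟨c, z, a, hce⟩ := hdec (τ e)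
        have h1 : mul (τ e) e = e := hLI e
        rw [hce, me] at h1
        obtain ⟨hc1, -, hαa⟩ := huniq' _ _ _ _ _ _ (h1.trans ecan)
        have ha0 : a = 0 := by
          rcases smul_eq_zero.mp hαa with h' | h'
          · exact absurd h' hα0
          · exact h'
        have hz0 : z = 0 := by
          apply hΔ.1
          intro b
          have h3 := hLI (jR b)
          rw [hce, hc1, ha0] at h3
          have hb : jR b = (0 : F) • e + jZ 0 + jR b := by simp
          rw [hb, hmul] at h3
          obtain ⟨hΔb, -, -⟩ := huniq' _ _ _ _ _ _ h3
          simpa using hΔb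
        rw [hce, hc1, ha0, hz0]
        simp
      refine ⟨hτe, ?_, ?_⟩
      · intro z
        obtain ⟨c, w, b, hcw⟩ := hdec (τ (jZ z))
        have h1 : mul (τ (jZ z)) e = 0 := by
          have h2 := hτ (jZ z) e
          rw [hZe, map_zero, hτe] at h2
          exact h2.symm
        rw [hcw, me] at h1
        obtain ⟨hc0, -, hαb⟩ := huniq _ _ _ h1
        have hb0 : b = 0 := by
          rcases smul_eq_zero.mp hαb with h' | h'
          · exact absurd h' hα0
          · exact h'
        exact ⟨w, by rw [hcw, hc0, hb0]; simp⟩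
      · intro a
        obtain ⟨c, w, b, hcw⟩ := hdec (τ (jR a))
        have h1 : mul (τ (jR a)) e = α • τ (jR a) := by
          have h2 := hτ (jR a) e
          rw [hRe, map_smul, hτe] at h2
          exact h2.symm
        rw [hcw, me] at h1
        have h1' : c • e + jZ 0 + jR (α • b)
            = (α * c) • e + jZ (α • w) + jR (α • b) := by
          rw [h1, map_smul, map_smul]
          module
        obtain ⟨hc, hw, -⟩ := huniq' _ _ _ _ _ _ h1'
        have hc0 : c = 0 := by
          have hmc : (1 - α) * c = 0 := by linear_combination hc
          rcases mul_eq_zero.mp hmc with h' | h'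
          · exact absurd (by linear_combination -h' : α = 1) hα1
          · exact h'
        have hw0 : w = 0 := by
          rcases smul_eq_zero.mp hw.symm with h' | h'
          · exact absurd h' hα0
          · exact h'
        exact ⟨b, by rw [hcw, hc0, hw0]; simp⟩
    obtain ⟨hσe, hσZ, hσR⟩ := key σ hσ
    obtain ⟨hσe', hσZ', hσR'⟩ := key σ.symm hσ'
    choose hf hhf using hσZ
    choose hf' hhf' using hσZ'
    choose gf hgf using hσR
    choose gf' hgf' using hσR'
    refine ⟨⟨⟨⟨gf, fun a b => hjR ?_⟩, fun c a => hjR ?_⟩, gf', fun a => hjR ?_,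
        fun a => hjR ?_⟩,
      ⟨⟨⟨hf, fun z w => hjZ ?_⟩, fun c z => hjZ ?_⟩, hf', fun z => hjZ ?_,
        fun z => hjZ ?_⟩, ?_, ?_, hσe, fun z => hhf z, fun a => hgf a⟩
    · rw [← hgf, map_add, map_add, hgf, hgf, map_add]
    · rw [← hgf, map_smul, map_smul, hgf, map_smul]; rfl
    · show jR (gf' (gf a)) = jR a
      rw [← hgf', ← hgf, σ.symm_apply_apply]
    · show jR (gf (gf' a)) = jR a
      rw [← hgf, ← hgf', σ.apply_symm_apply]
    · rw [← hhf, map_add, map_add, hhf, hhf, map_add]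
    · rw [← hhf, map_smul, map_smul, hhf, map_smul]; rfl
    · show jZ (hf' (hf z)) = jZ z
      rw [← hhf', ← hhf, σ.symm_apply_apply]
    · show jZ (hf (hf' z)) = jZ z
      rw [← hhf, ← hhf', σ.apply_symm_apply]
    · -- g multiplicative
      intro a b
      apply hjR
      calc jR (gf (mR a b)) = σ (jR (mR a b)) := (hgf _).symm
        _ = σ (mul (jR a) (jR b)) := by rw [hRR]
        _ = mul (σ (jR a)) (σ (jR b)) := hσ _ _
        _ = mul (jR (gf a)) (jR (gf b)) := by rw [hgf, hgf]
        _ = jR (mR (gf a) (gf b)) := hRR _ _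
    · -- Δ invariance
      intro z a
      have h1 : Δ (hf z) (gf a) • e = Δ z a • e := by
        calc Δ (hf z) (gf a) • e = mul (jZ (hf z)) (jR (gf a)) := (hZR _ _).symm
          _ = mul (σ (jZ z)) (σ (jR a)) := by rw [hhf, hgf]
          _ = σ (mul (jZ z) (jR a)) := (hσ _ _).symm
          _ = σ (Δ z a • e) := by rw [hZR]
          _ = Δ z a • e := by rw [map_smul, hσe]
      exact smul_left_injective F he0 h1
  · rintro ⟨g, h, hgmul, hΔinv, hσe, hσZ, hσR⟩ x y
    obtain ⟨c, z, a, rfl⟩ := hdec x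
    obtain ⟨d, w, b, rfl⟩ := hdec y
    have hx : σ (c • e + jZ z + jR a) = c • e + jZ (h z) + jR (g a) := by
      rw [map_add, map_add, map_smul, hσe, hσZ, hσR]
    have hy : σ (d • e + jZ w + jR b) = d • e + jZ (h w) + jR (g b) := by
      rw [map_add, map_add, map_smul, hσe, hσZ, hσR]
    rw [hmul, hx, hy, hmul]
    simp only [map_add, map_smul, hσe, hσZ, hσR, hgmul, hΔinv]
end

section
/- Let k be a field, V = k^n with basis e_1, …, e_n, and let the symmetric group S_n act on the symmetric algebra Sym(V) by algebra automorphisms via σ·e_i = e_{σ(i)}. Let G be a subgroup of S_n, let λ_1, …, λ_n ∈ k be nonzero elements with λ_i/λ_j ≠ λ_s/λ_t for all indices with i ≠ j, s ≠ t and (i,j) ≠ (s,t), and set f := ∏_{σ∈G} σ·(λ_1e_1 + ⋯ + λ_ne_n) ∈ Sym^{|G|}(V). Then the stabilizer of f in S_n equals G: {τ ∈ S_n : τ·f = f} = G. -/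
/-!
Write `ℓ_c = ∑ c_i X_i`, so `f = ∏_{σ ∈ G} ℓ_{λ ∘ σ⁻¹}`, and `G` visibly stabilises `f`. Conversely,
if `τ · f = f` then the prime `τ · ℓ_λ = ℓ_{λ ∘ τ⁻¹}` divides `f`, hence divides some factor
`ℓ_{λ ∘ σ⁻¹}`; comparing linear coefficients, `λ ∘ σ⁻¹τ = a λ` for a scalar `a`. If `π = σ⁻¹τ`
moved some `i`, then `λ_{π i}/λ_i` and `λ_{π² i}/λ_{π i}` would both equal `a`, contradicting
the distinctness of the ratios. So `τ = σ ∈ G`.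
-/

open MvPolynomial

namespace MvPolynomial

lemma coeff_single_one_of_mul {R σ : Type*} [CommSemiring R] (p q : MvPolynomial σ R) (i : σ) :
    coeff (Finsupp.single i 1) (p * q) =
      constantCoeff p * coeff (Finsupp.single i 1) q +
        coeff (Finsupp.single i 1) p * constantCoeff q := by
  classical
  rw [coeff_mul, Finsupp.antidiagonal_single, Finset.sum_map,
    show Finset.HasAntidiagonal.antidiagonal 1 = {(0, 1), (1, 0)} from rfl]
  simp [Finsupp.single_zero, constantCoeff_eq]

lemma rename_prod_rename_of_mem {R σ : Type*} [CommSemiring R] {G : Subgroup (Equiv.Perm σ)}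
    [Fintype G] {τ : Equiv.Perm σ} (hτ : τ ∈ G) (p : MvPolynomial σ R) :
    rename τ (∏ g : G, rename (g : Equiv.Perm σ) p) = ∏ g : G, rename (g : Equiv.Perm σ) p := by
  simp only [map_prod, rename_rename, ← Equiv.Perm.coe_mul]
  exact Fintype.prod_equiv (Equiv.mulLeft ⟨τ, hτ⟩) (fun g : G => rename ⇑(τ * g) p)
    (fun g : G => rename ⇑(g : Equiv.Perm σ) p) fun _ => rfl

variable {R ι : Type*} [CommRing R] [Fintype ι]

noncomputable def linearForm (c : ι → R) : MvPolynomial ι R :=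
  ∑ i, C (c i) * X i

lemma linearForm_eq_sumSMulX (c : ι → R) :
    linearForm c = sumSMulX (Finsupp.equivFunOnFinite.symm c) := by
  simp [linearForm, sumSMulX, Finsupp.linearCombination_apply, Finsupp.sum_fintype, smul_eq_C_mul]

lemma coeff_single_linearForm (c : ι → R) (i : ι) :
    coeff (Finsupp.single i 1) (linearForm c) = c i := by
  rw [linearForm_eq_sumSMulX, coeff_sumSMulX]
  rfl

lemma constantCoeff_linearForm (c : ι → R) : constantCoeff (linearForm c) = 0 := by
  simp [linearForm]

lemma rename_linearForm (e : ι ≃ ι) (c : ι → R) :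
    rename e (linearForm c) = linearForm (c ∘ e.symm) := by
  simp only [linearForm, map_sum, map_mul, rename_C, rename_X]
  exact Fintype.sum_equiv e _ _ fun i => by simp

lemma exists_eq_smul_of_linearForm_dvd {c d : ι → R} (h : linearForm c ∣ linearForm d) :
    ∃ a : R, d = a • c := by
  obtain ⟨g, hg⟩ := h
  refine ⟨constantCoeff g, ?_⟩
  ext i
  simpa [coeff_single_linearForm, coeff_single_one_of_mul, constantCoeff_linearForm, mul_comm]
    using congrArg (coeff (Finsupp.single i 1)) hg

lemma prime_linearForm {k : Type*} [Field k] {c : ι → k} (hc : c ≠ 0) : Prime (linearForm c) := by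
  obtain ⟨i, hi⟩ := Function.ne_iff.mp hc
  rw [linearForm_eq_sumSMulX, ← irreducible_iff_prime]
  refine irreducible_sumSMulX _ ⟨i, by simpa using hi⟩ fun r hr => ?_
  exact isUnit_iff_ne_zero.mpr (ne_zero_of_dvd_ne_zero hi (hr i))

end MvPolynomial

lemma Equiv.Perm.eq_one_of_comp_eq_smul {k ι : Type*} [GroupWithZero k] {lam : ι → k}
    (hlam0 : ∀ i, lam i ≠ 0)
    (hlam : ∀ i j s t : ι, i ≠ j → s ≠ t → (i, j) ≠ (s, t) → lam i / lam j ≠ lam s / lam t)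
    {σ : Equiv.Perm ι} {a : k} (h : lam ∘ σ = a • lam) : σ = 1 := by
  by_contra hσ
  obtain ⟨i, hi⟩ : ∃ i, σ i ≠ i := by
    by_contra! hfix
    exact hσ (Equiv.ext hfix)
  have hratio (j : ι) : lam (σ j) / lam j = a := div_eq_of_eq_mul (hlam0 j) (congrFun h j)
  have hσi : σ (σ i) ≠ σ i := fun h' => hi (σ.injective h')
  exact hlam _ _ _ _ hi hσi (fun hp => hi (congrArg Prod.snd hp).symm)
    ((hratio i).trans (hratio (σ i)).symm)

/-- (Remark after Proposition 8 in Gordeev–Popov): let `k` be a field and identify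
`Sym(k^n)` with the polynomial ring `k[e_1,…,e_n]`, on which `S_n` acts by
`σ·e_i = e_{σ(i)}`.  Let `G ≤ S_n`, let `λ_1,…,λ_n ∈ k` be nonzero with
`λ_i/λ_j ≠ λ_s/λ_t` whenever `i ≠ j`, `s ≠ t` and `(i,j) ≠ (s,t)`, and set
`f = ∏_{σ ∈ G} σ·(λ_1 e_1 + ⋯ + λ_n e_n)`.  Then the stabilizer of `f` in `S_n`
equals `G`. -/
theorem stmt14 {k : Type*} [Field k] (n : ℕ)
    (G : Subgroup (Equiv.Perm (Fin n))) [Fintype G]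
    (lam : Fin n → k) (hlam0 : ∀ i, lam i ≠ 0)
    (hlam : ∀ i j s t : Fin n, i ≠ j → s ≠ t → (i, j) ≠ (s, t) →
      lam i / lam j ≠ lam s / lam t)
    (f : MvPolynomial (Fin n) k)
    (hf : f = ∏ σ : G, rename (⇑(σ : Equiv.Perm (Fin n)))
      (∑ i : Fin n, C (lam i) * X i)) :
    {τ : Equiv.Perm (Fin n) | rename (⇑τ) f = f} = (G : Set (Equiv.Perm (Fin n))) := by
  ext τ
  refine ⟨fun hτ => ?_, fun hτ => hf ▸ rename_prod_rename_of_mem hτ _⟩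
  rcases isEmpty_or_nonempty (Fin n) with _ | ⟨⟨i⟩⟩
  · exact Subsingleton.elim 1 τ ▸ G.one_mem
  have hfL : f = ∏ σ : G, linearForm (lam ∘ (σ : Equiv.Perm (Fin n)).symm) :=
    hf.trans (Finset.prod_congr rfl fun σ _ => rename_linearForm _ lam)
  have hdvd : linearForm (lam ∘ τ.symm) ∣ f := by
    have hL : linearForm lam ∣ f := by
      rw [hf]
      convert Finset.dvd_prod_of_mem _ (Finset.mem_univ (1 : G))
      simp [linearForm]
    have hτf : rename τ f = f := hτ
    simpa only [rename_linearForm, hτf] using map_dvd (rename τ) hL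
  have hprime : Prime (linearForm (lam ∘ τ.symm)) :=
    prime_linearForm (Function.ne_iff.mpr ⟨τ i, by simpa using hlam0 i⟩)
  obtain ⟨σ, -, hσ⟩ := hprime.exists_mem_finset_dvd (hfL ▸ hdvd)
  obtain ⟨a, ha⟩ := exists_eq_smul_of_linearForm_dvd hσ
  have hστ : (σ : Equiv.Perm (Fin n))⁻¹ * τ = 1 :=
    Equiv.Perm.eq_one_of_comp_eq_smul hlam0 hlam (a := a)
      (funext fun j => by simpa using congrFun ha (τ j))
  exact inv_mul_eq_one.mp hστ ▸ σ.2
end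

section
/- Let G be a finite group and k an infinite field (more generally, a field containing sufficiently many elements). Then there exists a finite-dimensional algebra A over k such that: (a) A_F is simple for every field extension F/k (in particular A is simple), and (b) for every field extension F/k, the full automorphism group Aut(A_F) is isomorphic to G. -/
open scoped TensorProduct

/-- A nonassociative algebra (given by the bilinear multiplication `m`) is simple: its
multiplication is nonzero and it has no two-sided ideals other than `0` and itself. -/
def IsSimpleMul {F A : Type*} [Field F] [AddCommGroup A] [Module F A]
    (m : A →ₗ[F] A →ₗ[F] A) : Prop :=
  m ≠ 0 ∧ ∀ I : Submodule F A, (∀ x ∈ I, ∀ y : A, m x y ∈ I ∧ m y x ∈ I) →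
    I = ⊥ ∨ I = ⊤


/-!
Take `A = k^G` with standard basis `(e_s)`, multiplied by `e_s e_s = e_s` and
`e_s e_t = λ_st e_s - λ_ts e_t` for `s ≠ t`, where `λ_st = μ (s⁻¹ t)`; in coordinates this is
`f g + f (λ g) - g (λ f)`. The weight `μ` vanishes only at `1`, is injective, and satisfies no
relation `1 + ∑ c_w μ w = 0` with `|c_w| ≤ 2`; an infinite field has such weights, and they stay
generic in every extension, so it suffices to treat `A` itself over an arbitrary field.

Simplicity: an element of minimal support in a nonzero ideal is proportional to its product with
any `e_t` in its support; comparing coefficients forces the support to be one point, and then the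
products `e_t e_s` give every basis vector.

Automorphisms: an automorphism sends the idempotent `e_s` to an idempotent, that is, a `0/1`-vector.
The relation for `e_s e_t` makes these vectors disjointly supported, hence basis vectors again, so
the automorphism permutes the basis preserving `λ`; by injectivity of `μ` these permutations are
exactly the left translations of `G`.
-/

section MulIso

variable {F A B C : Type*} [Field F] [AddCommGroup A] [Module F A] [AddCommGroup B] [Module F B]
  [AddCommGroup C] [Module F C] {mA : A →ₗ[F] A →ₗ[F] A} {mB : B →ₗ[F] B →ₗ[F] B}
  {mC : C →ₗ[F] C →ₗ[F] C}

def IsMulIso (mA : A →ₗ[F] A →ₗ[F] A) (mB : B →ₗ[F] B →ₗ[F] B) (E : A ≃ₗ[F] B) : Prop :=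
  ∀ x y : A, E (mA x y) = mB (E x) (E y)

namespace IsMulIso

variable {E : A ≃ₗ[F] B}

theorem symm (hE : IsMulIso mA mB E) : IsMulIso mB mA E.symm := fun x y =>
  E.injective <| by rw [hE, E.apply_symm_apply, E.apply_symm_apply, E.apply_symm_apply]

theorem trans (hE : IsMulIso mA mB E) {E' : B ≃ₗ[F] C} (hE' : IsMulIso mB mC E') :
    IsMulIso mA mC (E.trans E') := fun x y => by
  simp only [LinearEquiv.trans_apply]
  rw [hE, hE']

theorem isSimpleMul (hE : IsMulIso mA mB E) (hB : IsSimpleMul mB) : IsSimpleMul mA := by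
  refine ⟨fun h0 => hB.1 (LinearMap.ext₂ fun x y => ?_), fun I hI => ?_⟩
  · simpa [h0] using (hE (E.symm x) (E.symm y)).symm
  · have hIE : ∀ x ∈ I.map (E : A →ₗ[F] B), ∀ y,
        mB x y ∈ I.map (E : A →ₗ[F] B) ∧ mB y x ∈ I.map (E : A →ₗ[F] B) := by
      rintro _ ⟨x, hx, rfl⟩ y
      exact ⟨⟨mA x (E.symm y), (hI x hx _).1, (hE _ _).trans (by simp)⟩,
        ⟨mA (E.symm y) x, (hI x hx _).2, (hE _ _).trans (by simp)⟩⟩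
    refine (hB.2 _ hIE).imp (fun h => ?_) (fun h => ?_) <;>
      simpa using congrArg (Submodule.map (E.symm : B →ₗ[F] A)) h

def autGroupCongr (hE : IsMulIso mA mB E) : autGroup mA ≃* autGroup mB where
  toFun σ := ⟨E.symm.trans (σ.1.trans E), ((hE.symm.trans σ.2).trans hE :)⟩
  invFun τ := ⟨E.trans (τ.1.trans E.symm), ((hE.trans τ.2).trans hE.symm :)⟩
  left_inv σ := by ext; simp
  right_inv τ := by ext; simp
  map_mul' σ τ := by ext; simp

end IsMulIso

end MulIso

section TableMul

open Matrix

variable {F : Type*} [Field F] {ι : Type*}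

theorem single_eq_smul_single_one [DecidableEq ι] (i : ι) (c : F) :
    Pi.single i c = c • Pi.single i (1 : F) := by
  rw [← Pi.single_smul', smul_eq_mul, mul_one]

variable [Fintype ι]

def tableMul (lam : Matrix ι ι F) : (ι → F) →ₗ[F] (ι → F) →ₗ[F] (ι → F) :=
  LinearMap.mul F (ι → F) + (LinearMap.mul F (ι → F)).compl₂ lam.mulVecLin -
    ((LinearMap.mul F (ι → F)).compl₂ lam.mulVecLin).flip

theorem tableMul_apply (lam : Matrix ι ι F) (f g : ι → F) :
    tableMul lam f g = f * g + f * lam *ᵥ g - g * lam *ᵥ f := by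
  simp [tableMul]

theorem tableMul_self (lam : Matrix ι ι F) (f : ι → F) : tableMul lam f f = f * f := by
  simp [tableMul_apply]

theorem isMulIso_funCongrLeft {κ : Type*} [Fintype κ] (e : ι ≃ κ) (lam : Matrix κ κ F) :
    IsMulIso (tableMul lam) (tableMul (lam.submatrix e e)) (LinearEquiv.funCongrLeft F F e) :=
  fun f g => by
    ext i
    simp [LinearMap.funLeft, tableMul_apply, submatrix_mulVec_equiv, Function.comp_assoc]

theorem tableMul_map {K : Type*} [Field K] (φ : F →+* K) (lam : Matrix ι ι F) (f g : ι → F) :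
    tableMul (lam.map φ) (φ ∘ f) (φ ∘ g) = φ ∘ tableMul lam f g := by
  ext i
  simp [tableMul_apply, RingHom.map_mulVec]

variable [DecidableEq ι]

theorem tableMul_single_left_apply (lam : Matrix ι ι F) (t : ι) (f : ι → F) (i : ι) :
    tableMul lam (Pi.single t 1) f i =
      (if i = t then f i + (lam *ᵥ f) i else 0) - f i * lam i t := by
  rcases eq_or_ne i t with rfl | h <;> simp [tableMul_apply, *]

theorem tableMul_single_single (lam : Matrix ι ι F) {s t : ι} (hst : s ≠ t) :
    tableMul lam (Pi.single s 1) (Pi.single t 1) =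
      Pi.single s (lam s t) - Pi.single t (lam t s) := by
  ext i
  rw [tableMul_single_left_apply]
  by_cases his : i = s
  · subst his; simp [hst]
  · rcases eq_or_ne i t with rfl | hit <;> simp [*]

end TableMul

section Simplicity

open Matrix Function

variable {F : Type*} [Field F] {ι : Type*}

theorem smul_eq_smul_of_minimal_support [Finite ι] {I : Submodule F (ι → F)} {z v : ι → F}
    (hmin : ∀ y ∈ I, y ≠ 0 → (support z).ncard ≤ (support y).ncard) (hz : z ∈ I) (hv : v ∈ I)
    (hvz : support v ⊆ support z) {t : ι} (ht : z t ≠ 0) : z t • v = v t • z := by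
  set w := z t • v - v t • z with hw
  have hwz : support w ⊂ support z := by
    refine (Set.ssubset_iff_of_subset (support_subset_iff'.2 fun i hi => ?_)).2
      ⟨t, ht, notMem_support.2 (by simp [hw, mul_comm])⟩
    simp [hw, notMem_support.1 hi, notMem_support.1 (fun h => hi (hvz h))]
  by_contra hne
  exact (hmin w (I.sub_mem (I.smul_mem _ hv) (I.smul_mem _ hz)) (sub_ne_zero.2 hne)).not_gt
    (Set.ncard_lt_ncard hwz)

variable [Fintype ι] [DecidableEq ι] {lam : Matrix ι ι F} {I : Submodule F (ι → F)} {z : ι → F}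

theorem relation_of_minimal_support (hdiag : ∀ i, lam i i = 0)
    (hI : ∀ x ∈ I, ∀ y, tableMul lam y x ∈ I) (hz : z ∈ I)
    (hmin : ∀ y ∈ I, y ≠ 0 → (support z).ncard ≤ (support y).ncard) {s t : ι} (hs : z s ≠ 0)
    (ht : z t ≠ 0) (hst : s ≠ t) : z t * lam s t + z t + (lam *ᵥ z) t = 0 := by
  have hv := tableMul_single_left_apply lam t z
  have hvz : support (tableMul lam (Pi.single t 1) z) ⊆ support z :=
    support_subset_iff'.2 fun i hi => by
      have hit : i ≠ t := by rintro rfl; exact hi ht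
      simp [hv, hit, notMem_support.1 hi]
  have key := congrFun (smul_eq_smul_of_minimal_support hmin hz (hI z hz _) hvz ht) s
  simp only [Pi.smul_apply, smul_eq_mul, hv, hst, if_false, if_true, hdiag] at key
  exact mul_left_cancel₀ hs (by linear_combination -key)

theorem support_subsingleton_of_minimal_support (hdiag : ∀ i, lam i i = 0)
    (hinj : ∀ i i' j, lam i j = lam i' j → i = i')
    (hpair : ∀ i j, i ≠ j → 1 + lam i j + lam j i ≠ 0)
    (hI : ∀ x ∈ I, ∀ y, tableMul lam y x ∈ I) (hz : z ∈ I)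
    (hmin : ∀ y ∈ I, y ≠ 0 → (support z).ncard ≤ (support y).ncard) :
    (support z).Subsingleton := by
  intro t (ht : z t ≠ 0) u (hu : z u ≠ 0)
  by_contra htu
  have key : ∀ {s t : ι}, z s ≠ 0 → z t ≠ 0 → s ≠ t → z t * lam s t + z t + (lam *ᵥ z) t = 0 :=
    relation_of_minimal_support hdiag hI hz hmin
  have hzero : ∀ s, s ≠ t ∧ s ≠ u → z s = 0 := fun s hs => by
    by_contra h
    have hlam : lam u t = lam s t :=
      mul_left_cancel₀ ht (by linear_combination key hu ht (Ne.symm htu) - key h ht hs.1)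
    exact hs.2 (hinj _ _ _ hlam).symm
  have hsum : ∀ i, (lam *ᵥ z) i = lam i t * z t + lam i u * z u := fun i =>
    Fintype.sum_eq_add t u htu fun s hs => by simp [hzero s hs]
  have e1 := key hu ht (Ne.symm htu)
  have e2 := key ht hu htu
  rw [hsum, hdiag] at e1 e2
  have htu' : z t = z u := by linear_combination e1 - e2
  exact hpair t u htu (mul_left_cancel₀ ht (by linear_combination e1 + lam t u * htu'))

theorem exists_single_mem_of_ne_bot (hdiag : ∀ i, lam i i = 0)
    (hinj : ∀ i i' j, lam i j = lam i' j → i = i')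
    (hpair : ∀ i j, i ≠ j → 1 + lam i j + lam j i ≠ 0)
    (hI : ∀ x ∈ I, ∀ y, tableMul lam y x ∈ I) (hbot : I ≠ ⊥) : ∃ t, Pi.single t 1 ∈ I := by
  obtain ⟨z, ⟨hz, hz0⟩, hmin⟩ := (measure fun y : ι → F => (support y).ncard).wf.has_min
    {y | y ∈ I ∧ y ≠ 0} ((Submodule.ne_bot_iff I).1 hbot)
  obtain ⟨t, ht⟩ := Function.ne_iff.1 hz0
  have hsupp := support_subsingleton_of_minimal_support hdiag hinj hpair hI hz
    fun y hy hy0 => not_lt.1 (hmin y ⟨hy, hy0⟩)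
  have hzt : z = z t • Pi.single t 1 := by
    ext i
    by_cases hit : i = t
    · simp [hit]
    · simpa [hit] using fun hi => hit (hsupp hi ht)
  refine ⟨t, ?_⟩
  rw [eq_inv_smul_iff₀ ht |>.2 hzt.symm]
  exact I.smul_mem _ hz

theorem isSimpleMul_tableMul [Nonempty ι] (hdiag : ∀ i, lam i i = 0)
    (hne : ∀ i j, i ≠ j → lam i j ≠ 0) (hinj : ∀ i i' j, lam i j = lam i' j → i = i')
    (hpair : ∀ i j, i ≠ j → 1 + lam i j + lam j i ≠ 0) : IsSimpleMul (tableMul lam) := by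
  refine ⟨fun h => ?_, fun I hI => (eq_or_ne I ⊥).imp_right fun hbot => ?_⟩
  · obtain ⟨i⟩ := ‹Nonempty ι›
    simpa [h] using congrFun (tableMul_self lam (Pi.single i 1)) i
  obtain ⟨t, ht⟩ := exists_single_mem_of_ne_bot hdiag hinj hpair (fun x hx y => (hI x hx y).2) hbot
  have hall : ∀ s, Pi.single s 1 ∈ I := fun s => by
    rcases eq_or_ne s t with rfl | hst
    · exact ht
    have hts := (hI _ ht (Pi.single s 1)).1
    rw [tableMul_single_single lam hst.symm] at hts
    have hs : Pi.single s (lam s t) ∈ I := by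
      simpa [← Pi.single_smul'] using I.sub_mem (I.smul_mem (lam t s) ht) hts
    simpa [← Pi.single_smul', inv_mul_cancel₀ (hne s t hst)] using I.smul_mem (lam s t)⁻¹ hs
  rw [eq_top_iff, ← (Pi.basisFun F ι).span_eq, Submodule.span_le]
  rintro _ ⟨s, rfl⟩
  simpa using hall s

end Simplicity

section Automorphisms

open Matrix Function

variable {F : Type*} [Field F] {ι : Type*}

def preservingPerms (lam : Matrix ι ι F) : Subgroup (Equiv.Perm ι) where
  carrier := {π | lam.submatrix π π = lam}
  one_mem' := submatrix_id_id lam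
  mul_mem' {π τ} (hπ : _ = _) (hτ : _ = _) := by
    change lam.submatrix (π ∘ τ) (π ∘ τ) = lam
    rw [← submatrix_submatrix, hπ, hτ]
  inv_mem' {π} (hπ : _ = _) := by
    change lam.submatrix ⇑π⁻¹ ⇑π⁻¹ = lam
    nth_rw 1 [← hπ]
    simp [submatrix_submatrix]

variable [Fintype ι] [DecidableEq ι]

def preservingPerms.toAutGroup (lam : Matrix ι ι F) :
    preservingPerms lam →* autGroup (tableMul lam) where
  toFun π := ⟨LinearEquiv.funCongrLeft F F π.1⁻¹, by
    have h := isMulIso_funCongrLeft π.1⁻¹ lam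
    rwa [show lam.submatrix ⇑π.1⁻¹ ⇑π.1⁻¹ = lam from inv_mem π.2] at h⟩
  map_one' := rfl
  map_mul' _ _ := rfl

theorem preservingPerms.toAutGroup_apply_single (lam : Matrix ι ι F) (π : preservingPerms lam)
    (t : ι) : (toAutGroup lam π).1 (Pi.single t 1) = Pi.single (π.1 t) 1 := by
  change LinearEquiv.funCongrLeft F F π.1⁻¹ (Pi.single t 1) = _
  ext i
  simp [LinearMap.funLeft, Pi.single_apply, Equiv.eq_symm_apply, eq_comm]

theorem mulVec_boole (lam : Matrix ι ι F) (T : Finset ι) (i : ι) :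
    (lam *ᵥ fun j => if j ∈ T then 1 else 0) i = ∑ j ∈ T, lam i j := by
  simp [mulVec, dotProduct, Finset.sum_ite_mem]

theorem exists_finset_eq_boole_of_mul_self {y : ι → F} (hy : y * y = y) :
    ∃ T : Finset ι, y = fun i => if i ∈ T then 1 else 0 := by
  classical
  refine ⟨Finset.univ.filter (y · ≠ 0), funext fun i => ?_⟩
  have hi : y i * (y i - 1) = 0 := by
    have h := congrFun hy i
    rw [Pi.mul_apply] at h
    linear_combination h
  rcases mul_eq_zero.1 hi with h | h
  · simp [h]
  · simp [sub_eq_zero.1 h]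

theorem exists_perm_forall_eq_singleton {T : ι → Finset ι} (hne : ∀ s, (T s).Nonempty)
    (hdisj : Pairwise fun s t => Disjoint (T s) (T t)) :
    ∃ π : Equiv.Perm ι, ∀ s, T s = {π s} := by
  choose π₀ hπ₀ using hne
  have hinj : Injective π₀ := fun s t h => by
    by_contra hst
    exact Finset.disjoint_left.1 (hdisj hst) (hπ₀ s) (h ▸ hπ₀ t)
  refine ⟨Equiv.ofBijective π₀ (Finite.injective_iff_bijective.1 hinj), fun s => ?_⟩
  refine Finset.eq_singleton_iff_unique_mem.2 ⟨hπ₀ s, fun j hj => ?_⟩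
  obtain ⟨s', rfl⟩ := (Finite.injective_iff_surjective.1 hinj) j
  rcases eq_or_ne s' s with rfl | hs
  · rfl
  · exact absurd hj (Finset.disjoint_left.1 (hdisj hs) (hπ₀ s'))

theorem IsMulAut.mul_self_apply_single {lam : Matrix ι ι F} {σ : (ι → F) ≃ₗ[F] (ι → F)}
    (hσ : IsMulAut (tableMul lam) σ) (s : ι) :
    σ (Pi.single s 1) * σ (Pi.single s 1) = σ (Pi.single s 1) := by
  rw [← tableMul_self lam, ← hσ, tableMul_self, ← Pi.single_mul, mul_one]

theorem IsMulAut.tableMul_apply_single {lam : Matrix ι ι F} {σ : (ι → F) ≃ₗ[F] (ι → F)}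
    (hσ : IsMulAut (tableMul lam) σ) {s t : ι} (hst : s ≠ t) :
    tableMul lam (σ (Pi.single s 1)) (σ (Pi.single t 1)) =
      lam s t • σ (Pi.single s 1) - lam t s • σ (Pi.single t 1) := by
  rw [← hσ, tableMul_single_single lam hst, single_eq_smul_single_one s,
    single_eq_smul_single_one t, map_sub, map_smul, map_smul]

theorem exists_perm_of_isMulAut (lam : Matrix ι ι F) (hdiag : ∀ i, lam i i = 0)
    (hsums : ∀ (i : ι) (A B : Finset ι) (s t : ι), s ≠ t →
      1 + ∑ j ∈ B, lam i j - ∑ j ∈ A, lam i j ≠ lam s t - lam t s)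
    {σ : (ι → F) ≃ₗ[F] (ι → F)} (hσ : IsMulAut (tableMul lam) σ) :
    ∃ π ∈ preservingPerms lam, ∀ t, σ (Pi.single t 1) = Pi.single (π t) 1 := by
  choose T hT using fun s => exists_finset_eq_boole_of_mul_self (hσ.mul_self_apply_single s)
  have hrel := fun s t (hst : s ≠ t) i => congrFun (hσ.tableMul_apply_single hst) i
  simp only [tableMul_apply, hT, mulVec_boole, Pi.add_apply, Pi.sub_apply, Pi.mul_apply,
    Pi.smul_apply, smul_eq_mul] at hrel
  have hdisj : Pairwise fun s t => Disjoint (T s) (T t) := fun s t hst =>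
    Finset.disjoint_left.2 fun i his hit => hsums i (T s) (T t) s t hst <| by
      simpa [his, hit] using hrel s t hst i
  have hval : ∀ s t, s ≠ t → ∀ i ∈ T s, lam s t = ∑ j ∈ T t, lam i j := fun s t hst i his => by
    simpa [his, Finset.disjoint_left.1 (hdisj hst) his] using (hrel s t hst i).symm
  have hne : ∀ s, (T s).Nonempty := fun s => by
    by_contra h
    have : σ (Pi.single s 1) = σ 0 := by
      ext i
      simp [hT, Finset.not_nonempty_iff_eq_empty.1 h]
    simpa using congrFun (σ.injective this) s
  obtain ⟨π, hπ⟩ := exists_perm_forall_eq_singleton hne hdisj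
  refine ⟨π, ?_, fun t => ?_⟩
  · ext s t
    rcases eq_or_ne s t with rfl | hst
    · simp [hdiag]
    · simp [hval s t hst (π s) (by simp [hπ]), hπ]
  · ext i
    simp [hT, hπ, Pi.single_apply]

noncomputable def autGroupEquivPreservingPerms (lam : Matrix ι ι F) (hdiag : ∀ i, lam i i = 0)
    (hsums : ∀ (i : ι) (A B : Finset ι) (s t : ι), s ≠ t →
      1 + ∑ j ∈ B, lam i j - ∑ j ∈ A, lam i j ≠ lam s t - lam t s) :
    autGroup (tableMul lam) ≃* preservingPerms lam :=
  (MulEquiv.ofBijective (preservingPerms.toAutGroup lam) ⟨fun π τ h => by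
    ext t
    have := congrArg (fun σ : autGroup (tableMul lam) => σ.1 (Pi.single t 1)) h
    simpa [preservingPerms.toAutGroup_apply_single, Pi.single_apply] using
      congrFun this (π.1 t), fun σ => by
    obtain ⟨π, hπ, hσ⟩ := exists_perm_of_isMulAut lam hdiag hsums σ.2
    exact ⟨⟨π, hπ⟩, Subtype.ext <| (Pi.basisFun F ι).ext' fun t => by
      simp [preservingPerms.toAutGroup_apply_single, hσ]⟩⟩).symm

end Automorphisms

section GroupTable

variable {F : Type*} [Field F] {G : Type*} [Group G]

def groupTable (μ : G → F) : Matrix G G F := Matrix.of fun s t => μ (s⁻¹ * t)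

noncomputable def mulEquivPreservingPermsGroupTable {μ : G → F} (hμ : Function.Injective μ) :
    G ≃* preservingPerms (groupTable μ) :=
  MulEquiv.ofBijective ((MulAction.toPermHom G G).codRestrict _ fun g => by
      ext s t
      simp [groupTable, mul_assoc])
    ⟨fun g g' h => by
        have h1 : g * 1 = g' * 1 := congrArg (fun π : preservingPerms (groupTable μ) => π.1 1) h
        simpa using h1,
      fun π => ⟨π.1 1, Subtype.ext <| Equiv.ext fun t => by
        have h : (π.1 1)⁻¹ * π.1 t = 1⁻¹ * t := hμ (congrFun (congrFun π.2 1) t)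
        rw [inv_one, one_mul, inv_mul_eq_iff_eq_mul] at h
        exact h.symm⟩⟩

variable [Fintype G]

-- The bound `2` is the largest coefficient occurring in `one_add_sum_sub_sum_ne`.
structure IsGenericWeight (μ : G → F) : Prop where
  map_one : μ 1 = 0
  injective : Function.Injective μ
  one_add_sum_ne_zero : ∀ c : G → ℤ, (∀ w, |c w| ≤ 2) → 1 + ∑ w, (c w : F) * μ w ≠ 0

namespace IsGenericWeight

variable {μ : G → F} (hμ : IsGenericWeight μ)
include hμ

theorem map {K : Type*} [Field K] (φ : F →+* K) : IsGenericWeight (φ ∘ μ) where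
  map_one := by simp [hμ.map_one]
  injective := φ.injective.comp hμ.injective
  one_add_sum_ne_zero c hc h := hμ.one_add_sum_ne_zero c hc <| φ.injective <| by simpa using h

theorem groupTable_self (i : G) : groupTable μ i i = 0 := by
  simp [groupTable, hμ.map_one]

theorem groupTable_ne_zero {i j : G} (hij : i ≠ j) : groupTable μ i j ≠ 0 := by
  rw [groupTable, Matrix.of_apply, ← hμ.map_one, hμ.injective.ne_iff, Ne, inv_mul_eq_one]
  exact hij

theorem groupTable_left_injective {i i' j : G} (h : groupTable μ i j = groupTable μ i' j) :
    i = i' :=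
  inv_injective (mul_right_cancel (hμ.injective h))

theorem one_add_groupTable_add_ne_zero (i j : G) :
    1 + groupTable μ i j + groupTable μ j i ≠ 0 := by
  classical
  have h := hμ.one_add_sum_ne_zero (Pi.single (i⁻¹ * j) 1 + Pi.single (j⁻¹ * i) 1)
    fun w => by simp only [Pi.add_apply, Pi.single_apply]; split_ifs <;> norm_num
  simpa [groupTable, add_mul, Finset.sum_add_distrib, Pi.single_apply, add_assoc] using h

theorem one_add_sum_sub_sum_ne (i : G) (A B : Finset G) (s t : G) :
    1 + ∑ j ∈ B, groupTable μ i j - ∑ j ∈ A, groupTable μ i j ≠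
      groupTable μ s t - groupTable μ t s := by
  classical
  have h := hμ.one_add_sum_ne_zero (fun w => (if i * w ∈ B then 1 else 0) -
      (if i * w ∈ A then 1 else 0) - (if w = s⁻¹ * t then 1 else 0) +
      (if w = t⁻¹ * s then 1 else 0))
    fun w => by split_ifs <;> norm_num
  have hshift : ∀ C : Finset G,
      ∑ w, (if i * w ∈ C then 1 else 0) * μ w = ∑ j ∈ C, groupTable μ i j := fun C => by
    calc ∑ w, (if i * w ∈ C then 1 else 0) * μ w
        = ∑ j, if j ∈ C then μ (i⁻¹ * j) else 0 :=
          Fintype.sum_equiv (Equiv.mulLeft i) _ _ fun w => by simp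
      _ = ∑ j ∈ C, groupTable μ i j := by rw [Finset.sum_ite_mem, Finset.univ_inter]; rfl
  intro heq
  apply h
  push_cast
  simp only [add_mul, sub_mul, Finset.sum_add_distrib, Finset.sum_sub_distrib, hshift]
  simp [groupTable] at heq ⊢
  linear_combination heq

theorem isSimpleMul_tableMul : IsSimpleMul (tableMul (groupTable μ)) := by
  classical
  exact _root_.isSimpleMul_tableMul hμ.groupTable_self (fun _ _ => hμ.groupTable_ne_zero)
    (fun _ _ _ => hμ.groupTable_left_injective)
    (fun i j _ => hμ.one_add_groupTable_add_ne_zero i j)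

noncomputable def autGroupEquiv [DecidableEq G] : autGroup (tableMul (groupTable μ)) ≃* G :=
  (autGroupEquivPreservingPerms _ hμ.groupTable_self
    fun i A B s t _ => hμ.one_add_sum_sub_sum_ne i A B s t).trans
    (mulEquivPreservingPermsGroupTable hμ.injective).symm

end IsGenericWeight

end GroupTable

section Existence

open Polynomial

theorem exists_isGenericWeight (k : Type*) [Field k] [Infinite k] (G : Type*) [Group G]
    [Fintype G] : ∃ μ : G → k, IsGenericWeight μ := by
  classical
  set e : G → ℕ := fun w => Fintype.equivFin G w + 1 with he
  have he_inj : Function.Injective e := fun a b h =>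
    (Fintype.equivFin G).injective (Fin.ext (Nat.succ_injective h))
  set q : G → k[X] := fun w => X ^ e w - X ^ e 1 with hq
  set C := Fintype.piFinset fun _ : G => Finset.Icc (-2 : ℤ) 2
  set P : k[X] := (∏ c ∈ C, (1 + ∑ w, (c w : k[X]) * q w)) *
    ∏ ab ∈ (Finset.univ : Finset G).offDiag, (X ^ e ab.1 - X ^ e ab.2) with hP
  -- every exponent `e w` is positive, so each relation polynomial has constant coefficient `1`
  have hP0 : P ≠ 0 := by
    refine mul_ne_zero (Finset.prod_ne_zero_iff.2 fun c _ h => ?_)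
      (Finset.prod_ne_zero_iff.2 fun ab hab h => ?_)
    · simpa [hq, coeff_X_pow, he] using congrArg (coeff · 0) h
    · obtain ⟨-, -, hab⟩ := Finset.mem_offDiag.1 hab
      exact hab (he_inj (by simpa using congrArg natDegree (sub_eq_zero.1 h)))
  obtain ⟨r, hr⟩ : ∃ r, P.eval r ≠ 0 := by
    by_contra! h
    exact hP0 (Polynomial.funext fun r => by simpa using h r)
  simp only [hP, eval_mul, eval_prod, mul_ne_zero_iff, Finset.prod_ne_zero_iff] at hr
  refine ⟨fun w => (q w).eval r, ⟨by simp [hq], fun a b h => ?_, fun c hc => ?_⟩⟩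
  · by_contra hab
    exact hr.2 (a, b) (by simpa using hab) (by simpa [hq, sub_eq_zero] using h)
  · simpa [eval_finsetSum] using hr.1 c (by simpa [C, ← abs_le] using hc)

end Existence

theorem isMulIso_piScalarRight {k F ι : Type*} [Field k] [Field F] [Algebra k F] [Fintype ι]
    [DecidableEq ι] (lam : Matrix ι ι k)
    (mF : F ⊗[k] (ι → k) →ₗ[F] F ⊗[k] (ι → k) →ₗ[F] F ⊗[k] (ι → k))
    (hmF : ∀ (a b : F) (x y : ι → k), mF (a ⊗ₜ x) (b ⊗ₜ y) = (a * b) ⊗ₜ tableMul lam x y) :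
    IsMulIso mF (tableMul (lam.map (algebraMap k F))) (TensorProduct.piScalarRight k F F ι) := by
  have hE : ∀ (a : F) (x : ι → k),
      TensorProduct.piScalarRight k F F ι (a ⊗ₜ x) = a • (algebraMap k F ∘ x) := fun a x => by
    ext
    simp [TensorProduct.piScalarRight_apply, Algebra.smul_def, mul_comm]
  intro u v
  induction u using TensorProduct.induction_on with
  | zero => simp
  | add u u' hu hu' => simp only [map_add, LinearMap.add_apply, hu, hu']
  | tmul a x =>
    induction v using TensorProduct.induction_on with
    | zero => simp
    | add v v' hv hv' => simp only [map_add, hv, hv']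
    | tmul b y =>
      rw [hmF, hE, hE, hE, map_smul, LinearMap.map_smul₂, tableMul_map, smul_smul,
        mul_comm b]

/-- **Corollary 2 of Theorem 1** (Gordeev–Popov): let `G` be a finite (abstract) group
and `k` an infinite field (more generally, a field containing sufficiently many
elements).  Then there is a finite-dimensional (nonassociative) algebra `A` over `k`
(realized here as `k^m` with a bilinear multiplication) such that `A_F = A ⊗_k F` is
simple for every field extension `F/k` (in particular `A` itself is simple) and the full
automorphism group `Aut(A_F)` is isomorphic to `G` for every field extension `F/k`. -/
theorem stmt17 {k : Type*} [Field k] [Infinite k]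
    (G : Type*) [Group G] [Finite G] :
    ∃ (m : ℕ) (mul : (Fin m → k) →ₗ[k] (Fin m → k) →ₗ[k] (Fin m → k)),
      IsSimpleMul mul ∧
      ∀ (F : Type*) [Field F] [Algebra k F]
        (mF : F ⊗[k] (Fin m → k) →ₗ[F] F ⊗[k] (Fin m → k) →ₗ[F] F ⊗[k] (Fin m → k)),
        (∀ (a b : F) (x y : Fin m → k),
            mF (a ⊗ₜ[k] x) (b ⊗ₜ[k] y) = (a * b) ⊗ₜ[k] mul x y) →
        IsSimpleMul mF ∧ Nonempty (autGroup mF ≃* G) := by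
  classical
  have := Fintype.ofFinite G
  obtain ⟨μ, hμ⟩ := exists_isGenericWeight k G
  let e : Fin (Nat.card G) ≃ G := (Finite.equivFin G).symm
  refine ⟨Nat.card G, tableMul ((groupTable μ).submatrix e e),
    (isMulIso_funCongrLeft e _).symm.isSimpleMul hμ.isSimpleMul_tableMul, fun F _ _ mF hmF => ?_⟩
  have hE := (isMulIso_piScalarRight _ mF hmF).trans
    (isMulIso_funCongrLeft e (groupTable (algebraMap k F ∘ μ))).symm
  exact ⟨hE.isSimpleMul (hμ.map _).isSimpleMul_tableMul,
    ⟨hE.autGroupCongr.trans (hμ.map _).autGroupEquiv⟩⟩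
end
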